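/- arXiv:2011.14719 — 10 statements merged into one kernel-verified Lean document; each statement's English description precedes it below -/
import Mathlib

section
/- If G is a quasi-threshold graph, then its proper orientation number equals its clique number minus one, i.e. χ⃗(G) = ω(G) − 1. -/
/-!
Build the orientation along the construction of the graph: on a cone, orient every edge at the
apex away from it. The apex then has indegree `0` while every other indegree goes up by one, so
properness survives, and the indegree of a vertex is the number of apices above it; together with
the vertex these apices form a clique, so every indegree is below `ω(G)`. Conversely, indegrees
of a proper orientation are pairwise distinct on a clique, so a proper `k`-orientation forces
`ω(G) ≤ k + 1`.
-/

open SimpleGraph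

structure Orient {V : Type*} (G : SimpleGraph V) where
  dir : V → V → Bool
  adj_of_dir : ∀ u v, dir u v = true → G.Adj u v
  dir_iff : ∀ u v, G.Adj u v → (dir u v = true ↔ ¬ dir v u = true)

def Orient.inDeg {V : Type*} [Fintype V] {G : SimpleGraph V} (D : Orient G) (v : V) : ℕ :=
  (Finset.univ.filter (fun u => D.dir u v = true)).card

def Orient.Proper {V : Type*} [Fintype V] {G : SimpleGraph V} (D : Orient G) : Prop :=
  ∀ u v, G.Adj u v → D.inDeg u ≠ D.inDeg v

noncomputable def properOrientNum {V : Type*} [Fintype V] (G : SimpleGraph V) : ℕ :=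
  sInf {k | ∃ D : Orient G, D.Proper ∧ ∀ v, D.inDeg v ≤ k}

/-- The join of a single new vertex with a graph `G`: the new vertex (`none`)
is adjacent to all vertices of `G`. -/
def coneJoin {V : Type} (G : SimpleGraph V) : SimpleGraph (Option V) where
  Adj x y :=
    match x, y with
    | none, some _ => True
    | some _, none => True
    | some a, some b => G.Adj a b
    | none, none => False
  symm := by
    constructor
    rintro (_ | a) (_ | b) h <;> simp_all
    exact h.symm
  loopless := by
    constructor
    rintro (_ | a) h <;> simp_all

/-- Quasi-threshold graphs: `K1` is quasi-threshold, and the class is closed under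
disjoint unions, joins with a single new vertex, and isomorphism. -/
inductive IsQuasiThreshold : {V : Type} → SimpleGraph V → Prop where
  | single : IsQuasiThreshold (⊥ : SimpleGraph (Fin 1))
  | union {V W : Type} {G : SimpleGraph V} {H : SimpleGraph W} :
      IsQuasiThreshold G → IsQuasiThreshold H → IsQuasiThreshold (G ⊕g H)
  | cone {V : Type} {G : SimpleGraph V} :
      IsQuasiThreshold G → IsQuasiThreshold (coneJoin G)
  | iso {V W : Type} {G : SimpleGraph V} {H : SimpleGraph W} :
      IsQuasiThreshold G → G ≃g H → IsQuasiThreshold H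


namespace SimpleGraph

variable {α β : Type*} {G : SimpleGraph α} {H : SimpleGraph β}

theorem IsNClique.map_embedding {n : ℕ} {s : Finset α} (hs : G.IsNClique n s) (f : G ↪g H) :
    H.IsNClique n (s.map f.toEmbedding) := by
  refine ⟨?_, by rw [Finset.card_map, hs.card_eq]⟩
  rw [Finset.coe_map]
  rintro _ ⟨a, ha, rfl⟩ _ ⟨b, hb, rfl⟩ hab
  exact f.map_adj_iff.mpr (hs.isClique ha hb (ne_of_apply_ne _ hab))

theorem cliqueNum_le_of_embedding [Finite β] (f : G ↪g H) : G.cliqueNum ≤ H.cliqueNum := by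
  obtain ⟨s, hs⟩ := G.exists_isNClique_cliqueNum
  have hfs := hs.map_embedding f
  exact hfs.card_eq ▸ hfs.isClique.card_le_cliqueNum

theorem cliqueNum_pos [Finite α] [Nonempty α] (G : SimpleGraph α) : 0 < G.cliqueNum :=
  IsClique.card_le_cliqueNum (t := {Classical.arbitrary α}) (tc := by simp)

end SimpleGraph

def coneJoin.someEmbedding {V : Type} (G : SimpleGraph V) : G ↪g coneJoin G where
  toEmbedding := ⟨some, Option.some_injective V⟩
  map_rel_iff' := Iff.rfl

theorem cliqueNum_succ_le_cliqueNum_coneJoin {V : Type} [Finite V] (G : SimpleGraph V) :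
    G.cliqueNum + 1 ≤ (coneJoin G).cliqueNum := by
  classical
  obtain ⟨s, hs⟩ := G.exists_isNClique_cliqueNum
  have hcone := (hs.map_embedding (coneJoin.someEmbedding G)).insert (a := none)
    (by simp [coneJoin.someEmbedding, coneJoin])
  exact hcone.card_eq ▸ hcone.isClique.card_le_cliqueNum

namespace Orient

variable {V W : Type} {G : SimpleGraph V} {H : SimpleGraph W}

theorem inDeg_eq_sum [Fintype V] (D : Orient G) (v : V) :
    D.inDeg v = ∑ u, if D.dir u v then 1 else 0 :=
  Finset.card_filter _ _

theorem Proper.cliqueNum_le_succ [Fintype V] {D : Orient G} (hD : D.Proper) {k : ℕ}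
    (hk : ∀ v, D.inDeg v ≤ k) : G.cliqueNum ≤ k + 1 := by
  obtain ⟨s, hs⟩ := G.exists_isNClique_cliqueNum
  have hinj : Set.InjOn D.inDeg s := fun a ha b hb hab =>
    by_contra fun hne => hD a b (hs.isClique ha hb hne) hab
  calc G.cliqueNum = s.card := hs.card_eq.symm
    _ ≤ (Finset.range (k + 1)).card :=
      Finset.card_le_card_of_injOn _ (fun v _ => by simpa [Nat.lt_succ_iff] using hk v) hinj
    _ = k + 1 := Finset.card_range _

def bot (V : Type) : Orient (⊥ : SimpleGraph V) where
  dir _ _ := false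
  adj_of_dir _ _ h := Bool.false_ne_true h |>.elim
  dir_iff _ _ h := h.elim

@[simp]
theorem bot_inDeg [Fintype V] (v : V) : (bot V).inDeg v = 0 := by
  simp [inDeg_eq_sum, bot]

def sum (DG : Orient G) (DH : Orient H) : Orient (G ⊕g H) where
  dir
    | .inl a, .inl b => DG.dir a b
    | .inr a, .inr b => DH.dir a b
    | _, _ => false
  adj_of_dir := by
    rintro (a | a) (b | b) h
    exacts [DG.adj_of_dir a b h, (nomatch h), (nomatch h), DH.adj_of_dir a b h]
  dir_iff := by
    rintro (a | a) (b | b) h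
    exacts [DG.dir_iff a b h, (nomatch h), (nomatch h), DH.dir_iff a b h]

section Sum

variable [Fintype V] [Fintype W] [Fintype (V ⊕ W)] (DG : Orient G) (DH : Orient H)

@[simp]
theorem sum_inDeg_inl (a : V) : (DG.sum DH).inDeg (.inl a) = DG.inDeg a := by
  obtain rfl := Subsingleton.elim ‹Fintype (V ⊕ W)› (instFintypeSum V W)
  rw [inDeg_eq_sum, inDeg_eq_sum, Fintype.sum_sum_type]
  simp only [sum, Finset.sum_const_zero, add_zero, Bool.false_eq_true, if_false]
  rfl

@[simp]
theorem sum_inDeg_inr (b : W) : (DG.sum DH).inDeg (.inr b) = DH.inDeg b := by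
  obtain rfl := Subsingleton.elim ‹Fintype (V ⊕ W)› (instFintypeSum V W)
  rw [inDeg_eq_sum, inDeg_eq_sum, Fintype.sum_sum_type]
  simp only [sum, Finset.sum_const_zero, zero_add, Bool.false_eq_true, if_false]
  rfl

theorem Proper.sum {DG : Orient G} {DH : Orient H} (hG : DG.Proper) (hH : DH.Proper) :
    (DG.sum DH).Proper := by
  rintro (a | a) (b | b) hab
  · simpa using hG a b hab
  · exact nomatch hab
  · exact nomatch hab
  · simpa using hH a b hab

end Sum

def cone (D : Orient G) : Orient (coneJoin G) where
  dir
    | none, some _ => true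
    | some a, some b => D.dir a b
    | _, _ => false
  adj_of_dir := by
    rintro (_ | a) (_ | b) h
    exacts [(nomatch h), trivial, (nomatch h), D.adj_of_dir a b h]
  dir_iff := by
    rintro (_ | a) (_ | b) h
    exacts [h.elim, by simp, by simp, D.dir_iff a b h]

section Cone

variable [Fintype V] [Fintype (Option V)] (D : Orient G)

@[simp]
theorem cone_inDeg_none : D.cone.inDeg none = 0 := by
  obtain rfl := Subsingleton.elim ‹Fintype (Option V)› instFintypeOption
  rw [inDeg_eq_sum, Fintype.sum_option]
  simp [cone]

@[simp]
theorem cone_inDeg_some (v : V) : D.cone.inDeg (some v) = D.inDeg v + 1 := by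
  obtain rfl := Subsingleton.elim ‹Fintype (Option V)› instFintypeOption
  rw [inDeg_eq_sum, inDeg_eq_sum, Fintype.sum_option]
  simp only [cone, if_true, add_comm]
  rfl

theorem Proper.cone {D : Orient G} (hD : D.Proper) : D.cone.Proper := by
  rintro (_ | a) (_ | b) hab
  · exact hab.elim
  · simp
  · simp
  · simpa using hD a b hab

end Cone

def map (e : G ≃g H) (D : Orient G) : Orient H where
  dir x y := D.dir (e.symm x) (e.symm y)
  adj_of_dir _ _ h := e.symm.map_adj_iff.mp (D.adj_of_dir _ _ h)
  dir_iff _ _ h := D.dir_iff _ _ (e.symm.map_adj_iff.mpr h)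

@[simp]
theorem map_inDeg [Fintype V] [Fintype W] (e : G ≃g H) (D : Orient G) (w : W) :
    (D.map e).inDeg w = D.inDeg (e.symm w) := by
  simp only [inDeg_eq_sum, map]
  exact e.symm.toEquiv.sum_comp (fun u => if D.dir u (e.symm w) then 1 else 0)

theorem Proper.map [Fintype V] [Fintype W] {D : Orient G} (hD : D.Proper) (e : G ≃g H) :
    (D.map e).Proper := fun u v huv => by
  simpa using hD _ _ (e.symm.map_adj_iff.mpr huv)

end Orient

theorem properOrientNum_eq_cliqueNum_sub_one {V : Type} [Fintype V] {G : SimpleGraph V}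
    {D : Orient G} (hD : D.Proper) (hlt : ∀ v, D.inDeg v < G.cliqueNum) :
    properOrientNum G = G.cliqueNum - 1 := by
  have hmem : G.cliqueNum - 1 ∈ {k | ∃ D : Orient G, D.Proper ∧ ∀ v, D.inDeg v ≤ k} :=
    ⟨D, hD, fun v => Nat.le_sub_one_of_lt (hlt v)⟩
  refine le_antisymm (Nat.sInf_le hmem) (le_csInf ⟨_, hmem⟩ ?_)
  rintro k ⟨D', hD', hk⟩
  have := hD'.cliqueNum_le_succ hk
  omega

theorem IsQuasiThreshold.exists_proper_inDeg_lt_cliqueNum {V : Type} {G : SimpleGraph V}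
    (h : IsQuasiThreshold G) [Fintype V] :
    ∃ D : Orient G, D.Proper ∧ ∀ v, D.inDeg v < G.cliqueNum := by
  revert ‹Fintype V›
  induction h with
  | single =>
    intro _
    refine ⟨.bot _, fun _ _ h => h.elim, fun v => ?_⟩
    simpa using cliqueNum_pos (⊥ : SimpleGraph (Fin 1))
  | @union V W G H _ _ ihG ihH =>
    intro _
    have := Fintype.sumLeft (α := V) (β := W)
    have := Fintype.sumRight (α := V) (β := W)
    obtain ⟨DG, hDG, hltG⟩ := ihG
    obtain ⟨DH, hDH, hltH⟩ := ihH
    refine ⟨DG.sum DH, hDG.sum hDH, ?_⟩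
    rintro (a | b)
    · simpa using (hltG a).trans_le (cliqueNum_le_of_embedding Embedding.sumInl)
    · simpa using (hltH b).trans_le (cliqueNum_le_of_embedding Embedding.sumInr)
  | @cone V G _ ih =>
    intro _
    have : Fintype V := Fintype.ofInjective some (Option.some_injective V)
    obtain ⟨D, hD, hlt⟩ := ih
    have hcl := cliqueNum_succ_le_cliqueNum_coneJoin G
    refine ⟨D.cone, hD.cone, ?_⟩
    rintro (_ | v)
    · simpa using (Nat.succ_pos _).trans_le hcl
    · simpa using (Nat.succ_lt_succ (hlt v)).trans_le hcl
  | @iso V W G H _ e ih =>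
    intro _
    have : Fintype V := Fintype.ofEquiv W e.toEquiv.symm
    obtain ⟨D, hD, hlt⟩ := ih
    refine ⟨D.map e, hD.map e, fun w => ?_⟩
    simpa using (hlt _).trans_le (cliqueNum_le_of_embedding e.toEmbedding)

/-- If `G` is a quasi-threshold graph, then `χ⃗(G) = ω(G) - 1`. -/
theorem properOrientNum_quasiThreshold {V : Type} [Fintype V] (G : SimpleGraph V)
    (h : IsQuasiThreshold G) : properOrientNum G = G.cliqueNum - 1 :=
  have ⟨_, hD, hlt⟩ := h.exists_proper_inDeg_lt_cliqueNum
  properOrientNum_eq_cliqueNum_sub_one hD hlt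
end

section
/- If G is a split graph, then χ⃗(G) ≤ 2ω(G) − 2, where ω(G) is the clique number of G. -/
open SimpleGraph

/-- A split graph: the vertex set can be partitioned into a clique and an independent set. -/
def IsSplit {V : Type*} (G : SimpleGraph V) : Prop :=
  ∃ K : Set V, G.IsClique K ∧ ∀ u ∈ Kᶜ, ∀ v ∈ Kᶜ, ¬ G.Adj u v


open Finset

-- counting lemma: i-th smallest element bound
lemma ith_smallest_le {W : Finset ℕ} {N : ℕ} (hN : W.card = N) (i : Fin N) (x : ℕ)
    (h : (i : ℕ) + 1 ≤ #(W.filter (· ≤ x))) : W.orderEmbOfFin hN i ≤ x := by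
  by_contra hx
  push_neg at hx
  classical
  set f := W.orderEmbOfFin hN with hf
  have hsub : W.filter (· ≤ x) ⊆ (Finset.range (i : ℕ)).image
      (fun j => if hj : j < N then f ⟨j, hj⟩ else 0) := by
    intro y hy
    rw [mem_filter] at hy
    obtain ⟨hyW, hyx⟩ := hy
    have : y ∈ Set.range f := by rw [Finset.range_orderEmbOfFin]; exact hyW
    obtain ⟨j, hj⟩ := this
    have hji : j < i := by
      have : f j < f i := lt_of_le_of_lt (hj ▸ hyx) hx
      exact f.lt_iff_lt.mp this
    refine mem_image.mpr ⟨(j : ℕ), mem_range.mpr hji, ?_⟩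
    rw [dif_pos j.isLt]
    simpa using hj
  have h2 : #(W.filter (· ≤ x)) ≤ (i : ℕ) :=
    (card_le_card hsub).trans (card_image_le.trans (by rw [card_range]))
  omega

lemma nat_block_eq {a b c d D : ℕ} (hb : b < D) (hd : d < D) (h : a * D + b = c * D + d) :
    a = c ∧ b = d := by
  rcases lt_trichotomy a c with hac | hac | hac
  · exfalso
    have : a * D + b < c * D + d := by
      calc a * D + b < a * D + D := by omega
        _ = (a+1) * D := by ring
        _ ≤ c * D := Nat.mul_le_mul_right D hac
        _ ≤ c * D + d := Nat.le_add_right _ _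
    omega
  · subst hac; omega
  · exfalso
    have : c * D + d < a * D + b := by
      calc c * D + d < c * D + D := by omega
        _ = (c+1) * D := by ring
        _ ≤ a * D := Nat.mul_le_mul_right D hac
        _ ≤ a * D + b := Nat.le_add_right _ _
    omega
noncomputable section POSplitC
open SimpleGraph Finset
variable {V : Type*} [Fintype V] [DecidableEq V] (G : SimpleGraph V) [DecidableRel G.Adj]
  (A : Finset V) (u0 : V)

namespace POSplit
open Finset

/-- number of independent-side neighbours -/
def Inb (v : V) : Finset V := Finset.univ.filter fun s => s ∉ A ∧ G.Adj v s

def mI (v : V) : ℕ := #(Inb G A v)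

def enc (v : V) : ℕ := (Fintype.equivFin V v : ℕ)

def mkey (v : V) : ℕ := mI G A v * (Fintype.card V + 1) + enc v

def cls (v : V) : ℕ := if v = u0 then 0 else if #A ≤ mI G A v then 1 else 2

def key (v : V) : ℕ := cls G A u0 v * (Fintype.card V + 1) ^ 2 + mkey G A v

def tau (v : V) : ℕ := #((A.erase v).filter fun u => key G A u0 u < key G A u0 v)

def Hs : Finset V := (A.erase u0).filter fun v => #A ≤ mI G A v

def Ls : Finset V := (A.erase u0).filter fun v => ¬ #A ≤ mI G A v

def Tv : ℕ := min #A (#(Hs G A u0) + 2)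

def Bs : Finset ℕ := (Ls G A u0).image fun v => tau G A u0 v + mI G A v

def Ws : Finset ℕ := Finset.Icc (Tv G A u0) (2 * #A - 2) \ Bs G A u0

noncomputable def wseq (i : ℕ) : ℕ :=
  if hi : i < #(Ws G A u0) then (Ws G A u0).orderEmbOfFin rfl ⟨i, hi⟩ else 0

def idx (h : V) : ℕ := #((Hs G A u0).filter fun h' => key G A u0 h' < key G A u0 h)

noncomputable def delta (h : V) : ℕ := wseq G A u0 (idx G A u0 h) - tau G A u0 h

noncomputable def Acc (h : V) : Finset V :=
  if hh : delta G A u0 h ≤ #(Inb G A h) then (Finset.exists_subset_card_eq hh).choose else ∅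

def COut (u s : V) : Prop := u = u0 ∨ (#A ≤ mI G A u ∧ s ∉ Acc G A u0 u)

def Dir (x y : V) : Prop := G.Adj x y ∧
  ((x ∈ A ∧ y ∈ A ∧ key G A u0 x < key G A u0 y) ∨
   (x ∈ A ∧ y ∉ A ∧ COut G A u0 x y) ∨
   (x ∉ A ∧ y ∈ A ∧ ¬ COut G A u0 y x))

noncomputable def dirB (x y : V) : Bool := @decide (Dir G A u0 x y) (Classical.propDecidable _)

lemma dirB_iff (x y : V) : dirB G A u0 x y = true ↔ Dir G A u0 x y := by
  simp [dirB]

-- basic facts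
lemma mkey_lt (v : V) : mkey G A v < (Fintype.card V + 1) ^ 2 := by
  have h1 : mI G A v ≤ Fintype.card V := by
    classical
    have := Finset.card_filter_le (Finset.univ : Finset V) (fun s => s ∉ A ∧ G.Adj v s)
    simpa [mI, Inb] using this
  have h2 : enc v < Fintype.card V + 1 := by
    have := (Fintype.equivFin V v).isLt
    simp only [enc]; omega
  have : mkey G A v ≤ Fintype.card V * (Fintype.card V + 1) + Fintype.card V :=
    Nat.add_le_add (Nat.mul_le_mul_right _ h1) (by omega)
  nlinarith [this]

lemma key_inj {x y : V} (h : key G A u0 x = key G A u0 y) : x = y := by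
  obtain ⟨hc, hm⟩ := nat_block_eq (mkey_lt G A x) (mkey_lt G A y) h
  have h2 : enc x < Fintype.card V + 1 := by
    have := (Fintype.equivFin V x).isLt
    simp only [enc]; omega
  have h3 : enc y < Fintype.card V + 1 := by
    have := (Fintype.equivFin V y).isLt
    simp only [enc]; omega
  obtain ⟨hmi, he⟩ := nat_block_eq h2 h3 hm
  have : (Fintype.equivFin V) x = (Fintype.equivFin V) y := by
    apply Fin.ext; simpa [enc] using he
  exact (Fintype.equivFin V).injective this

lemma key_lt_of_cls_lt {x y : V} (h : cls G A u0 x < cls G A u0 y) :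
    key G A u0 x < key G A u0 y := by
  have := mkey_lt G A x
  have h2 : cls G A u0 x * (Fintype.card V + 1) ^ 2 + (Fintype.card V + 1) ^ 2 ≤
      cls G A u0 y * (Fintype.card V + 1) ^ 2 := by
    have : (cls G A u0 x + 1) * (Fintype.card V + 1) ^ 2 ≤
        cls G A u0 y * (Fintype.card V + 1) ^ 2 := Nat.mul_le_mul_right _ h
    rw [Nat.add_mul, Nat.one_mul] at this
    omega
  simp only [key]; omega

lemma cls_mono {x y : V} (h : key G A u0 x < key G A u0 y) :
    cls G A u0 x ≤ cls G A u0 y := by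
  by_contra hc
  push_neg at hc
  exact absurd (key_lt_of_cls_lt G A u0 hc) (by omega)

lemma mI_mono_of_key_lt {x y : V} (hc : cls G A u0 x = cls G A u0 y)
    (h : key G A u0 x < key G A u0 y) : mI G A x ≤ mI G A y := by
  have hm : mkey G A x < mkey G A y := by
    simp only [key, hc] at h; omega
  by_contra hmi
  push_neg at hmi
  have h3 : enc y < Fintype.card V + 1 := by
    have := (Fintype.equivFin V y).isLt
    simp only [enc]; omega
  have : mkey G A y < mkey G A x := by
    have : mI G A y * (Fintype.card V + 1) + (Fintype.card V + 1) ≤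
        mI G A x * (Fintype.card V + 1) := by
      have : (mI G A y + 1) * (Fintype.card V + 1) ≤ mI G A x * (Fintype.card V + 1) :=
        Nat.mul_le_mul_right _ hmi
      rw [Nat.add_mul, Nat.one_mul] at this
      omega
    simp only [mkey]; omega
  omega

variable {G} {A} {u0}

lemma cls_u0 : cls G A u0 u0 = 0 := by simp [cls]

lemma cls_H {h : V} (hh : h ∈ Hs G A u0) : cls G A u0 h = 1 := by
  simp only [Hs, mem_filter, mem_erase] at hh
  simp [cls, hh.1.1, hh.2]

lemma cls_L {v : V} (hv : v ∈ Ls G A u0) : cls G A u0 v = 2 := by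
  simp only [Ls, mem_filter, mem_erase] at hv
  simp [cls, hv.1.1, hv.2]

lemma mem_H_or_L {v : V} (hv : v ∈ A) (hne : v ≠ u0) :
    v ∈ Hs G A u0 ∨ v ∈ Ls G A u0 := by
  by_cases hc : #A ≤ mI G A v
  · left; simp [Hs, mem_filter, mem_erase, hv, hne, hc]
  · right; simp only [Ls, mem_filter, mem_erase]; exact ⟨⟨hne, hv⟩, hc⟩

lemma tau_strictMono {x y : V} (hx : x ∈ A) (hy : y ∈ A)
    (h : key G A u0 x < key G A u0 y) : tau G A u0 x < tau G A u0 y := by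
  have hxy : x ≠ y := fun he => by subst he; omega
  have hsub : insert x ((A.erase x).filter fun u => key G A u0 u < key G A u0 x) ⊆
      (A.erase y).filter fun u => key G A u0 u < key G A u0 y := by
    intro u hu
    rcases mem_insert.mp hu with rfl | hu
    · exact mem_filter.mpr ⟨mem_erase.mpr ⟨hxy, hx⟩, h⟩
    · rw [mem_filter, mem_erase] at hu
      refine mem_filter.mpr ⟨mem_erase.mpr ⟨?_, hu.1.2⟩, hu.2.trans h⟩
      intro he; subst he; omega
  have hcard := card_le_card hsub
  rw [card_insert_of_notMem (by simp)] at hcard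
  simpa [tau] using hcard

lemma tau_inj {x y : V} (hx : x ∈ A) (hy : y ∈ A) (hne : x ≠ y) :
    tau G A u0 x ≠ tau G A u0 y := by
  have : key G A u0 x ≠ key G A u0 y := fun h => hne (key_inj G A u0 h)
  rcases this.lt_or_gt with h | h
  · exact (tau_strictMono hx hy h).ne
  · exact (tau_strictMono hy hx h).ne'

lemma tau_le {v : V} (hv : v ∈ A) : tau G A u0 v ≤ #A - 1 := by
  have h1 : ((A.erase v).filter fun u => key G A u0 u < key G A u0 v) ⊆ A.erase v :=
    filter_subset _ _
  have := card_le_card h1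
  have h2 : #(A.erase v) = #A - 1 := card_erase_of_mem hv
  simp only [tau]; omega

lemma tau_u0 (hu0 : u0 ∈ A) : tau G A u0 u0 = 0 := by
  rw [tau, Finset.card_eq_zero]
  rw [Finset.filter_eq_empty_iff]
  intro u hu
  rw [mem_erase] at hu
  have hcls : cls G A u0 u0 < cls G A u0 u := by
    rw [cls_u0]
    simp only [cls, if_neg hu.1]
    split <;> omega
  exact not_lt.mpr (key_lt_of_cls_lt G A u0 hcls).le

lemma H_subset : Hs G A u0 ⊆ A.erase u0 := filter_subset _ _

lemma L_subset : Ls G A u0 ⊆ A.erase u0 := filter_subset _ _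

lemma H_card (hu0 : u0 ∈ A) : #(Hs G A u0) ≤ #A - 1 := by
  have := card_le_card (H_subset (G := G) (A := A) (u0 := u0))
  rwa [card_erase_of_mem hu0] at this

lemma L_card (hu0 : u0 ∈ A) : #(Ls G A u0) = #A - 1 - #(Hs G A u0) := by
  have := Finset.card_filter_add_card_filter_not
    (s := A.erase u0) (p := fun v => #A ≤ mI G A v)
  rw [card_erase_of_mem hu0] at this
  have h2 : #(Hs G A u0) = #(filter (fun v => #A ≤ mI G A v) (A.erase u0)) := rfl
  have h3 : #(Ls G A u0) = #(filter (fun v => ¬ #A ≤ mI G A v) (A.erase u0)) := rfl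
  omega

lemma B_card (hu0 : u0 ∈ A) : #(Bs G A u0) ≤ #A - 1 - #(Hs G A u0) := by
  rw [← L_card hu0]
  exact card_image_le

lemma W_card (hu0 : u0 ∈ A) (hk2 : 2 ≤ #A) : #(Hs G A u0) ≤ #(Ws G A u0) := by
  have h1 : #(Ws G A u0) ≥ #(Finset.Icc (Tv G A u0) (2 * #A - 2)) - #(Bs G A u0) :=
    Finset.le_card_sdiff _ _
  rw [Nat.card_Icc] at h1
  have h2 := B_card (G := G) (u0 := u0) hu0
  have h3 : Tv G A u0 = min #A (#(Hs G A u0) + 2) := rfl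
  have h4 := H_card (G := G) (u0 := u0) hu0
  omega
lemma tau_heavy {h : V} (hu0 : u0 ∈ A) (hh : h ∈ Hs G A u0) :
    tau G A u0 h = 1 + idx G A u0 h := by
  have hhA : h ∈ A := (mem_erase.mp (H_subset hh)).2
  have hset : ((A.erase h).filter fun u => key G A u0 u < key G A u0 h) =
      insert u0 ((Hs G A u0).filter fun h' => key G A u0 h' < key G A u0 h) := by
    ext u
    constructor
    · intro hu
      rw [mem_filter, mem_erase] at hu
      obtain ⟨⟨hune, huA⟩, hukey⟩ := hu
      rcases eq_or_ne u u0 with rfl | hu0ne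
      · exact mem_insert_self _ _
      · have hclsle : cls G A u0 u ≤ cls G A u0 h := cls_mono G A u0 hukey
        rw [cls_H hh] at hclsle
        have : u ∈ Hs G A u0 := by
          simp only [cls, if_neg hu0ne] at hclsle
          by_cases hc : #A ≤ mI G A u
          · simp [Hs, mem_filter, mem_erase, hu0ne, huA, hc]
          · rw [if_neg hc] at hclsle; omega
        exact mem_insert_of_mem (mem_filter.mpr ⟨this, hukey⟩)
    · intro hu
      rcases mem_insert.mp hu with rfl | hu
      · refine mem_filter.mpr ⟨mem_erase.mpr ⟨?_, hu0⟩, ?_⟩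
        · intro he; subst he; exact (mem_erase.mp (H_subset hh)).1 rfl
        · apply key_lt_of_cls_lt
          rw [cls_u0, cls_H hh]; omega
      · rw [mem_filter] at hu
        refine mem_filter.mpr ⟨mem_erase.mpr ⟨?_, (mem_erase.mp (H_subset hu.1)).2⟩, hu.2⟩
        intro he; subst he; omega
  rw [tau, hset, card_insert_of_notMem]
  · rw [idx]; omega
  · intro hmem
    have := H_subset (mem_filter.mp hmem).1
    exact (mem_erase.mp this).1 rfl

lemma idx_lt {h : V} (hh : h ∈ Hs G A u0) : idx G A u0 h < #(Hs G A u0) := by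
  have hsub : ((Hs G A u0).filter fun h' => key G A u0 h' < key G A u0 h) ⊆
      (Hs G A u0).erase h := by
    intro u hu
    rw [mem_filter] at hu
    exact mem_erase.mpr ⟨fun he => by subst he; omega, hu.1⟩
  have h1 := card_le_card hsub
  have h2 : #((Hs G A u0).erase h) = #(Hs G A u0) - 1 := card_erase_of_mem hh
  have h3 : 0 < #(Hs G A u0) := card_pos.mpr ⟨h, hh⟩
  simp only [idx]; omega

lemma idx_strictMono {x y : V} (hx : x ∈ Hs G A u0) (hy : y ∈ Hs G A u0)
    (h : key G A u0 x < key G A u0 y) : idx G A u0 x < idx G A u0 y := by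
  have hxy : x ≠ y := fun he => by subst he; omega
  have hsub : insert x ((Hs G A u0).filter fun u => key G A u0 u < key G A u0 x) ⊆
      (Hs G A u0).filter fun u => key G A u0 u < key G A u0 y := by
    intro u hu
    rcases mem_insert.mp hu with rfl | hu
    · exact mem_filter.mpr ⟨hx, h⟩
    · rw [mem_filter] at hu
      exact mem_filter.mpr ⟨hu.1, hu.2.trans h⟩
  have hcard := card_le_card hsub
  rw [card_insert_of_notMem (by simp)] at hcard
  simpa [idx] using hcard

lemma wseq_mem {i : ℕ} (hi : i < #(Ws G A u0)) : wseq G A u0 i ∈ Ws G A u0 := by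
  rw [wseq, dif_pos hi]
  exact Finset.orderEmbOfFin_mem _ _ _

lemma wseq_lb {i : ℕ} (hi : i < #(Ws G A u0)) : Tv G A u0 + i ≤ wseq G A u0 i := by
  induction i with
  | zero =>
    have := wseq_mem (G := G) (A := A) (u0 := u0) hi
    rw [Ws, mem_sdiff, Finset.mem_Icc] at this
    omega
  | succ j ih =>
    have hj : j < #(Ws G A u0) := by omega
    have hlt : wseq G A u0 j < wseq G A u0 (j + 1) := by
      rw [wseq, wseq, dif_pos hj, dif_pos hi]
      exact (Finset.orderEmbOfFin _ rfl).strictMono (by simp)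
    have := ih hj
    omega

lemma wseq_ub (hu0 : u0 ∈ A) (hk2 : 2 ≤ #A) {i : ℕ} (hi : i < #(Hs G A u0)) :
    wseq G A u0 i ≤ Tv G A u0 + (#A - 1 - #(Hs G A u0)) + i := by
  have hiW : i < #(Ws G A u0) := lt_of_lt_of_le hi (W_card hu0 hk2)
  set x := Tv G A u0 + (#A - 1 - #(Hs G A u0)) + i with hx
  have hr := H_card (G := G) (u0 := u0) hu0
  have hT : Tv G A u0 = min #A (#(Hs G A u0) + 2) := rfl
  have hxle : x ≤ 2 * #A - 2 := by omega
  have hfilter : (Ws G A u0).filter (· ≤ x) = Finset.Icc (Tv G A u0) x \ Bs G A u0 := by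
    ext y
    simp only [Ws, mem_filter, mem_sdiff, Finset.mem_Icc]
    constructor
    · rintro ⟨⟨⟨h1, h2⟩, h3⟩, h4⟩; exact ⟨⟨h1, h4⟩, h3⟩
    · rintro ⟨⟨h1, h2⟩, h3⟩; exact ⟨⟨⟨h1, h2.trans hxle⟩, h3⟩, h2⟩
  have hcard : i + 1 ≤ #((Ws G A u0).filter (· ≤ x)) := by
    rw [hfilter]
    have h1 : #(Finset.Icc (Tv G A u0) x \ Bs G A u0) ≥
        #(Finset.Icc (Tv G A u0) x) - #(Bs G A u0) := Finset.le_card_sdiff _ _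
    rw [Nat.card_Icc] at h1
    have h2 := B_card (G := G) (u0 := u0) hu0
    omega
  rw [wseq, dif_pos hiW]
  exact ith_smallest_le rfl ⟨i, hiW⟩ x hcard

lemma tau_delta (hu0 : u0 ∈ A) (hk2 : 2 ≤ #A) {h : V} (hh : h ∈ Hs G A u0) :
    tau G A u0 h + delta G A u0 h = wseq G A u0 (idx G A u0 h) ∧ 1 ≤ delta G A u0 h := by
  have hidx := idx_lt (G := G) (A := A) (u0 := u0) hh
  have hlb := wseq_lb (G := G) (A := A) (u0 := u0) (i := idx G A u0 h)
    (lt_of_lt_of_le hidx (W_card hu0 hk2))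
  have htau := tau_heavy hu0 hh
  have hT : Tv G A u0 = min #A (#(Hs G A u0) + 2) := rfl
  constructor
  · rw [delta]; omega
  · rw [delta]; omega

lemma delta_le_mI (hu0 : u0 ∈ A) (hk2 : 2 ≤ #A) {h : V} (hh : h ∈ Hs G A u0) :
    delta G A u0 h ≤ mI G A h := by
  have hidx := idx_lt (G := G) (A := A) (u0 := u0) hh
  have hub := wseq_ub hu0 hk2 hidx
  have htau := tau_heavy hu0 hh
  have hT : Tv G A u0 = min #A (#(Hs G A u0) + 2) := rfl
  have hmI : #A ≤ mI G A h := (mem_filter.mp hh).2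
  have hr := H_card (G := G) (u0 := u0) hu0
  rw [delta]; omega

lemma Acc_spec (hu0 : u0 ∈ A) (hk2 : 2 ≤ #A) {h : V} (hh : h ∈ Hs G A u0) :
    Acc G A u0 h ⊆ Inb G A h ∧ #(Acc G A u0 h) = delta G A u0 h := by
  have hle : delta G A u0 h ≤ #(Inb G A h) := delta_le_mI hu0 hk2 hh
  rw [Acc, dif_pos hle]
  exact ⟨(Finset.exists_subset_card_eq hle).choose_spec.1,
    (Finset.exists_subset_card_eq hle).choose_spec.2⟩
variable (G A u0)

lemma DirCC {x y : V} (hx : x ∈ A) (hy : y ∈ A) :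
    Dir G A u0 x y ↔ G.Adj x y ∧ key G A u0 x < key G A u0 y := by
  constructor
  · rintro ⟨hadj, hcase⟩
    rcases hcase with ⟨_, _, hk⟩ | ⟨_, hny, _⟩ | ⟨hnx, _, _⟩
    · exact ⟨hadj, hk⟩
    · exact absurd hy hny
    · exact absurd hx hnx
  · rintro ⟨hadj, hk⟩
    exact ⟨hadj, Or.inl ⟨hx, hy, hk⟩⟩

lemma DirCI {x y : V} (hx : x ∈ A) (hy : y ∉ A) :
    Dir G A u0 x y ↔ G.Adj x y ∧ COut G A u0 x y := by
  constructor
  · rintro ⟨hadj, hcase⟩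
    rcases hcase with ⟨_, hyA, _⟩ | ⟨_, _, hc⟩ | ⟨hnx, _, _⟩
    · exact absurd hyA hy
    · exact ⟨hadj, hc⟩
    · exact absurd hx hnx
  · rintro ⟨hadj, hc⟩
    exact ⟨hadj, Or.inr (Or.inl ⟨hx, hy, hc⟩)⟩

lemma DirIC {x y : V} (hx : x ∉ A) (hy : y ∈ A) :
    Dir G A u0 x y ↔ G.Adj x y ∧ ¬ COut G A u0 y x := by
  constructor
  · rintro ⟨hadj, hcase⟩
    rcases hcase with ⟨hxA, _, _⟩ | ⟨hxA, _, _⟩ | ⟨_, _, hc⟩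
    · exact absurd hxA hx
    · exact absurd hxA hx
    · exact ⟨hadj, hc⟩
  · rintro ⟨hadj, hc⟩
    exact ⟨hadj, Or.inr (Or.inr ⟨hx, hy, hc⟩)⟩

lemma DirII {x y : V} (hx : x ∉ A) (hy : y ∉ A) : ¬ Dir G A u0 x y := by
  rintro ⟨hadj, hcase⟩
  rcases hcase with ⟨hxA, _, _⟩ | ⟨hxA, _, _⟩ | ⟨_, hyA, _⟩
  · exact absurd hxA hx
  · exact absurd hxA hx
  · exact absurd hyA hy

lemma dir_not_both {x y : V} (hadj : G.Adj x y)
    (hind : ∀ u ∉ A, ∀ v ∉ A, ¬ G.Adj u v) :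
    (Dir G A u0 x y ↔ ¬ Dir G A u0 y x) := by
  have hne : x ≠ y := G.ne_of_adj hadj
  have hkey : key G A u0 x ≠ key G A u0 y := fun h => hne (key_inj G A u0 h)
  by_cases hx : x ∈ A <;> by_cases hy : y ∈ A
  · rw [DirCC G A u0 hx hy, DirCC G A u0 hy hx]
    constructor
    · rintro ⟨_, hk⟩ ⟨_, hk'⟩; omega
    · intro h
      refine ⟨hadj, ?_⟩
      by_contra hk
      exact h ⟨hadj.symm, by omega⟩
  · rw [DirCI G A u0 hx hy, DirIC G A u0 hy hx]
    constructor
    · rintro ⟨_, hc⟩ ⟨_, hc'⟩; exact hc' hc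
    · intro h
      refine ⟨hadj, ?_⟩
      by_contra hc
      exact h ⟨hadj.symm, hc⟩
  · rw [DirIC G A u0 hx hy, DirCI G A u0 hy hx]
    constructor
    · rintro ⟨_, hc⟩ ⟨_, hc'⟩; exact hc hc'
    · intro h
      refine ⟨hadj, fun hc => h ⟨hadj.symm, hc⟩⟩
  · exact absurd hadj (hind x hx y hy)

/-- the number of in-neighbours under `Dir` -/
noncomputable def aval (v : V) : ℕ :=
  #(Finset.univ.filter fun u => @decide (Dir G A u0 u v) (Classical.propDecidable _) = true)

lemma aval_eq (v : V) :
    haveI := fun u => Classical.propDecidable (Dir G A u0 u v)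
    aval G A u0 v = #(Finset.univ.filter fun u => Dir G A u0 u v) := by
  classical
  apply Finset.card_bij (fun a _ => a)
  · intro a ha
    rw [Finset.mem_filter] at ha ⊢
    exact ⟨ha.1, of_decide_eq_true ha.2⟩
  · intro a _ b _ h; exact h
  · intro b hb
    rw [Finset.mem_filter] at hb
    exact ⟨b, Finset.mem_filter.mpr ⟨hb.1, decide_eq_true hb.2⟩, rfl⟩

lemma aval_split (v : V) :
    haveI := fun u => Classical.propDecidable (Dir G A u0 u v)
    aval G A u0 v = #(A.filter fun u => Dir G A u0 u v) +
      #((Finset.univ \ A).filter fun u => Dir G A u0 u v) := by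
  classical
  rw [aval_eq]
  have h1 : (Finset.univ.filter fun u => Dir G A u0 u v) =
      (A.filter fun u => Dir G A u0 u v) ∪ ((Finset.univ \ A).filter fun u => Dir G A u0 u v) := by
    ext u
    simp only [Finset.mem_filter, Finset.mem_union, Finset.mem_univ, Finset.mem_sdiff, true_and]
    tauto
  rw [h1]
  exact Finset.card_union_of_disjoint (Finset.disjoint_filter_filter Finset.disjoint_sdiff)

lemma aval_clique_part (hclq : G.IsClique (A : Set V)) {v : V} (hv : v ∈ A) :
    haveI := fun u => Classical.propDecidable (Dir G A u0 u v)
    (A.filter fun u => Dir G A u0 u v) =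
    ((A.erase v).filter fun u => key G A u0 u < key G A u0 v) := by
  classical
  ext u
  simp only [mem_filter, mem_erase]
  constructor
  · rintro ⟨huA, hd⟩
    rw [DirCC G A u0 huA hv] at hd
    exact ⟨⟨G.ne_of_adj hd.1, huA⟩, hd.2⟩
  · rintro ⟨⟨hne, huA⟩, hk⟩
    exact ⟨huA, (DirCC G A u0 huA hv).mpr ⟨hclq huA hv hne, hk⟩⟩

lemma aval_cross_part {v : V} (hv : v ∈ A) :
    haveI := fun u => Classical.propDecidable (Dir G A u0 u v)
    haveI := fun s => Classical.propDecidable (COut G A u0 v s)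
    ((Finset.univ \ A).filter fun u => Dir G A u0 u v) =
    ((Inb G A v).filter fun s => ¬ COut G A u0 v s) := by
  classical
  ext s
  simp only [mem_filter, Finset.mem_sdiff, Finset.mem_univ, true_and, Inb]
  constructor
  · rintro ⟨hsA, hd⟩
    rw [DirIC G A u0 hsA hv] at hd
    exact ⟨⟨hsA, hd.1.symm⟩, hd.2⟩
  · rintro ⟨⟨hsA, hadj⟩, hnc⟩
    exact ⟨hsA, (DirIC G A u0 hsA hv).mpr ⟨hadj.symm, hnc⟩⟩
lemma aval_u0 (hclq : G.IsClique (A : Set V)) (hu0 : u0 ∈ A) : aval G A u0 u0 = 0 := by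
  classical
  rw [aval_split, aval_clique_part G A u0 hclq hu0, aval_cross_part G A u0 hu0]
  have h1 : ((Inb G A u0).filter fun s => ¬ COut G A u0 u0 s) = ∅ := by
    rw [Finset.filter_eq_empty_iff]
    intro s _
    simp [COut]
  have h2 := tau_u0 (G := G) (A := A) hu0
  rw [h1]
  simp only [Finset.card_empty]
  rw [tau] at h2
  omega

lemma aval_light (hclq : G.IsClique (A : Set V)) {v : V} (hv : v ∈ Ls G A u0) :
    aval G A u0 v = tau G A u0 v + mI G A v := by
  classical
  have hvA : v ∈ A := (mem_erase.mp (L_subset hv)).2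
  rw [aval_split, aval_clique_part G A u0 hclq hvA, aval_cross_part G A u0 hvA]
  have h1 : ((Inb G A v).filter fun s => ¬ COut G A u0 v s) = Inb G A v := by
    rw [Finset.filter_eq_self]
    intro s _
    simp only [COut, not_or]
    exact ⟨(mem_erase.mp (L_subset hv)).1, fun hcon => (mem_filter.mp hv).2 hcon.1⟩
  rw [h1]
  rfl

lemma aval_heavy (hclq : G.IsClique (A : Set V)) (hu0 : u0 ∈ A) (hk2 : 2 ≤ #A)
    {v : V} (hv : v ∈ Hs G A u0) :
    aval G A u0 v = wseq G A u0 (idx G A u0 v) := by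
  classical
  have hvA : v ∈ A := (mem_erase.mp (H_subset hv)).2
  rw [aval_split, aval_clique_part G A u0 hclq hvA, aval_cross_part G A u0 hvA]
  have hAcc := Acc_spec (G := G) (A := A) (u0 := u0) hu0 hk2 hv
  have h1 : ((Inb G A v).filter fun s => ¬ COut G A u0 v s) = Acc G A u0 v := by
    ext s
    simp only [mem_filter, COut, not_or, not_and, not_not]
    constructor
    · rintro ⟨_, _, h2⟩
      exact h2 (mem_filter.mp hv).2
    · intro hs
      exact ⟨hAcc.1 hs, (mem_erase.mp (H_subset hv)).1, fun _ => hs⟩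
  rw [h1, hAcc.2]
  have := (tau_delta (G := G) (A := A) (u0 := u0) hu0 hk2 hv).1
  rw [tau] at this
  omega

-- the in-set for an independent vertex
noncomputable def InSet (s : V) : Finset V :=
  A.filter fun u => @decide (G.Adj u s ∧ COut G A u0 u s) (Classical.propDecidable _) = true

lemma mem_InSet {s u : V} : u ∈ InSet G A u0 s ↔ u ∈ A ∧ G.Adj u s ∧ COut G A u0 u s := by
  rw [InSet, Finset.mem_filter]
  constructor
  · rintro ⟨h1, h2⟩; exact ⟨h1, @of_decide_eq_true _ (Classical.propDecidable _) h2⟩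
  · rintro ⟨h1, h2⟩; exact ⟨h1, @decide_eq_true _ (Classical.propDecidable _) h2⟩

lemma aval_indep {s : V} (hs : s ∉ A) : aval G A u0 s = #(InSet G A u0 s) := by
  classical
  rw [aval_split]
  have h2 : ((Finset.univ \ A).filter fun u => Dir G A u0 u s) = ∅ := by
    rw [Finset.filter_eq_empty_iff]
    intro u hu
    exact DirII G A u0 (Finset.mem_sdiff.mp hu).2 hs
  have h1 : (A.filter fun u => Dir G A u0 u s) = InSet G A u0 s := by
    ext u
    rw [mem_InSet, mem_filter]
    constructor
    · rintro ⟨huA, hd⟩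
      exact ⟨huA, (DirCI G A u0 huA hs).mp hd⟩
    · rintro ⟨huA, hd⟩
      exact ⟨huA, (DirCI G A u0 huA hs).mpr hd⟩
  rw [h1, h2]
  simp

lemma aval_indep_pos {s : V} (hs : s ∉ A) (hu0 : u0 ∈ A) (hadj : G.Adj u0 s) :
    1 ≤ aval G A u0 s := by
  rw [aval_indep G A u0 hs]
  rw [Nat.one_le_iff_ne_zero, ← Nat.pos_iff_ne_zero, Finset.card_pos]
  exact ⟨u0, (mem_InSet G A u0).mpr ⟨hu0, hadj, Or.inl rfl⟩⟩

lemma aval_indep_le_H {s : V} (hs : s ∉ A) : aval G A u0 s ≤ 1 + #(Hs G A u0) := by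
  classical
  rw [aval_indep G A u0 hs]
  have hsub : InSet G A u0 s ⊆ insert u0 (Hs G A u0) := by
    intro u hu
    rw [mem_InSet] at hu
    obtain ⟨huA, _, hc⟩ := hu
    rcases hc with rfl | ⟨hmi, _⟩
    · exact mem_insert_self _ _
    · rcases eq_or_ne u u0 with rfl | hne
      · exact mem_insert_self _ _
      · exact mem_insert_of_mem (mem_filter.mpr ⟨mem_erase.mpr ⟨hne, huA⟩, hmi⟩)
  have h1 := card_le_card hsub
  have hins := Finset.card_insert_le u0 (Hs G A u0)
  omega

lemma aval_indep_le_k {s : V} (hs : s ∉ A) {w : V} (hw : w ∈ A) (hnadj : ¬ G.Adj w s) :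
    aval G A u0 s ≤ #A - 1 := by
  classical
  rw [aval_indep G A u0 hs]
  have hsub : InSet G A u0 s ⊆ A.erase w := by
    intro u hu
    rw [mem_InSet] at hu
    refine mem_erase.mpr ⟨?_, hu.1⟩
    rintro rfl
    exact hnadj hu.2.1
  have h1 := card_le_card hsub
  rw [card_erase_of_mem hw] at h1
  exact h1
lemma wseq_strict {i j : ℕ} (hij : i < j) (hj : j < #(Ws G A u0)) :
    wseq G A u0 i < wseq G A u0 j := by
  have hi : i < #(Ws G A u0) := lt_trans hij hj
  rw [wseq, wseq, dif_pos hi, dif_pos hj]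
  exact (Finset.orderEmbOfFin _ rfl).strictMono (by simpa using hij)

lemma tau_light_ge (hu0 : u0 ∈ A) {v : V} (hv : v ∈ Ls G A u0) :
    1 + #(Hs G A u0) ≤ tau G A u0 v := by
  have hvA : v ∈ A := (mem_erase.mp (L_subset hv)).2
  have hsub : insert u0 (Hs G A u0) ⊆
      ((A.erase v).filter fun u => key G A u0 u < key G A u0 v) := by
    intro u hu
    have hclsv : cls G A u0 v = 2 := cls_L hv
    rcases mem_insert.mp hu with rfl | hu
    · refine mem_filter.mpr ⟨mem_erase.mpr ⟨?_, hu0⟩, ?_⟩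
      · intro he; subst he; exact absurd rfl (mem_erase.mp (L_subset hv)).1
      · apply key_lt_of_cls_lt; rw [cls_u0, hclsv]; omega
    · refine mem_filter.mpr ⟨mem_erase.mpr ⟨?_, (mem_erase.mp (H_subset hu)).2⟩, ?_⟩
      · intro he; subst he
        have := (mem_filter.mp hu).2
        have := (mem_filter.mp hv).2
        exact absurd this (by simpa using (mem_filter.mp hu).2)
      · apply key_lt_of_cls_lt; rw [cls_H hu, hclsv]; omega
  have hcard := card_le_card hsub
  rw [card_insert_of_notMem (fun hc => (mem_erase.mp (H_subset hc)).1 rfl)] at hcard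
  simpa [tau, Nat.add_comm] using hcard

lemma light_mem_B {v : V} (hv : v ∈ Ls G A u0) :
    tau G A u0 v + mI G A v ∈ Bs G A u0 :=
  Finset.mem_image_of_mem _ hv

lemma heavy_val_props (hu0 : u0 ∈ A) (hk2 : 2 ≤ #A) {v : V} (hv : v ∈ Hs G A u0) :
    wseq G A u0 (idx G A u0 v) ∈ Ws G A u0 := by
  exact wseq_mem (lt_of_lt_of_le (idx_lt hv) (W_card hu0 hk2))

lemma aval_A_ne (hclq : G.IsClique (A : Set V)) (hu0 : u0 ∈ A) (hk2 : 2 ≤ #A)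
    {x y : V} (hx : x ∈ A) (hy : y ∈ A) (hne : x ≠ y) :
    aval G A u0 x ≠ aval G A u0 y := by
  classical
  have hTv : Tv G A u0 = min #A (#(Hs G A u0) + 2) := rfl
  -- helper: nonzero value for non-u0 vertices
  have hpos : ∀ z ∈ A, z ≠ u0 → 1 ≤ aval G A u0 z := by
    intro z hz hzne
    rcases mem_H_or_L (G := G) (u0 := u0) hz hzne with hzH | hzL
    · rw [aval_heavy G A u0 hclq hu0 hk2 hzH]
      have := wseq_lb (G := G) (A := A) (u0 := u0)
        (lt_of_lt_of_le (idx_lt hzH) (W_card hu0 hk2))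
      omega
    · rw [aval_light G A u0 hclq hzL]
      have := tau_light_ge G A u0 hu0 hzL
      omega
  rcases eq_or_ne x u0 with heq | hxne
  · rw [heq, aval_u0 G A u0 hclq hu0]
    exact fun h => by
      have := hpos y hy (fun h0 => hne (heq.trans h0.symm)); omega
  · rcases eq_or_ne y u0 with heq | hyne
    · rw [heq, aval_u0 G A u0 hclq hu0]
      exact fun h => by have := hpos x hx hxne; omega
    · rcases mem_H_or_L (G := G) (u0 := u0) hx hxne with hxH | hxL <;> rcases mem_H_or_L (G := G) (u0 := u0) hy hyne with hyH | hyL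
      · -- both heavy
        rw [aval_heavy G A u0 hclq hu0 hk2 hxH, aval_heavy G A u0 hclq hu0 hk2 hyH]
        have hkey : key G A u0 x ≠ key G A u0 y := fun h => hne (key_inj G A u0 h)
        rcases hkey.lt_or_gt with h | h
        · exact (wseq_strict G A u0 (idx_strictMono hxH hyH h)
            (lt_of_lt_of_le (idx_lt hyH) (W_card hu0 hk2))).ne
        · exact (wseq_strict G A u0 (idx_strictMono hyH hxH h)
            (lt_of_lt_of_le (idx_lt hxH) (W_card hu0 hk2))).ne'
      · -- x heavy, y light
        rw [aval_heavy G A u0 hclq hu0 hk2 hxH, aval_light G A u0 hclq hyL]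
        have h1 := heavy_val_props G A u0 hu0 hk2 hxH
        rw [Ws, mem_sdiff] at h1
        intro h
        exact h1.2 (h ▸ light_mem_B G A u0 hyL)
      · -- x light, y heavy
        rw [aval_heavy G A u0 hclq hu0 hk2 hyH, aval_light G A u0 hclq hxL]
        have h1 := heavy_val_props G A u0 hu0 hk2 hyH
        rw [Ws, mem_sdiff] at h1
        intro h
        exact h1.2 (h ▸ light_mem_B G A u0 hxL)
      · -- both light
        rw [aval_light G A u0 hclq hxL, aval_light G A u0 hclq hyL]
        have hkey : key G A u0 x ≠ key G A u0 y := fun h => hne (key_inj G A u0 h)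
        have hxA : x ∈ A := hx
        rcases hkey.lt_or_gt with h | h
        · have h1 := tau_strictMono hx hy h
          have h2 := mI_mono_of_key_lt G A u0 (by rw [cls_L hxL, cls_L hyL]) h
          omega
        · have h1 := tau_strictMono hy hx h
          have h2 := mI_mono_of_key_lt G A u0 (by rw [cls_L hxL, cls_L hyL]) h
          omega

lemma aval_cross_ne (hclq : G.IsClique (A : Set V)) (hu0 : u0 ∈ A) (hk2 : 2 ≤ #A)
    (hmax : ∀ s ∉ A, ∃ w ∈ A, ¬ G.Adj w s)
    {x s : V} (hx : x ∈ A) (hs : s ∉ A) (hadj : G.Adj x s) :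
    aval G A u0 x ≠ aval G A u0 s := by
  classical
  have hTv : Tv G A u0 = min #A (#(Hs G A u0) + 2) := rfl
  have hH := aval_indep_le_H G A u0 hs
  rcases eq_or_ne x u0 with heq | hxne
  · have hadj' : G.Adj u0 s := heq ▸ hadj
    rw [heq, aval_u0 G A u0 hclq hu0]
    have := aval_indep_pos G A u0 hs hu0 hadj'
    omega
  · rcases mem_H_or_L (G := G) (u0 := u0) hx hxne with hxH | hxL
    · -- heavy
      rw [aval_heavy G A u0 hclq hu0 hk2 hxH]
      obtain ⟨w, hw, hnadj⟩ := hmax s hs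
      have hk := aval_indep_le_k G A u0 hs hw hnadj
      have h1 := heavy_val_props G A u0 hu0 hk2 hxH
      rw [Ws, mem_sdiff, Finset.mem_Icc] at h1
      omega
    · -- light
      rw [aval_light G A u0 hclq hxL]
      have h1 := tau_light_ge G A u0 hu0 hxL
      have h2 : 1 ≤ mI G A x := by
        rw [mI, Inb]
        rw [Nat.one_le_iff_ne_zero, ← Nat.pos_iff_ne_zero, Finset.card_pos]
        exact ⟨s, Finset.mem_filter.mpr ⟨Finset.mem_univ s, hs, hadj⟩⟩
      omega

lemma aval_le (hclq : G.IsClique (A : Set V)) (hu0 : u0 ∈ A) (hk2 : 2 ≤ #A)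
    (hmax : ∀ s ∉ A, ∃ w ∈ A, ¬ G.Adj w s) (v : V) :
    aval G A u0 v ≤ 2 * #A - 2 := by
  classical
  by_cases hv : v ∈ A
  · rcases eq_or_ne v u0 with heq | hvne
    · rw [heq, aval_u0 G A u0 hclq hu0]; omega
    · rcases mem_H_or_L (G := G) (u0 := u0) hv hvne with hvH | hvL
      · rw [aval_heavy G A u0 hclq hu0 hk2 hvH]
        have h1 := heavy_val_props G A u0 hu0 hk2 hvH
        rw [Ws, mem_sdiff, Finset.mem_Icc] at h1
        exact h1.1.2
      · rw [aval_light G A u0 hclq hvL]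
        have h1 := tau_le (G := G) (A := A) (u0 := u0) (mem_erase.mp (L_subset hvL)).2
        have h2 : ¬ #A ≤ mI G A v := (mem_filter.mp hvL).2
        omega
  · obtain ⟨w, hw, hnadj⟩ := hmax v hv
    have := aval_indep_le_k G A u0 hv hw hnadj
    omega

lemma exists_orient (hclq : G.IsClique (A : Set V))
    (hind : ∀ u ∉ A, ∀ v ∉ A, ¬ G.Adj u v)
    (hmax : ∀ s ∉ A, ∃ w ∈ A, ¬ G.Adj w s)
    (hu0 : u0 ∈ A) (hk2 : 2 ≤ #A) :
    ∃ D : Orient G, D.Proper ∧ ∀ v, D.inDeg v ≤ 2 * #A - 2 := by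
  classical
  have hado : ∀ u v, dirB G A u0 u v = true → G.Adj u v := fun u v h =>
    ((dirB_iff G A u0 u v).mp h).1
  have hdif : ∀ u v, G.Adj u v → (dirB G A u0 u v = true ↔ ¬ dirB G A u0 v u = true) := by
    intro u v hadj
    rw [dirB_iff, dirB_iff]
    exact dir_not_both G A u0 hadj hind
  refine ⟨⟨dirB G A u0, hado, hdif⟩, ?_, ?_⟩
  · intro x y hadj
    have hx : Orient.inDeg ⟨dirB G A u0, hado, hdif⟩ x = aval G A u0 x := rfl
    have hy : Orient.inDeg ⟨dirB G A u0, hado, hdif⟩ y = aval G A u0 y := rfl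
    rw [hx, hy]
    by_cases hxA : x ∈ A <;> by_cases hyA : y ∈ A
    · exact aval_A_ne G A u0 hclq hu0 hk2 hxA hyA (G.ne_of_adj hadj)
    · exact aval_cross_ne G A u0 hclq hu0 hk2 hmax hxA hyA hadj
    · exact (aval_cross_ne G A u0 hclq hu0 hk2 hmax hyA hxA hadj.symm).symm
    · exact absurd hadj (hind x hxA y hyA)
  · intro v
    have hv : Orient.inDeg ⟨dirB G A u0, hado, hdif⟩ v = aval G A u0 v := rfl
    rw [hv]
    exact aval_le G A u0 hclq hu0 hk2 hmax v
end POSplit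
end POSplitC

open Finset
/-- If `G` is a split graph, then `χ⃗(G) ≤ 2ω(G) - 2`. -/
theorem properOrientNum_split {V : Type*} [Fintype V] (G : SimpleGraph V)
    (h : IsSplit G) : properOrientNum G ≤ 2 * G.cliqueNum - 2 := by
  classical
  by_cases hedge : ∀ u v : V, ¬ G.Adj u v
  · -- no edges at all: the all-false orientation works
    have hD : ∃ D : Orient G, D.Proper ∧ ∀ v, D.inDeg v ≤ 0 := by
      have h1 : ∀ u v : V, (fun (_ _ : V) => false) u v = true → G.Adj u v := by
        intro u v hf; exact absurd hf (by simp)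
      have h2 : ∀ u v : V, G.Adj u v →
          ((fun (_ _ : V) => false) u v = true ↔ ¬ (fun (_ _ : V) => false) v u = true) := by
        intro u v hadj; exact absurd hadj (hedge u v)
      refine ⟨⟨fun _ _ => false, h1, h2⟩, ?_, ?_⟩
      · intro u v hadj; exact absurd hadj (hedge u v)
      · intro v
        have heq : Orient.inDeg (G := G) ⟨fun _ _ => false, h1, h2⟩ v = 0 := by
          rw [Orient.inDeg]
          simp
        omega
    exact le_trans (Nat.sInf_le hD) (Nat.zero_le _)
  · push_neg at hedge
    obtain ⟨x, y, hxy⟩ := hedge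
    obtain ⟨K, hK, hKind⟩ := h
    -- maximal candidate
    set S : Finset (Finset V) :=
      Finset.univ.powerset.filter
        (fun B => G.IsClique (B : Set V) ∧ ∀ u ∉ B, ∀ v ∉ B, ¬ G.Adj u v) with hS
    have hKS : K.toFinset ∈ S := by
      rw [hS, Finset.mem_filter]
      refine ⟨Finset.mem_powerset.mpr (Finset.subset_univ _), ?_, ?_⟩
      · simpa using hK
      · intro u hu v hv
        exact hKind u (by simpa using hu) v (by simpa using hv)
    obtain ⟨A, hAS, hAmax⟩ := Finset.exists_max_image S (fun B => #B) ⟨K.toFinset, hKS⟩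
    rw [hS, Finset.mem_filter] at hAS
    obtain ⟨-, hAclq, hAind⟩ := hAS
    -- maximality consequence
    have hmax : ∀ s ∉ A, ∃ w ∈ A, ¬ G.Adj w s := by
      intro s hs
      by_contra hc
      push_neg at hc
      have hA' : insert s A ∈ S := by
        rw [hS, Finset.mem_filter]
        refine ⟨Finset.mem_powerset.mpr (Finset.subset_univ _), ?_, ?_⟩
        · rw [Finset.coe_insert]
          exact hAclq.insert (fun b hb _ => (hc b hb).symm)
        · intro u hu v hv
          rw [Finset.mem_insert, not_or] at hu hv
          exact hAind u hu.2 v hv.2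
      have := hAmax _ hA'
      rw [Finset.card_insert_of_notMem hs] at this
      omega
    -- A has at least two elements
    have hk2 : 2 ≤ #A := by
      by_contra hc
      push_neg at hc
      interval_cases hA : #A
      · rw [Finset.card_eq_zero] at hA
        subst hA
        exact hAind x (by simp) y (by simp) hxy
      · rw [Finset.card_eq_one] at hA
        obtain ⟨a, ha⟩ := hA
        by_cases hxA : x ∈ A <;> by_cases hyA : y ∈ A
        · have hxa : x = a := by rwa [ha, Finset.mem_singleton] at hxA
          have hya : y = a := by rwa [ha, Finset.mem_singleton] at hyA
          exact G.ne_of_adj hxy (hxa.trans hya.symm)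
        · obtain ⟨w, hw, hnadj⟩ := hmax y hyA
          have hwa : w = a := by rwa [ha, Finset.mem_singleton] at hw
          have hxa : x = a := by rwa [ha, Finset.mem_singleton] at hxA
          exact hnadj (by rw [hwa, ← hxa]; exact hxy)
        · obtain ⟨w, hw, hnadj⟩ := hmax x hxA
          have hwa : w = a := by rwa [ha, Finset.mem_singleton] at hw
          have hya : y = a := by rwa [ha, Finset.mem_singleton] at hyA
          exact hnadj (by rw [hwa, ← hya]; exact hxy.symm)
        · exact hAind x hxA y hyA hxy
    have hu0 : A.Nonempty := Finset.card_pos.mp (by omega)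
    obtain ⟨D, hDp, hDb⟩ := POSplit.exists_orient G A hu0.choose hAclq hAind hmax
      hu0.choose_spec hk2
    have hmem : (2 * #A - 2) ∈ {k | ∃ D : Orient G, D.Proper ∧ ∀ v, D.inDeg v ≤ k} :=
      ⟨D, hDp, hDb⟩
    have h1 := Nat.sInf_le hmem
    have h2 : #A ≤ G.cliqueNum := SimpleGraph.IsClique.card_le_cliqueNum (tc := hAclq)
    rw [properOrientNum]
    omega
end

section
/- For every positive integer ω, there exists a split graph G with clique number ω(G) = ω and proper orientation number χ⃗(G) = 2ω − 2. -/
open SimpleGraph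

/-!
The graph `splitG n` is the clique `Fin n` together with, for every cyclic window
`c, c + 1, …, c + s` of the clique with `s ≤ n - 2`, `2n²` independent copies of a vertex adjacent
exactly to that window.

Upper bound: orient the clique transitively (indegrees `0, …, n - 1`) and let, for each clique
vertex `c ≠ 0`, `n - 1` copies of a window of length `n - 1` starting at `c` send their only arc to
`c`. The clique indegrees become `0, n, n + 1, …, 2n - 2`, while every independent vertex has
indegree between `1` and `n - 1` (or `n - 2` for the vertices pointing into the clique).

Lower bound: if all indegrees are at most `k < 2n`, the `n` clique vertices absorb at most
`nk < 2n²` arcs, so every window has a copy that is a sink, whose indegree is its degree `s + 1`.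
Hence a clique vertex `c` sees sinks of every indegree `1, …, n - 1`, so its own indegree lies in
`{0} ∪ [n, k]`; the `n` clique indegrees are distinct, whence `k ≥ 2n - 2`.
-/

open Finset

namespace Orient

variable {V : Type*} {G : SimpleGraph V}

lemma adj_iff_dir_or_dir (D : Orient G) {u v : V} :
    G.Adj u v ↔ D.dir u v = true ∨ D.dir v u = true := by
  refine ⟨fun h => ?_, ?_⟩
  · by_cases huv : D.dir u v = true
    · exact .inl huv
    · exact .inr ((D.dir_iff v u h.symm).mpr huv)
  · rintro (h | h)
    exacts [D.adj_of_dir u v h, (D.adj_of_dir v u h).symm]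

variable [Fintype V]

def outDeg (D : Orient G) (v : V) : ℕ :=
  #{w | D.dir v w = true}

lemma inDeg_add_outDeg [DecidableRel G.Adj] (D : Orient G) (v : V) :
    D.inDeg v + D.outDeg v = G.degree v := by
  classical
  have hdisj : Disjoint ({u | D.dir u v = true} : Finset V) ({u | D.dir v u = true} : Finset V) :=
    disjoint_filter.mpr fun u _ huv hvu => (D.dir_iff u v (D.adj_of_dir u v huv)).mp huv hvu
  rw [inDeg, outDeg, ← card_union_of_disjoint hdisj, ← filter_or,
    ← card_neighborFinset_eq_degree, neighborFinset_eq_filter]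
  congr 1; ext u
  simp only [mem_filter, mem_univ, true_and, D.adj_iff_dir_or_dir (u := v), or_comm]

lemma card_le_card_mul_of_forall_exists_dir (D : Orient G) {s t : Finset V} {k : ℕ}
    (hs : ∀ u ∈ s, ∃ v ∈ t, D.dir u v = true) (ht : ∀ v ∈ t, D.inDeg v ≤ k) :
    #s ≤ #t * k := by
  classical
  simpa using card_mul_le_card_mul (fun u v => D.dir u v = true) (m := 1)
    (fun u hu => card_pos.mpr (by simpa [bipartiteAbove, Finset.Nonempty] using hs u hu))
    (fun v hv => (card_le_card (filter_subset_filter _ (subset_univ s))).trans (ht v hv))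

end Orient

/-- `(c, s, m)` is the `m`-th copy of the independent vertex adjacent to the cyclic window
`c, c + 1, …, c + s` of the clique `Fin n`. -/
abbrev Window (n : ℕ) := Fin n × Fin (n - 1) × Fin (2 * n * n)

namespace Window

variable {n : ℕ}

def Mem (u : Window n) (j : Fin n) : Prop :=
  (j - u.1).val ≤ u.2.1.val

instance (u : Window n) : DecidablePred u.Mem := fun _ => inferInstanceAs (Decidable (_ ≤ _))

lemma mem_start (u : Window n) : u.Mem u.1 := by
  have : NeZero n := ⟨u.1.pos.ne'⟩
  simp [Mem]

lemma eq_start_of_mem {u : Window n} {j : Fin n} (hs : u.2.1.val = 0) (hj : u.Mem j) : j = u.1 := by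
  have : NeZero n := ⟨u.1.pos.ne'⟩
  rw [Mem, hs, Nat.le_zero, Fin.val_eq_zero_iff, sub_eq_zero] at hj
  exact hj

lemma card_mem (u : Window n) : #{j | u.Mem j} = u.2.1.val + 1 := by
  have : NeZero n := ⟨u.1.pos.ne'⟩
  have hs : u.2.1.val < n := by omega
  have : univ.filter u.Mem = (Iic ⟨u.2.1.val, hs⟩).map (Equiv.addRight u.1).toEmbedding := by
    ext j
    simp only [mem_filter, mem_univ, true_and, mem_map, mem_Iic, Fin.le_def, Mem,
      Equiv.coe_toEmbedding, Equiv.coe_addRight]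
    exact ⟨fun h => ⟨j - u.1, h, sub_add_cancel j u.1⟩, by rintro ⟨x, hx, rfl⟩; simpa using hx⟩
  rw [this, card_map, Fin.card_Iic]

end Window

def splitG (n : ℕ) : SimpleGraph (Fin n ⊕ Window n) where
  Adj
    | .inl i, .inl j => i ≠ j
    | .inl j, .inr u | .inr u, .inl j => u.Mem j
    | .inr _, .inr _ => False
  symm := ⟨by rintro (i | u) (j | v) h <;> simp_all [eq_comm]⟩
  loopless := ⟨by rintro (i | u) h <;> simp_all⟩

namespace splitG

variable {n : ℕ}

@[simp] lemma adj_inl_inl {i j : Fin n} : (splitG n).Adj (.inl i) (.inl j) ↔ i ≠ j := .rfl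
@[simp] lemma adj_inl_inr {j : Fin n} {u : Window n} :
    (splitG n).Adj (.inl j) (.inr u) ↔ u.Mem j := .rfl
@[simp] lemma adj_inr_inl {j : Fin n} {u : Window n} :
    (splitG n).Adj (.inr u) (.inl j) ↔ u.Mem j := .rfl
@[simp] lemma not_adj_inr_inr {u v : Window n} : ¬ (splitG n).Adj (.inr u) (.inr v) := id

instance : DecidableRel (splitG n).Adj
  | .inl i, .inl j => inferInstanceAs (Decidable (i ≠ j))
  | .inl j, .inr u | .inr u, .inl j => inferInstanceAs (Decidable (u.Mem j))
  | .inr _, .inr _ => inferInstanceAs (Decidable False)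

lemma degree_inr (u : Window n) : (splitG n).degree (.inr u) = u.2.1.val + 1 := by
  have : (splitG n).neighborFinset (.inr u) = (univ.filter u.Mem).map .inl := by
    ext (j | v) <;> simp
  rw [← card_neighborFinset_eq_degree, this, card_map, u.card_mem]

lemma isSplit (n : ℕ) : IsSplit (splitG n) := by
  refine ⟨Set.range Sum.inl, ?_, ?_⟩
  · rintro _ ⟨i, rfl⟩ _ ⟨j, rfl⟩ hij
    simpa using hij
  · rintro (i | u) hu (j | v) hv <;> simp_all

lemma card_le_of_isClique {t : Finset (Fin n ⊕ Window n)} (ht : (splitG n).IsClique (t : Set _)) :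
    #t ≤ n := by
  by_cases hu : ∃ u, Sum.inr u ∈ t
  · obtain ⟨u, hu⟩ := hu
    have hsub : t ⊆ insert (.inr u) ((splitG n).neighborFinset (.inr u)) := by
      intro x hx
      rw [mem_insert, mem_neighborFinset]
      by_cases hxu : x = .inr u
      · exact .inl hxu
      · exact .inr (ht hu hx (Ne.symm hxu))
    calc #t ≤ (splitG n).degree (.inr u) + 1 := (card_le_card hsub).trans (card_insert_le _ _)
      _ ≤ n := by rw [degree_inr]; omega
  · simp only [not_exists] at hu
    calc #t ≤ #(univ.map Function.Embedding.inl : Finset (Fin n ⊕ Window n)) := by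
          refine card_le_card fun x hx => ?_
          rcases x with j | v
          · simp
          · exact absurd hx (hu v)
      _ = n := by simp

lemma cliqueNum (n : ℕ) : (splitG n).cliqueNum = n := by
  refine le_antisymm ?_ ?_
  · obtain ⟨s, hs⟩ := (splitG n).exists_isNClique_cliqueNum
    exact hs.card_eq ▸ card_le_of_isClique hs.isClique
  · have hclique : (splitG n).IsClique ((univ.map .inl : Finset (Fin n ⊕ Window n)) : Set _) := by
      intro x hx y hy hxy
      simp only [coe_map, coe_univ, Set.image_univ, Set.mem_range] at hx hy
      obtain ⟨i, rfl⟩ := hx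
      obtain ⟨j, rfl⟩ := hy
      simpa using hxy
    simpa using hclique.card_le_cliqueNum

end splitG

namespace Window

variable {n : ℕ}

/-- The copies oriented towards the clique, each towards the start of its window. -/
def IsFeeder (u : Window n) : Prop :=
  u.1.val ≠ 0 ∧ u.2.1.val = n - 2 ∧ u.2.2.val < n - 1

instance : DecidablePred (IsFeeder (n := n)) := fun _ => inferInstanceAs (Decidable (_ ∧ _))

lemma card_isFeeder_start_eq (j : Fin n) :
    #{u : Window n | u.IsFeeder ∧ u.1 = j} = if j.val = 0 then 0 else n - 1 := by
  split_ifs with hj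
  · exact card_eq_zero.mpr (filter_false_of_mem fun u _ ⟨hu, huj⟩ => hu.1 (huj ▸ hj))
  · have hs : n - 2 < n - 1 := by omega
    have : univ.filter (fun u : Window n => u.IsFeeder ∧ u.1 = j) =
        {j} ×ˢ {(⟨n - 2, hs⟩ : Fin (n - 1))} ×ˢ
          univ.filter (fun m : Fin (2 * n * n) => m.val < n - 1) := by
      ext ⟨c, s, m⟩
      simp only [IsFeeder, mem_filter, mem_univ, true_and, mem_product, mem_singleton, Fin.ext_iff]
      constructor
      · rintro ⟨⟨-, hs, hm⟩, hc⟩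
        exact ⟨hc, hs, hm⟩
      · rintro ⟨hc, hs, hm⟩
        exact ⟨⟨hc ▸ hj, hs, hm⟩, hc⟩
    rw [this, card_product, card_product, card_singleton, card_singleton, Fin.card_filter_val_lt]
    have : n ≤ 2 * n * n := by nlinarith [j.pos]
    omega

end Window

namespace splitG

variable {n : ℕ}

def orient (n : ℕ) : Orient (splitG n) where
  dir
    | .inl i, .inl j => decide (i < j)
    | .inr u, .inl j => decide (u.IsFeeder ∧ u.1 = j)
    | .inl j, .inr u => decide (u.Mem j ∧ ¬(u.IsFeeder ∧ u.1 = j))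
    | .inr _, .inr _ => false
  adj_of_dir := by
    rintro (i | u) (j | v) h <;> simp only [decide_eq_true_eq, Bool.false_eq_true] at h
    · exact h.ne
    · exact h.1
    · exact h.2 ▸ u.mem_start
  dir_iff := by
    rintro (i | u) (j | v) h <;>
      simp only [decide_eq_true_eq, adj_inl_inl, adj_inl_inr, adj_inr_inl] at h ⊢
    · exact ⟨fun hij => lt_asymm hij, fun hji => lt_of_le_of_ne (not_lt.mp hji) h⟩
    · tauto
    · tauto
    · exact h.elim

@[simp] lemma orient_dir_inl_inl {i j : Fin n} :
    (orient n).dir (.inl i) (.inl j) = true ↔ i < j := decide_eq_true_iff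
@[simp] lemma orient_dir_inr_inl {j : Fin n} {u : Window n} :
    (orient n).dir (.inr u) (.inl j) = true ↔ u.IsFeeder ∧ u.1 = j := decide_eq_true_iff
@[simp] lemma orient_dir_inl_inr {j : Fin n} {u : Window n} :
    (orient n).dir (.inl j) (.inr u) = true ↔ u.Mem j ∧ ¬(u.IsFeeder ∧ u.1 = j) :=
  decide_eq_true_iff
@[simp] lemma orient_dir_inr_inr {u v : Window n} : (orient n).dir (.inr u) (.inr v) = false := rfl

lemma orient_inDeg_inl (j : Fin n) :
    (orient n).inDeg (.inl j) = j.val + if j.val = 0 then 0 else n - 1 := by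
  rw [Orient.inDeg, card_filter, Fintype.sum_sum_type, ← card_filter, ← card_filter,
    ← Window.card_isFeeder_start_eq, ← Fin.card_Iio, ← filter_gt_eq_Iio]
  simp only [orient_dir_inl_inl, orient_dir_inr_inl]

lemma orient_outDeg_inr (u : Window n) :
    (orient n).outDeg (.inr u) = if u.IsFeeder then 1 else 0 := by
  have : univ.filter (fun w => (orient n).dir (.inr u) w = true) =
      if u.IsFeeder then {.inl u.1} else ∅ := by
    split_ifs with hu <;> ext (j | v)
    · simp only [mem_filter, mem_univ, true_and, orient_dir_inr_inl, mem_singleton, Sum.inl.injEq]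
      exact ⟨fun h => h.2.symm, fun h => ⟨hu, h.symm⟩⟩
    · simp
    · simp [hu]
    · simp
  rw [Orient.outDeg, this, apply_ite card, card_singleton, card_empty]

lemma orient_inDeg_inr (u : Window n) :
    (orient n).inDeg (.inr u) = if u.IsFeeder then n - 2 else u.2.1.val + 1 := by
  have := (orient n).inDeg_add_outDeg (.inr u)
  rw [orient_outDeg_inr, degree_inr] at this
  split_ifs at this ⊢ with hu
  · rw [hu.2.1] at this
    omega
  · omega

lemma orient_inDeg_inl_ne_inr {j : Fin n} {u : Window n} (h : u.Mem j) :
    (orient n).inDeg (.inl j) ≠ (orient n).inDeg (.inr u) := by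
  rw [orient_inDeg_inl, orient_inDeg_inr]
  have := u.2.1.isLt
  split_ifs with hj hu hu
  · have hn : n ≠ 2 := fun hn => hu.1 (Window.eq_start_of_mem (by omega) h ▸ hj)
    omega
  all_goals omega

lemma orient_proper : (orient n).Proper := by
  rintro (i | u) (j | v) h
  · simp only [orient_inDeg_inl]
    have := Fin.val_ne_of_ne (adj_inl_inl.mp h)
    split_ifs <;> omega
  · exact orient_inDeg_inl_ne_inr h
  · exact (orient_inDeg_inl_ne_inr h).symm
  · exact absurd h not_adj_inr_inr

lemma orient_inDeg_le (v : Fin n ⊕ Window n) : (orient n).inDeg v ≤ 2 * n - 2 := by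
  rcases v with j | u
  · rw [orient_inDeg_inl]
    split_ifs <;> omega
  · rw [orient_inDeg_inr]
    split_ifs <;> omega

variable {k : ℕ} {D : Orient (splitG n)}

lemma exists_outDeg_eq_zero (hk : ∀ v, D.inDeg v ≤ k) (hkn : k < 2 * n) (c : Fin n)
    (s : Fin (n - 1)) : ∃ m, D.outDeg (.inr (c, s, m)) = 0 := by
  by_contra! h
  have hcopies := D.card_le_card_mul_of_forall_exists_dir
    (s := univ.map ⟨fun m => .inr (c, s, m), fun _ _ h => by simpa using h⟩)
    (t := univ.map .inl) (k := k) ?_ (by simpa using fun j => hk (.inl j))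
  · simp only [card_map, card_univ, Fintype.card_fin] at hcopies
    nlinarith
  · simp only [mem_map, mem_univ, true_and, forall_exists_index,
      forall_apply_eq_imp_iff]
    intro m
    obtain ⟨w, hw⟩ := card_pos.mp (Nat.pos_of_ne_zero (h m))
    rcases w with j | v
    · exact ⟨.inl j, ⟨j, rfl⟩, (mem_filter.mp hw).2⟩
    · exact absurd (D.adj_of_dir _ _ (mem_filter.mp hw).2) not_adj_inr_inr

lemma inDeg_inl_notMem_Icc (hD : D.Proper) (hk : ∀ v, D.inDeg v ≤ k) (hkn : k < 2 * n)
    (j : Fin n) : D.inDeg (.inl j) ∉ Icc 1 (n - 1) := by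
  rw [mem_Icc]
  rintro ⟨hpos, hle⟩
  obtain ⟨t, ht⟩ := Nat.exists_eq_add_one_of_ne_zero (by omega : D.inDeg (.inl j) ≠ 0)
  obtain ⟨m, hm⟩ := exists_outDeg_eq_zero hk hkn j ⟨t, by omega⟩
  have hsink := D.inDeg_add_outDeg (.inr (j, ⟨t, by omega⟩, m))
  rw [hm, degree_inr] at hsink
  exact hD (.inl j) (.inr (j, ⟨t, by omega⟩, m))
    (adj_inl_inr.mpr (Window.mem_start _)) (ht.trans hsink.symm)

lemma two_mul_sub_two_le (hD : D.Proper) (hk : ∀ v, D.inDeg v ≤ k) : 2 * n - 2 ≤ k := by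
  by_cases hkn : 2 * n ≤ k
  · omega
  have hmaps : Set.MapsTo (fun j => D.inDeg (.inl j)) (univ : Finset (Fin n))
      (insert 0 (Icc n k) : Finset ℕ) := by
    intro j _
    have := inDeg_inl_notMem_Icc hD hk (by omega) j
    simp only [coe_insert, coe_Icc, Set.mem_insert_iff, Set.mem_Icc, mem_Icc] at this ⊢
    have := hk (.inl j)
    omega
  have hinj : Set.InjOn (fun j => D.inDeg (.inl j)) (univ : Finset (Fin n)) :=
    fun i _ j _ hij => by_contra fun hne => hD _ _ (adj_inl_inl.mpr hne) hij
  have := (card_le_card_of_injOn _ hmaps hinj).trans (card_insert_le _ _)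
  rw [card_univ, Fintype.card_fin, Nat.card_Icc] at this
  omega

lemma properOrientNum_eq (n : ℕ) : properOrientNum (splitG n) = 2 * n - 2 :=
  IsLeast.csInf_eq ⟨⟨orient n, orient_proper, orient_inDeg_le⟩,
    fun _ ⟨_, hD, hk⟩ => two_mul_sub_two_le hD hk⟩

end splitG

theorem exists_split_properOrientNum_eq_general (ω : ℕ) :
    ∃ (V : Type) (_ : Fintype V) (G : SimpleGraph V),
      IsSplit G ∧ G.cliqueNum = ω ∧ properOrientNum G = 2 * ω - 2 :=
  ⟨_, inferInstance, splitG ω, splitG.isSplit ω, splitG.cliqueNum ω, splitG.properOrientNum_eq ω⟩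

/-- For every positive integer `ω`, there exists a split graph `G` with clique number `ω`
and proper orientation number exactly `2ω - 2`. -/
theorem exists_split_properOrientNum_eq (ω : ℕ) (hω : 1 ≤ ω) :
    ∃ (V : Type) (_ : Fintype V) (G : SimpleGraph V),
      IsSplit G ∧ G.cliqueNum = ω ∧ properOrientNum G = 2 * ω - 2 :=
  exists_split_properOrientNum_eq_general ω
end

section
/- Let G be a graph, S ⊆ V(G) a subset of its vertices, and D_S a proper k-orientation of the induced subgraph G[S] such that for every vertex v ∈ V(G)∖S and every neighbor u of v with u ∈ S, one has |N_G(v) ∩ S| > d⁻_{D_S}(u). Then D_S can be extended into a proper Δ(G)-orientation D of G (an orientation agreeing with D_S on the edges of G[S]) such that d⁻_D(v) = d⁻_{D_S}(v) for every v ∈ S, and d⁻_D(v) ≤ d_G(v) for every v ∈ V(G)∖S. -/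
open SimpleGraph

section Aux

open Finset

variable {V : Type*} [Fintype V] [DecidableEq V]

/-- A greedy ordering of the vertices of `T`: vertices can be ordered so that orienting
every edge of `G[T]` towards its earlier endpoint yields, after adding the offset `f`,
strictly decreasing values along arcs. -/
lemma exists_ord_aux (G : SimpleGraph V) [DecidableRel G.Adj] (f : V → ℕ) (T : Finset V) :
    ∃ ord : V → ℕ,
      (∀ u ∈ T, ∀ v ∈ T, u ≠ v → ord u ≠ ord v) ∧
      (∀ u ∈ T, ∀ v ∈ T, G.Adj u v → ord u < ord v →
        f v + (T.filter (fun w => G.Adj v w ∧ ord v < ord w)).card <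
        f u + (T.filter (fun w => G.Adj u w ∧ ord u < ord w)).card) := by
  induction T using Finset.strongInduction with
  | _ T ih =>
    rcases T.eq_empty_or_nonempty with rfl | hne
    · exact ⟨fun _ => 0, by simp, by simp⟩
    obtain ⟨m, hm, hmax⟩ :=
      T.exists_max_image (fun x => f x + (T.filter (fun w => G.Adj x w)).card) hne
    obtain ⟨ord', hinj', hlt'⟩ := ih (T.erase m) (T.erase_ssubset hm)
    set T' := T.erase m with hT'
    set ord : V → ℕ := fun x => if x = m then 0 else ord' x + 1 with hord
    have hordm : ord m = 0 := by simp [hord]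
    have hordne : ∀ x, x ≠ m → ord x = ord' x + 1 := by
      intro x hx; simp [hord, hx]
    refine ⟨ord, ?_, ?_⟩
    · intro u hu v hv huv
      by_cases h1 : u = m
      · subst h1
        have h2 : v ≠ u := fun h => huv h.symm
        rw [hordm, hordne v h2]; omega
      · by_cases h2 : v = m
        · subst h2; rw [hordm, hordne u h1]; omega
        · rw [hordne u h1, hordne v h2]
          intro h
          exact hinj' u (mem_erase.2 ⟨h1, hu⟩) v (mem_erase.2 ⟨h2, hv⟩) huv (by omega)
    · intro u hu v hv hadj hord'
      have hB : ∀ x ∈ T, x ≠ m →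
          (T.filter (fun w => G.Adj x w ∧ ord x < ord w)).card =
          (T'.filter (fun w => G.Adj x w ∧ ord' x < ord' w)).card := by
        intro x hx hxm
        congr 1
        ext w
        simp only [mem_filter, hT', mem_erase]
        constructor
        · rintro ⟨hwT, haw, hlt⟩
          have hwm : w ≠ m := by
            rintro rfl; rw [hordm] at hlt; omega
          rw [hordne x hxm, hordne w hwm] at hlt
          exact ⟨⟨hwm, hwT⟩, haw, by omega⟩
        · rintro ⟨⟨hwm, hwT⟩, haw, hlt⟩
          exact ⟨hwT, haw, by rw [hordne x hxm, hordne w hwm]; omega⟩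
      have hvm : v ≠ m := by
        rintro rfl; rw [hordm] at hord'; omega
      by_cases hum : u = m
      · subst hum
        have hBu : (T.filter (fun w => G.Adj u w ∧ ord u < ord w)).card =
            (T.filter (fun w => G.Adj u w)).card := by
          congr 1
          ext w
          simp only [mem_filter]
          constructor
          · rintro ⟨hwT, haw, _⟩; exact ⟨hwT, haw⟩
          · rintro ⟨hwT, haw⟩
            refine ⟨hwT, haw, ?_⟩
            have hwu : w ≠ u := fun h => G.irrefl (h ▸ haw)
            rw [hordm, hordne w hwu]; omega
        rw [hBu, hB v hv hvm]
        have hsub : insert u (T'.filter (fun w => G.Adj v w ∧ ord' v < ord' w)) ⊆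
            T.filter (fun w => G.Adj v w) := by
          intro w hw
          rcases mem_insert.1 hw with rfl | hw
          · exact mem_filter.2 ⟨hm, hadj.symm⟩
          · have := mem_filter.1 hw
            exact mem_filter.2 ⟨mem_of_mem_erase this.1, this.2.1⟩
        have hnm : u ∉ T'.filter (fun w => G.Adj v w ∧ ord' v < ord' w) := by
          simp [hT']
        have h1 : (T'.filter (fun w => G.Adj v w ∧ ord' v < ord' w)).card + 1 ≤
            (T.filter (fun w => G.Adj v w)).card := by
          have := Finset.card_le_card hsub
          rwa [Finset.card_insert_of_notMem hnm] at this
        have h2 := hmax v hv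
        omega
      · have humT' : u ∈ T' := mem_erase.2 ⟨hum, hu⟩
        have hvmT' : v ∈ T' := mem_erase.2 ⟨hvm, hv⟩
        rw [hB u hu hum, hB v hv hvm]
        apply hlt' u humT' v hvmT' hadj
        rw [hordne u hum, hordne v hvm] at hord'
        omega

/-- The extension of the orientation `DS` of `G[S]`: inside `S` use `DS`, orient all edges
leaving `S` out of `S`, and orient edges outside `S` towards the `ord`-smaller endpoint. -/
def extDirAux (G : SimpleGraph V) [DecidableRel G.Adj] (S : Finset V)
    (DS : Orient (G.induce (↑S : Set V))) (ord : V → ℕ) : V → V → Bool :=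
  fun u v =>
    if _hG : G.Adj u v then
      if hu : u ∈ S then
        if hv : v ∈ S then DS.dir ⟨u, hu⟩ ⟨v, hv⟩ else true
      else
        if v ∈ S then false else decide (ord v < ord u)
    else false

lemma extDirAux_iff (G : SimpleGraph V) [DecidableRel G.Adj] (S : Finset V)
    (DS : Orient (G.induce (↑S : Set V))) (ord : V → ℕ) (u v : V) :
    extDirAux G S DS ord u v = true ↔
      G.Adj u v ∧ ((∃ hu : u ∈ S, ∃ hv : v ∈ S, DS.dir ⟨u, hu⟩ ⟨v, hv⟩ = true) ∨
        (u ∈ S ∧ v ∉ S) ∨ (u ∉ S ∧ v ∉ S ∧ ord v < ord u)) := by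
  unfold extDirAux
  split_ifs with hG hu hv hv' <;> simp_all

end Aux

/-- A proper `k`-orientation of `G[S]` in which every vertex `v ∉ S` has more neighbours
in `S` than the indegree of any of its neighbours in `S` extends to a proper
`Δ(G)`-orientation of `G` preserving the indegrees inside `S` and giving each vertex
outside `S` indegree at most its degree. -/
theorem extend_proper_orientation {V : Type*} [Fintype V] [DecidableEq V]
    (G : SimpleGraph V) [DecidableRel G.Adj] (S : Finset V) (k : ℕ)
    (DS : Orient (G.induce (↑S : Set V)))
    (hproper : DS.Proper) (hk : ∀ v, DS.inDeg v ≤ k)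
    (hcond : ∀ v : V, v ∉ S → ∀ u : (↑S : Set V), G.Adj (↑u) v →
      DS.inDeg u < (S.filter (fun w => G.Adj v w)).card) :
    ∃ D : Orient G, D.Proper ∧ (∀ v, D.inDeg v ≤ G.maxDegree) ∧
      (∀ u v : (↑S : Set V), D.dir ↑u ↑v = DS.dir u v) ∧
      (∀ v : (↑S : Set V), D.inDeg ↑v = DS.inDeg v) ∧
      (∀ v : V, v ∉ S → D.inDeg v ≤ G.degree v) := by
  classical
  open Finset in
  obtain ⟨ord, hinj, hlt⟩ := exists_ord_aux G (fun x => (S.filter (fun w => G.Adj x w)).card)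
    (Finset.univ.filter (fun x => x ∉ S))
  have hadj_of : ∀ u v, extDirAux G S DS ord u v = true → G.Adj u v :=
    fun u v h => ((extDirAux_iff G S DS ord u v).1 h).1
  have hmemT : ∀ x, x ∉ S → x ∈ Finset.univ.filter (fun x => x ∉ S) := by
    intro x hx; simp [hx]
  have hiff : ∀ u v, G.Adj u v →
      (extDirAux G S DS ord u v = true ↔ ¬ extDirAux G S DS ord v u = true) := by
    intro u v hG
    by_cases hu : u ∈ S <;> by_cases hv : v ∈ S
    · simp only [extDirAux, dif_pos hG, dif_pos hG.symm, dif_pos hu, dif_pos hv]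
      exact DS.dir_iff ⟨u, hu⟩ ⟨v, hv⟩ hG
    · simp [extDirAux, hG, hG.symm, hu, hv]
    · simp [extDirAux, hG, hG.symm, hu, hv]
    · simp only [extDirAux, dif_pos hG, dif_pos hG.symm, dif_neg hu, dif_neg hv, if_neg hu,
        if_neg hv, decide_eq_true_eq]
      have hne := hinj u (hmemT u hu) v (hmemT v hv) hG.ne
      omega
  set D : Orient G := ⟨extDirAux G S DS ord, hadj_of, hiff⟩ with hD
  have hDin : ∀ v, D.inDeg v =
      (Finset.univ.filter (fun u => extDirAux G S DS ord u v = true)).card := fun _ => rfl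
  have hin_S : ∀ (v : V) (hv : v ∈ S), D.inDeg v = DS.inDeg ⟨v, hv⟩ := by
    intro v hv
    rw [hDin]
    rw [Orient.inDeg]
    symm
    apply Finset.card_bij (fun (a : (↑S : Set V)) _ => (a : V))
    · intro a ha
      simp only [mem_filter, mem_univ, true_and] at ha ⊢
      have hadj : G.Adj (↑a) v := DS.adj_of_dir a ⟨v, hv⟩ ha
      rw [extDirAux_iff]
      refine ⟨hadj, Or.inl ⟨a.2, hv, ?_⟩⟩
      simpa using ha
    · intro a _ b _ h
      exact Subtype.ext h
    · intro b hb
      simp only [mem_filter, mem_univ, true_and] at hb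
      rw [extDirAux_iff] at hb
      obtain ⟨hadj, h⟩ := hb
      rcases h with ⟨hb', hv', hd⟩ | ⟨_, hv'⟩ | ⟨_, hv', _⟩
      · exact ⟨⟨b, hb'⟩, by simpa using hd, rfl⟩
      · exact absurd hv hv'
      · exact absurd hv hv'
  have hin_notS : ∀ v ∉ S, D.inDeg v =
      (S.filter (fun w => G.Adj v w)).card +
      ((Finset.univ.filter (fun x => x ∉ S)).filter
        (fun w => G.Adj v w ∧ ord v < ord w)).card := by
    intro v hv
    rw [hDin]
    have hset : Finset.univ.filter (fun u => extDirAux G S DS ord u v = true) =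
        (S.filter (fun w => G.Adj v w)) ∪
        ((Finset.univ.filter (fun x => x ∉ S)).filter
          (fun w => G.Adj v w ∧ ord v < ord w)) := by
      ext u
      simp only [mem_filter, mem_union, mem_univ, true_and, extDirAux_iff]
      constructor
      · rintro ⟨hadj, h⟩
        rcases h with ⟨hu', hv', _⟩ | ⟨hu', hv'⟩ | ⟨hu', _, hord⟩
        · exact absurd hv' hv
        · exact Or.inl ⟨hu', hadj.symm⟩
        · exact Or.inr ⟨hu', hadj.symm, hord⟩
      · rintro (⟨hu', hadj⟩ | ⟨hu', hadj, hord⟩)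
        · exact ⟨hadj.symm, Or.inr (Or.inl ⟨hu', hv⟩)⟩
        · exact ⟨hadj.symm, Or.inr (Or.inr ⟨hu', hv, hord⟩)⟩
    rw [hset, Finset.card_union_of_disjoint]
    rw [Finset.disjoint_left]
    intro a ha ha'
    exact (mem_filter.1 (mem_filter.1 ha').1).2 (mem_filter.1 ha).1
  have hdeg : ∀ v, D.inDeg v ≤ G.degree v := by
    intro v
    rw [hDin]
    apply Finset.card_le_card
    intro u hu
    rw [mem_neighborFinset]
    exact (hadj_of u v (mem_filter.1 hu).2).symm
  refine ⟨D, ?_, fun v => (hdeg v).trans (G.degree_le_maxDegree v), ?_, ?_, fun v hv => hdeg v⟩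
  · -- Proper
    intro u v hadj
    by_cases hu : u ∈ S <;> by_cases hv : v ∈ S
    · rw [hin_S u hu, hin_S v hv]
      exact hproper ⟨u, hu⟩ ⟨v, hv⟩ hadj
    · rw [hin_S u hu, hin_notS v hv]
      have := hcond v hv ⟨u, hu⟩ hadj
      omega
    · rw [hin_notS u hu, hin_S v hv]
      have := hcond u hu ⟨v, hv⟩ hadj.symm
      omega
    · rcases lt_trichotomy (ord u) (ord v) with h | h | h
      · have := hlt u (hmemT u hu) v (hmemT v hv) hadj h
        rw [hin_notS u hu, hin_notS v hv]
        omega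
      · exact absurd h (hinj u (hmemT u hu) v (hmemT v hv) hadj.ne)
      · have := hlt v (hmemT v hv) u (hmemT u hu) hadj.symm h
        rw [hin_notS u hu, hin_notS v hv]
        omega
  · intro u v
    by_cases hG : G.Adj ↑u ↑v
    · have hu' : (u : V) ∈ S := u.2
      have hv' : (v : V) ∈ S := v.2
      show extDirAux G S DS ord ↑u ↑v = DS.dir u v
      simp only [extDirAux, dif_pos hG, dif_pos hu', dif_pos hv', Subtype.coe_eta]
    · show extDirAux G S DS ord ↑u ↑v = DS.dir u v
      have h1 : extDirAux G S DS ord ↑u ↑v = false := by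
        simp [extDirAux, hG]
      rw [h1]
      cases h : DS.dir u v with
      | false => rfl
      | true => exact absurd (DS.adj_of_dir u v h) hG
  · intro v
    have := hin_S ↑v v.2
    simpa using this
end

section
/- For any graph G and any vertex u ∈ V(G), there exists a proper Δ(G)-orientation D of G such that d⁻_D(u) = 0. -/
open SimpleGraph

private lemma key_order {V : Type*} [Fintype V] [DecidableEq V] (G : SimpleGraph V)
    [DecidableRel G.Adj] :
    ∀ (s : Finset V) (u : V), u ∈ s →
      ∃ p : V → ℕ,
        (∀ v ∈ s, ∀ w ∈ s, v ≠ w → p v ≠ p w) ∧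
        (∀ v ∈ s, v ≠ u → p v < p u) ∧
        (∀ v ∈ s, ∀ w ∈ s, G.Adj v w → p v < p w →
          (s.filter fun x => G.Adj w x ∧ p w < p x).card <
          (s.filter fun x => G.Adj v x ∧ p v < p x).card) := by
  intro s
  induction s using Finset.strongInduction with
  | _ s ih =>
  intro u hu
  by_cases hs : s.erase u = ∅
  · have honly : ∀ v ∈ s, v = u := by
      intro v hv
      by_contra h
      exact Finset.eq_empty_iff_forall_notMem.mp hs v (Finset.mem_erase.mpr ⟨h, hv⟩)
    refine ⟨fun _ => 0, ?_, ?_, ?_⟩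
    · intro v hv w hw hvw
      exact absurd ((honly v hv).trans (honly w hw).symm) hvw
    · intro v hv hvu; exact absurd (honly v hv) hvu
    · intro v hv w hw hadj _
      exact absurd ((honly v hv).trans (honly w hw).symm) hadj.ne
  · obtain ⟨m, hm, hmax⟩ := Finset.exists_max_image (s.erase u)
      (fun v => (s.filter fun x => G.Adj v x).card) (Finset.nonempty_of_ne_empty hs)
    obtain ⟨hmu, hms⟩ := Finset.mem_erase.mp hm
    have hss : s.erase m ⊂ s := Finset.erase_ssubset hms
    obtain ⟨p, hinj, hlast, hk⟩ := ih _ hss u (Finset.mem_erase.mpr ⟨Ne.symm hmu, hu⟩)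
    refine ⟨fun v => if v = m then 0 else p v + 1, ?_, ?_, ?_⟩
    · intro v hv w hw hvw
      simp only []
      by_cases h1 : v = m <;> by_cases h2 : w = m
      · exact absurd (h1.trans h2.symm) hvw
      · rw [if_pos h1, if_neg h2]; omega
      · rw [if_neg h1, if_pos h2]; omega
      · rw [if_neg h1, if_neg h2]
        have := hinj v (Finset.mem_erase.mpr ⟨h1, hv⟩) w (Finset.mem_erase.mpr ⟨h2, hw⟩) hvw
        omega
    · intro v hv hvu
      simp only []
      rw [if_neg (Ne.symm hmu)]
      by_cases h1 : v = m
      · rw [if_pos h1]; omega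
      · rw [if_neg h1]
        have := hlast v (Finset.mem_erase.mpr ⟨h1, hv⟩) hvu
        omega
    · -- key inequality
      have ha : ∀ v, v ≠ m →
          (s.filter fun x => G.Adj v x ∧ (if v = m then 0 else p v + 1) <
            (if x = m then 0 else p x + 1)) =
          ((s.erase m).filter fun x => G.Adj v x ∧ p v < p x) := by
        intro v hvm
        ext x
        simp only [Finset.mem_filter, Finset.mem_erase, if_neg hvm]
        constructor
        · rintro ⟨hxs, hadj, hlt⟩
          have hxm : x ≠ m := by
            intro h; rw [if_pos h] at hlt; omega
          rw [if_neg hxm] at hlt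
          exact ⟨⟨hxm, hxs⟩, hadj, by omega⟩
        · rintro ⟨⟨hxm, hxs⟩, hadj, hlt⟩
          rw [if_neg hxm]
          exact ⟨hxs, hadj, by omega⟩
      intro v hv w hw hadj hlt
      simp only [] at hlt ⊢
      by_cases h2 : w = m
      · rw [if_pos h2] at hlt; omega
      by_cases h1 : v = m
      · -- v = m : goal is deg of m in s > dUp of w
        subst h1
        have hb : (s.filter fun x => G.Adj v x ∧ (if v = v then 0 else p v + 1) <
            (if x = v then 0 else p x + 1)) = s.filter fun x => G.Adj v x := by
          apply Finset.filter_congr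
          intro x hxs
          simp only [eq_self_iff_true, if_true, eq_iff_iff]
          constructor
          · rintro ⟨h, _⟩; exact h
          · intro h
            have hxm : x ≠ v := fun hh => G.irrefl (hh ▸ h)
            rw [if_neg hxm]
            exact ⟨h, by omega⟩
        rw [hb, ha w h2]
        by_cases hwu : w = u
        · subst hwu
          have h0 : ((s.erase v).filter fun x => G.Adj w x ∧ p w < p x) = ∅ := by
            apply Finset.filter_false_of_mem
            intro x hx
            rintro ⟨hadjx, hltx⟩
            have := hlast x hx (fun hh => G.irrefl (hh ▸ hadjx))
            omega
          rw [h0]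
          simp only [Finset.card_empty]
          have : w ∈ s.filter fun x => G.Adj v x := Finset.mem_filter.mpr ⟨hw, hadj⟩
          exact Finset.card_pos.mpr ⟨w, this⟩
        · have h1' : ((s.erase v).filter fun x => G.Adj w x ∧ p w < p x).card ≤
              ((s.erase v).filter fun x => G.Adj w x).card := by
            apply Finset.card_le_card
            intro x hx
            simp only [Finset.mem_filter] at hx ⊢
            exact ⟨hx.1, hx.2.1⟩
          have h2' : ((s.erase v).filter fun x => G.Adj w x).card <
              (s.filter fun x => G.Adj w x).card := by
            apply Finset.card_lt_card
            constructor
            · intro x hx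
              simp only [Finset.mem_filter, Finset.mem_erase] at hx ⊢
              exact ⟨hx.1.2, hx.2⟩
            · intro hsub
              have : v ∈ (s.erase v).filter fun x => G.Adj w x :=
                hsub (Finset.mem_filter.mpr ⟨hv, hadj.symm⟩)
              simp only [Finset.mem_filter, Finset.mem_erase] at this
              exact this.1.1 rfl
          have h3' : (s.filter fun x => G.Adj w x).card ≤
              (s.filter fun x => G.Adj v x).card :=
            hmax w (Finset.mem_erase.mpr ⟨hwu, hw⟩)
          omega
      · -- both in s.erase m
        rw [ha v h1, ha w h2]
        rw [if_neg h1, if_neg h2] at hlt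
        exact hk v (Finset.mem_erase.mpr ⟨h1, hv⟩) w (Finset.mem_erase.mpr ⟨h2, hw⟩)
          hadj (by omega)

/-- For any graph `G` and vertex `u`, there is a proper `Δ(G)`-orientation of `G`
in which `u` has indegree `0`. -/
theorem exists_proper_maxDegree_orientation_source {V : Type*} [Fintype V]
    (G : SimpleGraph V) [DecidableRel G.Adj] (u : V) :
    ∃ D : Orient G, D.Proper ∧ (∀ v, D.inDeg v ≤ G.maxDegree) ∧ D.inDeg u = 0 := by
  classical
  obtain ⟨p, hinj, hmax, hkey⟩ := key_order G Finset.univ u (Finset.mem_univ u)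
  have hinj' : ∀ v w : V, v ≠ w → p v ≠ p w := fun v w h =>
    hinj v (Finset.mem_univ v) w (Finset.mem_univ w) h
  refine ⟨⟨fun a b => decide (G.Adj a b ∧ p b < p a), ?_, ?_⟩, ?_, ?_, ?_⟩
  · intro a b h
    simp only [decide_eq_true_eq] at h
    exact h.1
  · intro a b hab
    simp only [decide_eq_true_eq, not_and, not_lt]
    have hne := hinj' a b hab.ne
    constructor
    · rintro ⟨_, hlt⟩ _
      omega
    · intro h
      have := h hab.symm
      exact ⟨hab, by omega⟩
  · -- Proper
    intro a b hab
    have hd : ∀ c : V, (Finset.univ.filter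
        (fun w => decide (G.Adj w c ∧ p c < p w) = true)).card =
        (Finset.univ.filter fun x => G.Adj c x ∧ p c < p x).card := by
      intro c
      congr 1
      apply Finset.filter_congr
      intro x _
      simp only [decide_eq_true_eq]
      rw [adj_comm]
    show (Finset.univ.filter _).card ≠ (Finset.univ.filter _).card
    rw [hd a, hd b]
    rcases lt_or_gt_of_ne (hinj' a b hab.ne) with h | h
    · exact (hkey a (Finset.mem_univ a) b (Finset.mem_univ b) hab h).ne'
    · exact (hkey b (Finset.mem_univ b) a (Finset.mem_univ a) hab.symm h).ne
  · -- max degree bound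
    intro v
    have h1 : (Finset.univ.filter
        (fun w => decide (G.Adj w v ∧ p v < p w) = true)) ⊆ G.neighborFinset v := by
      intro x hx
      simp only [Finset.mem_filter, decide_eq_true_eq] at hx
      exact (SimpleGraph.mem_neighborFinset G v x).mpr hx.2.1.symm
    calc (Finset.univ.filter _).card ≤ (G.neighborFinset v).card :=
          Finset.card_le_card h1
      _ = G.degree v := rfl
      _ ≤ G.maxDegree := G.degree_le_maxDegree v
  · -- indegree of u is 0
    show (Finset.univ.filter _).card = 0
    rw [Finset.card_eq_zero]
    apply Finset.filter_false_of_mem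
    intro x _
    simp only [decide_eq_true_eq]
    rintro ⟨hadj, hlt⟩
    have := hmax x (Finset.mem_univ x) (fun h => G.irrefl (h ▸ hadj))
    omega
end

section
/- Let k ≥ 3 and let G be a k-uniform path block graph with clique sequence C1, …, Cq. Let u ∈ Cq be a vertex that is not a cut-vertex of G, and let c, d be integers with c ≥ 1 and d ≥ 0 such that either c > k − 1 ≥ d, or c = d = k − 1. Then there exists a proper ℓ-orientation of G compensated by (c, d, u), where ℓ = max{c, 2k − 2}. -/
/-!
Orient each clique `C i` transitively along a bijective ranking `ρ i : C i → {0, …, k - 1}`.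
A vertex lying in a single clique then has its rank as indegree, and the cut vertex `w i`
shared by `C i` and `C (i + 1)` has indegree `ρ i (w i) + ρ (i + 1) (w i) ≤ 2k - 2`.
The ranks are fixed backwards from the last clique, where `u` gets rank `d` and colour `c`:
if `w i` has rank `d_i` and colour `c_i` in `C i`, then `w (i - 1)` gets a rank `t` in `C i`
and a rank `d_(i-1)` in `C (i - 1)` such that its indegree `c_(i-1) = d_(i-1) + t` differs
from `c_i` and from the ranks of the other vertices of `C i`, and such that
`(c_(i-1), d_(i-1))` satisfies the hypothesis on `(c, d)` again; for `k ≥ 3` there is always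
room for such a choice.
-/

open SimpleGraph

/-- `v` is a cut-vertex of `G` if its removal increases the number of connected components. -/
def IsCutVertex {V : Type*} (G : SimpleGraph V) (v : V) : Prop :=
  Nat.card (G.induce {u | u ≠ v}).ConnectedComponent > Nat.card G.ConnectedComponent

/-- `C 0, …, C (q-1)` is the clique sequence of a `k`-uniform path block graph `G`:
the cliques all have `k` vertices, they cover the vertices and edges of `G`,
consecutive cliques share exactly one vertex, non-consecutive cliques are disjoint,
and consecutive shared (cut-)vertices are distinct. -/
structure IsPathBlockSeq {V : Type*} [DecidableEq V] (G : SimpleGraph V) (k : ℕ)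
    {q : ℕ} (C : Fin q → Finset V) : Prop where
  card_eq : ∀ i, (C i).card = k
  clique : ∀ i, G.IsClique (C i)
  cover : ∀ v : V, ∃ i, v ∈ C i
  edge_mem : ∀ u v, G.Adj u v → ∃ i, u ∈ C i ∧ v ∈ C i
  consec : ∀ i j : Fin q, (j : ℕ) = (i : ℕ) + 1 → (C i ∩ C j).card = 1
  apart : ∀ i j : Fin q, (i : ℕ) + 1 < (j : ℕ) → C i ∩ C j = ∅
  cut_distinct : ∀ i j l : Fin q, (j : ℕ) = (i : ℕ) + 1 → (l : ℕ) = (j : ℕ) + 1 →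
    C i ∩ C j ≠ C j ∩ C l

/-- `D` is a proper orientation of `G` compensated by `(c, d, u)`: the indegree of `u`
is `d`, and the colouring assigning `c` to `u` and its indegree to every other vertex
is a proper colouring of `G`. -/
def Orient.CompensatedProper {V : Type*} [Fintype V] [DecidableEq V] {G : SimpleGraph V}
    (D : Orient G) (c d : ℕ) (u : V) : Prop :=
  D.inDeg u = d ∧ ∀ x y, G.Adj x y →
    (if x = u then c else D.inDeg x) ≠ (if y = u then c else D.inDeg y)

open Finset

theorem Finset.card_filter_lt_apply {α : Type*} {s : Finset α} {f : α → ℕ} (hf : Set.InjOn f s)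
    (hlt : ∀ x ∈ s, f x < #s) {a : α} (ha : a ∈ s) : #{x ∈ s | f x < f a} = f a := by
  have himage : s.image f = range #s := by
    refine eq_of_subset_of_card_le (fun m hm => ?_) (by rw [card_range, card_image_of_injOn hf])
    obtain ⟨x, hx, rfl⟩ := mem_image.mp hm
    exact mem_range.mpr (hlt x hx)
  calc #{x ∈ s | f x < f a} = #((s.image f).filter (· < f a)) := by
        rw [filter_image, card_image_of_injOn (hf.mono (filter_subset _ _))]
    _ = #(range (f a)) := by
        rw [himage]
        congr 1
        ext m
        simp only [mem_filter, mem_range]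
        exact ⟨And.right, fun h => ⟨h.trans (hlt a ha), h⟩⟩
    _ = f a := card_range _

theorem Finset.exists_injOn_extend {α : Type*} {s t : Finset α} (hts : t ⊆ s) {a : α → ℕ}
    (ha : Set.InjOn a t) (hlt : ∀ x ∈ t, a x < #s) :
    ∃ f : α → ℕ, Set.InjOn f s ∧ (∀ x ∈ s, f x < #s) ∧ ∀ x ∈ t, f x = a x := by
  classical
  let e : {x : s | x.1 ∈ t} ↪ Fin #s :=
    ⟨fun x => ⟨a x, hlt _ x.2⟩, fun x y hxy =>
      Subtype.ext <| Subtype.ext <| ha x.2 y.2 (congrArg Fin.val hxy)⟩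
  obtain ⟨g, hg⟩ := Cardinal.extend_function_finite e ⟨s.equivFin⟩
  refine ⟨fun x => if hx : x ∈ s then g ⟨x, hx⟩ else 0, fun x hx y hy hxy => ?_, fun x hx => ?_,
    fun x hx => ?_⟩
  · simpa [dif_pos (mem_coe.mp hx), dif_pos (mem_coe.mp hy), Fin.val_inj] using hxy
  · simp [dif_pos hx]
  · simp only [dif_pos (hts hx)]
    exact congrArg Fin.val (hg ⟨⟨x, hts hx⟩, hx⟩)

section RankOrientation

variable {V ι : Type*} {G : SimpleGraph V} {B : ι → Finset V} {ρ : ι → V → ℕ}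

structure IsRanking (B : ι → Finset V) (ρ : ι → V → ℕ) : Prop where
  injOn : ∀ i, Set.InjOn (ρ i) (B i)
  lt_card : ∀ i, ∀ x ∈ B i, ρ i x < #(B i)

def Orient.OrientsByRank (D : Orient G) (B : ι → Finset V) (ρ : ι → V → ℕ) : Prop :=
  ∀ x y, D.dir x y = true ↔ ∃ i, x ∈ B i ∧ y ∈ B i ∧ ρ i x < ρ i y

theorem exists_orientsByRank (hB : ∀ i, G.IsClique (B i))
    (hadj : ∀ x y, G.Adj x y → ∃ i, x ∈ B i ∧ y ∈ B i)
    (huniq : ∀ {i j x y}, x ∈ B i → y ∈ B i → x ∈ B j → y ∈ B j → x ≠ y → i = j)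
    (hρ : ∀ i, Set.InjOn (ρ i) (B i)) :
    ∃ D : Orient G, D.OrientsByRank B ρ := by
  classical
  refine ⟨⟨fun x y => decide (∃ i, x ∈ B i ∧ y ∈ B i ∧ ρ i x < ρ i y), fun x y h => ?_,
    fun x y hxy => ?_⟩, fun x y => decide_eq_true_iff⟩
  · obtain ⟨i, hx, hy, hlt⟩ := of_decide_eq_true h
    exact hB i hx hy (ne_of_apply_ne (ρ i) hlt.ne)
  · simp only [decide_eq_true_eq]
    constructor
    · rintro ⟨i, hx, hy, hlt⟩ ⟨j, hy', hx', hlt'⟩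
      obtain rfl := huniq hx hy hx' hy' hxy.ne
      exact lt_asymm hlt hlt'
    · intro h
      obtain ⟨i, hx, hy⟩ := hadj x y hxy
      rcases lt_trichotomy (ρ i x) (ρ i y) with hlt | heq | hgt
      · exact ⟨i, hx, hy, hlt⟩
      · exact absurd (hρ i hx hy heq) hxy.ne
      · exact absurd ⟨i, hy, hx, hgt⟩ h

theorem Orient.OrientsByRank.inDeg_eq_sum [Fintype V] {D : Orient G} (hD : D.OrientsByRank B ρ)
    (huniq : ∀ {i j x y}, x ∈ B i → y ∈ B i → x ∈ B j → y ∈ B j → x ≠ y → i = j)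
    (hρ : IsRanking B ρ) {v : V} {s : Finset ι} (hs : ∀ i, i ∈ s ↔ v ∈ B i) :
    D.inDeg v = ∑ i ∈ s, ρ i v := by
  classical
  have hin : univ.filter (fun x => D.dir x v = true) =
      s.biUnion fun i => {x ∈ B i | ρ i x < ρ i v} := by
    ext x
    simp only [mem_filter, mem_univ, true_and, hD x v, mem_biUnion, hs, and_left_comm]
  unfold Orient.inDeg
  rw [hin, card_biUnion]
  · exact sum_congr rfl fun i hi => card_filter_lt_apply (hρ.injOn i) (hρ.lt_card i) ((hs i).1 hi)
  · intro i hi j hj hij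
    refine disjoint_left.mpr fun x hxi hxj => hij ?_
    rw [mem_filter] at hxi hxj
    exact huniq hxi.1 ((hs i).1 hi) hxj.1 ((hs j).1 hj) (ne_of_apply_ne (ρ i) hxi.2.ne)

end RankOrientation

theorem isCutVertex_of_separated {V : Type*} [Finite V] {G : SimpleGraph V} {u x y : V}
    (S : Set V) (hS : ∀ a b, a ∈ S → a ≠ u → b ≠ u → G.Adj a b → b ∈ S)
    (hx : x ∈ S) (hy : y ∉ S) (hxu : G.Adj x u) (huy : G.Adj u y) : IsCutVertex G u := by
  let H := G.induce {v | v ≠ u}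
  let φ : H →g G := (Embedding.induce _).toHom
  have hreach {a b : {v | v ≠ u}} (hab : H.Reachable a b) (ha : a.1 ∈ S) : b.1 ∈ S := by
    obtain ⟨p⟩ := hab
    induction p with
    | nil => exact ha
    | @cons a b _ h _ ih => exact ih (hS _ _ ha a.2 b.2 h)
  have hsurj : Function.Surjective (ConnectedComponent.map φ) := by
    refine ConnectedComponent.ind fun v => ?_
    by_cases hv : v = u
    · subst hv
      exact ⟨H.connectedComponentMk ⟨x, hxu.ne⟩, ConnectedComponent.sound hxu.reachable⟩
    · exact ⟨H.connectedComponentMk ⟨v, hv⟩, rfl⟩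
  have hninj : ¬ Function.Injective (ConnectedComponent.map φ) := fun hinj =>
    hy <| hreach (ConnectedComponent.eq.mp <| @hinj (H.connectedComponentMk ⟨x, hxu.ne⟩)
      (H.connectedComponentMk ⟨y, huy.ne'⟩)
      (ConnectedComponent.sound (hxu.reachable.trans huy.reachable))) hx
  have := Fintype.ofFinite G.ConnectedComponent
  have := Fintype.ofFinite H.ConnectedComponent
  rw [IsCutVertex, Nat.card_eq_fintype_card, Nat.card_eq_fintype_card]
  exact Fintype.card_lt_of_surjective_not_injective _ hsurj hninj

def Admissible (k c d : ℕ) : Prop := (k - 1 < c ∧ d ≤ k - 1) ∨ (c = k - 1 ∧ d = k - 1)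

theorem Admissible.exists_pred {k c d : ℕ} (hk : 3 ≤ k) (h : Admissible k c d) :
    ∃ d' t, t < k ∧ t ≠ d ∧ Admissible k (d' + t) d' ∧ d' + t ≠ c ∧
      (d' + t < k → d' + t = d) := by
  rcases h with ⟨hc, hd⟩ | ⟨rfl, rfl⟩
  · by_cases hd' : d = k - 1
    · exact ⟨k - 1, 0, by unfold Admissible; omega⟩
    -- `t ≥ 2` keeps `d' + t ≥ k` for both `d' = k - 1` and `d' = k - 2`, one of which avoids `c`
    obtain ⟨t, ht, htk, htd⟩ : ∃ t, 2 ≤ t ∧ t < k ∧ t ≠ d :=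
      if h2 : d = 2 then ⟨3, by omega⟩ else ⟨2, by omega⟩
    by_cases hc' : c = k - 1 + t
    · exact ⟨k - 2, t, by unfold Admissible; omega⟩
    · exact ⟨k - 1, t, by unfold Admissible; omega⟩
  · exact ⟨k - 1, 1, by unfold Admissible; omega⟩

/-- `c i` and `d i` are the colour and the rank in clique `i` of the vertex `w i`, and
`t (i + 1)` is the rank of `w i` in clique `i + 1`. -/
structure IsSchedule (k n : ℕ) (c d t : ℕ → ℕ) : Prop where
  admissible : ∀ i ≤ n, Admissible k (c i) (d i)
  c_eq : ∀ i < n, c i = d i + t (i + 1)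
  t_lt : ∀ i < n, t (i + 1) < k
  t_ne : ∀ i < n, t (i + 1) ≠ d (i + 1)
  c_ne : ∀ i < n, c i ≠ c (i + 1)
  eq_of_lt : ∀ i < n, c i < k → c i = d (i + 1)

theorem exists_isSchedule {k c d : ℕ} (hk : 3 ≤ k) (h : Admissible k c d) (n : ℕ) :
    ∃ cs ds ts : ℕ → ℕ, IsSchedule k n cs ds ts ∧ cs n = c ∧ ds n = d := by
  induction n generalizing c d with
  | zero =>
    exact ⟨fun _ => c, fun _ => d, fun _ => 0,
      ⟨fun _ _ => h, by simp, by simp, by simp, by simp, by simp⟩, rfl, rfl⟩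
  | succ n ih =>
    obtain ⟨d', t, ht, htd, h', hc', hlt⟩ := h.exists_pred hk
    obtain ⟨cs, ds, ts, hs, hcn, hdn⟩ := ih h'
    refine ⟨fun i => if i ≤ n then cs i else c, fun i => if i ≤ n then ds i else d,
      fun i => if i ≤ n then ts i else t, ⟨fun i hi => ?_, fun i hi => ?_, fun i hi => ?_,
      fun i hi => ?_, fun i hi => ?_, fun i hi => ?_⟩, by simp, by simp⟩
    all_goals grind [IsSchedule]

/-- The colour of the vertex of rank `r` in clique `i`: `w i` has rank `d i`, `w (i - 1)` has
rank `t i`, and every other vertex has its rank as indegree. -/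
def scheduleColour (cs ds ts : ℕ → ℕ) (i r : ℕ) : ℕ :=
  if r = ds i then cs i else if 0 < i ∧ r = ts i then cs (i - 1) else r

theorem IsSchedule.injOn_scheduleColour {k n : ℕ} {cs ds ts : ℕ → ℕ}
    (hs : IsSchedule k n cs ds ts) {i : ℕ} (hi : i ≤ n) :
    Set.InjOn (scheduleColour cs ds ts i) (Set.Iio k) := by
  intro r hr r' hr' h
  have hadm := hs.admissible i hi
  unfold Admissible at hadm
  simp only [Set.mem_Iio] at hr hr'
  unfold scheduleColour at h
  rcases i with _ | j
  · split_ifs at h <;> omega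
  · have := hs.c_ne j (by omega)
    have := hs.eq_of_lt j (by omega)
    simp only [Nat.add_sub_cancel] at h
    split_ifs at h <;> omega

/-- `B i` is the `i`-th clique (empty for `i ≥ q`); `w i` is the cut vertex shared by `B i` and
`B (i + 1)`, except for `w (q - 1)`, the end vertex `u` of the last clique. -/
structure IsCliquePath {V : Type*} (G : SimpleGraph V) (k q : ℕ) (B : ℕ → Finset V)
    (w : ℕ → V) : Prop where
  card_eq : ∀ i < q, #(B i) = k
  isClique : ∀ i, G.IsClique (B i)
  lt_of_mem : ∀ {v i}, v ∈ B i → i < q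
  exists_mem : ∀ v, ∃ i, v ∈ B i
  exists_mem_of_adj : ∀ x y, G.Adj x y → ∃ i, x ∈ B i ∧ y ∈ B i
  mem_self : ∀ i < q, w i ∈ B i
  mem_succ : ∀ i, i + 1 < q → w i ∈ B (i + 1)
  eq_of_mem_of_mem : ∀ {v i j}, i < j → v ∈ B i → v ∈ B j → j = i + 1 ∧ v = w i
  ne_succ : ∀ i, i + 1 < q → w i ≠ w (i + 1)

structure IsScheduleRanking {V : Type*} (B : ℕ → Finset V) (w : ℕ → V) (q : ℕ) (ds ts : ℕ → ℕ)
    (ρ : ℕ → V → ℕ) : Prop extends IsRanking B ρ where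
  apply_self : ∀ i < q, ρ i (w i) = ds i
  apply_succ : ∀ j, j + 1 < q → ρ (j + 1) (w j) = ts (j + 1)

namespace IsCliquePath

variable {V : Type*} {G : SimpleGraph V} {k q : ℕ} {B : ℕ → Finset V} {w : ℕ → V}

theorem eq_of_mem_of_mem_of_ne (hP : IsCliquePath G k q B w) {i j : ℕ} {x y : V}
    (hxi : x ∈ B i) (hyi : y ∈ B i) (hxj : x ∈ B j) (hyj : y ∈ B j) (hxy : x ≠ y) : i = j := by
  by_contra hij
  rcases Nat.lt_or_gt_of_ne hij with h | h
  · exact hxy ((hP.eq_of_mem_of_mem h hxi hxj).2.trans (hP.eq_of_mem_of_mem h hyi hyj).2.symm)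
  · exact hxy ((hP.eq_of_mem_of_mem h hxj hxi).2.trans (hP.eq_of_mem_of_mem h hyj hyi).2.symm)

theorem eq_of_mem_of_ne (hP : IsCliquePath G k q B w) {i j : ℕ} {x : V} (hx : x ∈ B i)
    (hxi : x ≠ w i) (hxi' : 0 < i → x ≠ w (i - 1)) (hxj : x ∈ B j) : j = i := by
  rcases lt_trichotomy j i with h | h | h
  · obtain ⟨rfl, rfl⟩ := hP.eq_of_mem_of_mem h hxj hx
    exact absurd rfl (hxi' j.succ_pos)
  · exact h
  · exact absurd (hP.eq_of_mem_of_mem h hx hxj).2 hxi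

theorem eq_of_mem_last (hP : IsCliquePath G k q B w) {j : ℕ} (hj : w (q - 1) ∈ B j) :
    j = q - 1 := by
  have hjq := hP.lt_of_mem hj
  by_contra hne
  obtain ⟨h1, h2⟩ := hP.eq_of_mem_of_mem (by omega) hj (hP.mem_self (q - 1) (by omega))
  exact hP.ne_succ j (by omega) (by rw [← h1, h2])

theorem mem_iff_of_succ_lt (hP : IsCliquePath G k q B w) {i j : ℕ} (hj : j + 1 < q) :
    w j ∈ B i ↔ i = j ∨ i = j + 1 := by
  refine ⟨fun hi => ?_, ?_⟩
  · rcases lt_trichotomy i j with h | h | h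
    · obtain ⟨rfl, h'⟩ := hP.eq_of_mem_of_mem h hi (hP.mem_self j (by omega))
      exact absurd h'.symm (hP.ne_succ i (by omega))
    · exact .inl h
    · rcases (Nat.succ_le_of_lt h).eq_or_lt with h' | h'
      · exact .inr h'.symm
      · obtain ⟨rfl, h''⟩ := hP.eq_of_mem_of_mem h' (hP.mem_succ j hj) hi
        exact absurd h'' (hP.ne_succ j (by have := hP.lt_of_mem hi; omega))
  · rintro (rfl | rfl)
    exacts [hP.mem_self i (by omega), hP.mem_succ j hj]

theorem exists_cut_or_unique (hP : IsCliquePath G k q B w) (v : V) :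
    (∃ j, j + 1 < q ∧ v = w j) ∨ ∃ i, v ∈ B i ∧ ∀ j, v ∈ B j → j = i := by
  obtain ⟨i, hv⟩ := hP.exists_mem v
  have hi := hP.lt_of_mem hv
  by_cases hcut : (i + 1 < q ∧ v = w i) ∨ (0 < i ∧ v = w (i - 1))
  · rcases hcut with ⟨hi', rfl⟩ | ⟨hi', rfl⟩
    exacts [.inl ⟨i, hi', rfl⟩, .inl ⟨i - 1, by omega, rfl⟩]
  by_cases hvi : v = w i
  · have : ¬ i + 1 < q := fun h => hcut (.inl ⟨h, hvi⟩)
    obtain rfl : i = q - 1 := by omega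
    exact .inr ⟨q - 1, hv, fun j hj => hP.eq_of_mem_last (hvi ▸ hj)⟩
  · exact .inr ⟨i, hv, fun j => hP.eq_of_mem_of_ne hv hvi fun h h' => hcut (.inr ⟨h, h'⟩)⟩

theorem exists_isScheduleRanking (hP : IsCliquePath G k q B w) {cs ds ts : ℕ → ℕ}
    (hs : IsSchedule k (q - 1) cs ds ts) : ∃ ρ, IsScheduleRanking B w q ds ts ρ := by
  classical
  have hds {i} (hi : i < q) : ds i < #(B i) := by
    have := hs.admissible i (by omega)
    have := card_pos.mpr ⟨_, hP.mem_self i hi⟩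
    unfold Admissible at *
    rw [hP.card_eq i hi] at *
    omega
  have hrank (i : ℕ) : ∃ f : V → ℕ, Set.InjOn f (B i) ∧ (∀ x ∈ B i, f x < #(B i)) ∧
      (i < q → f (w i) = ds i) ∧ ∀ j, i = j + 1 → i < q → f (w j) = ts i := by
    by_cases hi : i < q
    swap
    · exact ⟨fun _ => 0, fun x hx => absurd (hP.lt_of_mem hx) hi,
        fun x hx => absurd (hP.lt_of_mem hx) hi, fun h => absurd h hi, fun _ _ h => absurd h hi⟩
    rcases i with _ | j
    · obtain ⟨f, hf, hflt, hfa⟩ := exists_injOn_extend (a := fun _ => ds 0)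
        (singleton_subset_iff.mpr (hP.mem_self 0 hi)) (by simp)
        (by simpa using hds hi)
      exact ⟨f, hf, hflt, fun _ => hfa _ (mem_singleton_self _), fun j h => absurd h (by omega)⟩
    · have hne := hP.ne_succ j hi
      have htd := hs.t_ne j (by omega)
      have htk : ts (j + 1) < #(B (j + 1)) := hP.card_eq _ hi ▸ hs.t_lt j (by omega)
      let a : V → ℕ := fun x => if x = w j then ts (j + 1) else ds (j + 1)
      have ha : Set.InjOn a ({w (j + 1), w j} : Finset V) := by
        intro x hx y hy hxy
        simp only [coe_insert, coe_singleton, Set.mem_insert_iff, Set.mem_singleton_iff] at hx hy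
        rcases hx with rfl | rfl <;> rcases hy with rfl | rfl <;>
          first | rfl | simp [a, hne.symm, htd, Ne.symm htd] at hxy
      obtain ⟨f, hf, hflt, hfa⟩ := exists_injOn_extend
        (insert_subset (hP.mem_self _ hi) (singleton_subset_iff.mpr (hP.mem_succ j hi))) ha
        (by simp [a, hne.symm, hds hi, htk])
      refine ⟨f, hf, hflt, fun _ => by simpa [a, hne.symm] using hfa _ (mem_insert_self _ _), ?_⟩
      rintro j' h -
      obtain rfl : j' = j := by omega
      simpa [a] using hfa (w j') (by simp)
  choose ρ hρinj hρlt hρw hρw' using hrank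
  exact ⟨ρ, ⟨hρinj, hρlt⟩, hρw, fun j hj => hρw' (j + 1) j rfl hj⟩

variable {ρ : ℕ → V → ℕ} {D : Orient G}

theorem inDeg_of_unique [Fintype V] (hP : IsCliquePath G k q B w) (hρ : IsRanking B ρ)
    (hD : D.OrientsByRank B ρ) {v : V} {i : ℕ} (hv : v ∈ B i) (hvi : ∀ j, v ∈ B j → j = i) :
    D.inDeg v = ρ i v := by
  simpa using hD.inDeg_eq_sum hP.eq_of_mem_of_mem_of_ne hρ (s := {i}) fun j =>
    ⟨fun h => mem_singleton.mp h ▸ hv, fun h => mem_singleton.mpr (hvi j h)⟩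

theorem inDeg_cut [Fintype V] (hP : IsCliquePath G k q B w) (hρ : IsRanking B ρ)
    (hD : D.OrientsByRank B ρ) {j : ℕ} (hj : j + 1 < q) :
    D.inDeg (w j) = ρ j (w j) + ρ (j + 1) (w j) := by
  rw [hD.inDeg_eq_sum hP.eq_of_mem_of_mem_of_ne hρ (s := {j, j + 1}) fun i => by
    simp [hP.mem_iff_of_succ_lt hj], sum_pair (by omega)]

theorem inDeg_le [Fintype V] (hP : IsCliquePath G k q B w) (hρ : IsRanking B ρ)
    (hD : D.OrientsByRank B ρ) (v : V) : D.inDeg v ≤ 2 * k - 2 := by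
  have hρk {i x} (hx : x ∈ B i) : ρ i x < k := hP.card_eq i (hP.lt_of_mem hx) ▸ hρ.lt_card i x hx
  rcases hP.exists_cut_or_unique v with ⟨j, hj, rfl⟩ | ⟨i, hv, hvi⟩
  · have := hρk (hP.mem_self j (by omega))
    have := hρk (hP.mem_succ j hj)
    rw [hP.inDeg_cut hρ hD hj]
    omega
  · have := hρk hv
    rw [hP.inDeg_of_unique hρ hD hv hvi]
    omega

theorem colour_eq_scheduleColour [Fintype V] [DecidableEq V] (hP : IsCliquePath G k q B w)
    {cs ds ts : ℕ → ℕ} (hs : IsSchedule k (q - 1) cs ds ts) (hρ : IsScheduleRanking B w q ds ts ρ)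
    (hD : D.OrientsByRank B ρ) {i : ℕ} {x : V} (hx : x ∈ B i) :
    (if x = w (q - 1) then cs (q - 1) else D.inDeg x) = scheduleColour cs ds ts i (ρ i x) := by
  have hi := hP.lt_of_mem hx
  have inDeg_cut {j} (hj : j + 1 < q) : D.inDeg (w j) = cs j := by
    rw [hP.inDeg_cut hρ.toIsRanking hD hj, hρ.apply_self j (by omega), hρ.apply_succ j hj,
      hs.c_eq j (by omega)]
  have hlast {j} (hj : j + 1 < q) : w j ≠ w (q - 1) := fun h =>
    absurd (hP.eq_of_mem_last (h ▸ hP.mem_self j (by omega))) (by omega)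
  by_cases hxi : x = w i
  · subst hxi
    rw [hρ.apply_self i hi, scheduleColour, if_pos rfl]
    rcases (Nat.le_sub_one_of_lt hi).eq_or_lt with rfl | hi'
    · exact if_pos rfl
    · rw [if_neg (hlast (by omega)), inDeg_cut (by omega)]
  by_cases hxi' : 0 < i ∧ x = w (i - 1)
  · obtain ⟨hi0, rfl⟩ := hxi'
    obtain ⟨j, rfl⟩ : ∃ j, i = j + 1 := ⟨i - 1, by omega⟩
    simp only [Nat.add_sub_cancel]
    rw [if_neg (hlast hi), inDeg_cut hi, hρ.apply_succ j hi, scheduleColour,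
      if_neg (hs.t_ne j (by omega)), if_pos ⟨hi0, rfl⟩, Nat.add_sub_cancel]
  have hxu : ∀ j, x ∈ B j → j = i := fun j =>
    hP.eq_of_mem_of_ne hx hxi fun h h' => hxi' ⟨h, h'⟩
  have hxl : x ≠ w (q - 1) := fun h => hxi (by rw [h, hP.eq_of_mem_last (j := i) (h ▸ hx)])
  rw [if_neg hxl, hP.inDeg_of_unique hρ.toIsRanking hD hx hxu, scheduleColour, if_neg, if_neg]
  · rintro ⟨hi0, h⟩
    obtain ⟨j, rfl⟩ : ∃ j, i = j + 1 := ⟨i - 1, by omega⟩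
    exact hxi' ⟨hi0, by
      simpa using hρ.injOn _ hx (hP.mem_succ j hi) (h.trans (hρ.apply_succ j hi).symm)⟩
  · exact fun h => hxi (hρ.injOn i hx (hP.mem_self i hi) (h.trans (hρ.apply_self i hi).symm))

theorem exists_compensated_orientation [Fintype V] [DecidableEq V]
    (hP : IsCliquePath G k q B w) (hk : 3 ≤ k) {c d : ℕ} (h : Admissible k c d) :
    ∃ D : Orient G, (∀ v, D.inDeg v ≤ 2 * k - 2) ∧ D.CompensatedProper c d (w (q - 1)) := by
  have hq : 0 < q := Nat.zero_lt_of_lt (hP.lt_of_mem (hP.exists_mem (w 0)).choose_spec)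
  obtain ⟨cs, ds, ts, hs, rfl, rfl⟩ := exists_isSchedule hk h (q - 1)
  obtain ⟨ρ, hρ⟩ := hP.exists_isScheduleRanking hs
  obtain ⟨D, hD⟩ :=
    exists_orientsByRank hP.isClique hP.exists_mem_of_adj hP.eq_of_mem_of_mem_of_ne hρ.injOn
  refine ⟨D, hP.inDeg_le hρ.toIsRanking hD, ?_, fun x y hxy => ?_⟩
  · rw [hP.inDeg_of_unique hρ.toIsRanking hD (hP.mem_self _ (by omega))
      fun j => hP.eq_of_mem_last, hρ.apply_self _ (by omega)]
  · obtain ⟨i, hx, hy⟩ := hP.exists_mem_of_adj x y hxy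
    have hρk {z} (hz : z ∈ B i) : ρ i z ∈ Set.Iio k :=
      hP.card_eq i (hP.lt_of_mem hz) ▸ hρ.lt_card i z hz
    rw [hP.colour_eq_scheduleColour hs hρ hD hx, hP.colour_eq_scheduleColour hs hρ hD hy]
    exact (hs.injOn_scheduleColour (by have := hP.lt_of_mem hx; omega)).ne (hρk hx) (hρk hy)
      ((hρ.injOn i).ne hx hy hxy.ne)

end IsCliquePath

def cliqueSeq {V : Type*} {q : ℕ} (C : Fin q → Finset V) (i : ℕ) : Finset V :=
  if h : i < q then C ⟨i, h⟩ else ∅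

section PathBlockSeq

variable {V : Type*} {q : ℕ} {C : Fin q → Finset V}

theorem cliqueSeq_of_lt {i : ℕ} (h : i < q) : cliqueSeq C i = C ⟨i, h⟩ := dif_pos h

theorem cliqueSeq_fin (i : Fin q) : cliqueSeq C i = C i := cliqueSeq_of_lt i.2

theorem lt_of_mem_cliqueSeq {v : V} {i : ℕ} (hv : v ∈ cliqueSeq C i) : i < q := by
  by_contra h
  simp [cliqueSeq, h] at hv

variable [DecidableEq V] {G : SimpleGraph V} {k : ℕ}

theorem IsPathBlockSeq.isClique_cliqueSeq (hC : IsPathBlockSeq G k C) (i : ℕ) :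
    G.IsClique (cliqueSeq C i) := by
  by_cases h : i < q
  · exact cliqueSeq_of_lt h ▸ hC.clique _
  · simp [cliqueSeq, h]

theorem IsPathBlockSeq.card_inter_cliqueSeq (hC : IsPathBlockSeq G k C) {i : ℕ} (hi : i + 1 < q) :
    #(cliqueSeq C i ∩ cliqueSeq C (i + 1)) = 1 := by
  rw [cliqueSeq_of_lt (by omega), cliqueSeq_of_lt hi]
  exact hC.consec _ _ rfl

theorem IsPathBlockSeq.eq_succ_of_mem_cliqueSeq (hC : IsPathBlockSeq G k C) {v : V} {i j : ℕ}
    (hij : i < j) (hvi : v ∈ cliqueSeq C i) (hvj : v ∈ cliqueSeq C j) : j = i + 1 := by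
  have hj := lt_of_mem_cliqueSeq hvj
  by_contra hji
  have h := hC.apart ⟨i, by omega⟩ ⟨j, hj⟩ (by simp only; omega)
  rw [← cliqueSeq_of_lt (C := C), ← cliqueSeq_of_lt (C := C)] at h
  exact notMem_empty v (h ▸ mem_inter.mpr ⟨hvi, hvj⟩)

theorem IsPathBlockSeq.isCutVertex_of_mem_inter [Finite V] (hC : IsPathBlockSeq G k C)
    (hk : 2 ≤ k) {i : ℕ} (hi : i + 2 = q) {u : V}
    (hu : u ∈ cliqueSeq C i ∩ cliqueSeq C (i + 1)) : IsCutVertex G u := by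
  have hinter := card_le_one.mp (hC.card_inter_cliqueSeq (i := i) (by omega)).le
  obtain ⟨hui, hui'⟩ := mem_inter.mp hu
  obtain ⟨x, hx, hxu⟩ := exists_mem_ne (by rw [cliqueSeq_of_lt (by omega), hC.card_eq]; omega :
    1 < #(cliqueSeq C (i + 1))) u
  obtain ⟨y, hy, hyu⟩ := exists_mem_ne (by rw [cliqueSeq_of_lt (by omega), hC.card_eq]; omega :
    1 < #(cliqueSeq C i)) u
  refine isCutVertex_of_separated (cliqueSeq C (i + 1) : Set V) (fun b b' hb hbu _ hbb' => ?_) hx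
    (fun hy' => hyu (hinter y (mem_inter.mpr ⟨hy, hy'⟩) u hu))
    (hC.isClique_cliqueSeq _ hx hui' hxu) (hC.isClique_cliqueSeq _ hui hy hyu.symm)
  obtain ⟨j, hbj, hb'j⟩ := hC.edge_mem b b' hbb'
  rw [← cliqueSeq_fin (C := C)] at hbj hb'j
  rcases lt_trichotomy (j : ℕ) (i + 1) with h | h | h
  · obtain rfl : (j : ℕ) = i := by have := hC.eq_succ_of_mem_cliqueSeq h hbj hb; omega
    exact absurd (hinter b (mem_inter.mpr ⟨hbj, hb⟩) u hu) hbu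
  · exact h ▸ hb'j
  · exact absurd j.2 (by omega)

theorem IsPathBlockSeq.exists_isCliquePath [Finite V] (hC : IsPathBlockSeq G k C) (hk : 2 ≤ k)
    (hq : 0 < q) {u : V} (hu : u ∈ C ⟨q - 1, Nat.sub_lt hq one_pos⟩) (hcut : ¬ IsCutVertex G u) :
    ∃ B w, IsCliquePath G k q B w ∧ w (q - 1) = u := by
  have : Nonempty V := ⟨u⟩
  choose! a ha using fun i (hi : i + 1 < q) => card_eq_one.mp (hC.card_inter_cliqueSeq hi)
  have mem_a {i} (hi : i + 1 < q) : a i ∈ cliqueSeq C i ∧ a i ∈ cliqueSeq C (i + 1) :=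
    mem_inter.mp (ha i hi ▸ mem_singleton_self _)
  let w i := if i + 1 < q then a i else u
  have hw {i} (hi : i + 1 < q) : w i = a i := if_pos hi
  refine ⟨cliqueSeq C, w, ⟨fun i hi => cliqueSeq_of_lt hi ▸ hC.card_eq _, hC.isClique_cliqueSeq,
    lt_of_mem_cliqueSeq, fun v => ?_, fun x y hxy => ?_, fun i hi => ?_,
    fun i hi => hw hi ▸ (mem_a hi).2, fun hij hvi hvj => ?_, fun i hi => ?_⟩, if_neg (by omega)⟩
  · obtain ⟨i, hi⟩ := hC.cover v
    exact ⟨i, cliqueSeq_fin i ▸ hi⟩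
  · obtain ⟨i, hx, hy⟩ := hC.edge_mem x y hxy
    exact ⟨i, cliqueSeq_fin i ▸ hx, cliqueSeq_fin i ▸ hy⟩
  · by_cases h : i + 1 < q
    · exact hw h ▸ (mem_a h).1
    · obtain rfl : i = q - 1 := by omega
      rw [cliqueSeq_of_lt hi, show w (q - 1) = u from if_neg h]
      exact hu
  · obtain rfl := hC.eq_succ_of_mem_cliqueSeq hij hvi hvj
    have hj := lt_of_mem_cliqueSeq hvj
    exact ⟨rfl, hw hj ▸ mem_singleton.mp (ha _ hj ▸ mem_inter.mpr ⟨hvi, hvj⟩)⟩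
  · rw [hw hi]
    by_cases h : i + 2 < q
    · rw [hw h]
      intro he
      apply hC.cut_distinct ⟨i, by omega⟩ ⟨i + 1, hi⟩ ⟨i + 2, h⟩ rfl rfl
      rw [← cliqueSeq_of_lt (C := C), ← cliqueSeq_of_lt (C := C), ← cliqueSeq_of_lt (C := C),
        ha i hi, ha (i + 1) h, he]
    · rw [show w (i + 1) = u from if_neg h]
      rintro rfl
      exact hcut (hC.isCutVertex_of_mem_inter hk (by omega) (ha i hi ▸ mem_singleton_self _))

end PathBlockSeq

/-- For `k ≥ 3`, a `k`-uniform path block graph `G` with clique sequence `C1, …, Cq`,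
a non-cut-vertex `u` of the last clique, and integers `c ≥ 1`, `d ≥ 0` with either
`c > k - 1 ≥ d` or `c = d = k - 1`, there is a proper `max c (2k-2)`-orientation of `G`
compensated by `(c, d, u)`. -/
theorem pathBlockGraph_compensated_orientation {V : Type*} [Fintype V] [DecidableEq V]
    (G : SimpleGraph V) (k : ℕ) (hk : 3 ≤ k) {q : ℕ} (hq : 0 < q)
    (C : Fin q → Finset V) (hC : IsPathBlockSeq G k C)
    (u : V) (hu : u ∈ C ⟨q - 1, by omega⟩) (hcut : ¬ IsCutVertex G u)
    (c d : ℕ)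
    (hcd : (k - 1 < c ∧ d ≤ k - 1) ∨ (c = k - 1 ∧ d = k - 1)) :
    ∃ D : Orient G, (∀ v, D.inDeg v ≤ max c (2 * k - 2)) ∧
      D.CompensatedProper c d u := by
  obtain ⟨B, w, hP, rfl⟩ := hC.exists_isCliquePath (by omega) hq hu hcut
  obtain ⟨D, hdeg, hD⟩ := hP.exists_compensated_orientation hk hcd
  exact ⟨D, fun v => (hdeg v).trans (le_max_right _ _), hD⟩
end

section
/- For every integer k ≥ 2, there exists a connected k-uniform block graph G in which each block contains at most two cut-vertices of G and such that χ⃗(G) ≥ k + 1. -/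
open SimpleGraph

/-- A block of `G`: a maximal vertex set inducing a connected subgraph with no cut-vertex
(this covers maximal 2-connected subgraphs, bridges and isolated vertices). -/
def IsBlock {V : Type*} (G : SimpleGraph V) (B : Set V) : Prop :=
  (G.induce B).Connected ∧ (∀ v : B, ¬ IsCutVertex (G.induce B) v) ∧
  ∀ B' : Set V, B ⊆ B' → (G.induce B').Connected →
    (∀ v : B', ¬ IsCutVertex (G.induce B') v) → B' = B

/-! Write `k = m + 2` and let `D` be a proper orientation of maximum in-degree at most `k`.
In a `k`-clique all of whose vertices have in-degree below `k`, the in-degrees are exactly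
`0, …, k - 1`, so their sum is already the number of arcs inside the clique and no arc enters it.
Hence a vertex lying in two pendant `k`-cliques has in-degree `0` or `k`. The two centres of the
construction are such vertices and adjacent, so one of them has in-degree `k`; the hubs next to it
then have in-degree `0`, which forces each of its `k + 1` chain cliques to send it an arc. -/

open Finset

namespace Orient

variable {V : Type*} {G : SimpleGraph V}

lemma ne_of_dir (D : Orient G) {u v : V} (h : D.dir u v = true) : u ≠ v :=
  (D.adj_of_dir u v h).ne

lemma not_dir_of_dir (D : Orient G) {u v : V} (h : D.dir u v = true) : D.dir v u ≠ true :=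
  (D.dir_iff u v (D.adj_of_dir u v h)).1 h

lemma dir_of_not_dir (D : Orient G) {u v : V} (hadj : G.Adj u v) (h : D.dir u v ≠ true) :
    D.dir v u = true := by
  by_contra h'
  exact h ((D.dir_iff u v hadj).2 h')

def inDegOn (D : Orient G) (s : Finset V) (v : V) : ℕ :=
  #{u ∈ s | D.dir u v = true}

lemma inDegOn_le_inDeg [Fintype V] (D : Orient G) (s : Finset V) (v : V) :
    D.inDegOn s v ≤ D.inDeg v :=
  card_le_card fun u hu => by simp only [mem_filter, mem_univ, true_and] at hu ⊢; exact hu.2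

lemma inDegOn_lt_card (D : Orient G) {s : Finset V} {v : V} (hv : v ∈ s) :
    D.inDegOn s v < #s :=
  card_lt_card <| filter_ssubset.2 ⟨v, hv, fun h => D.ne_of_dir h rfl⟩

lemma inDeg_eq_inDegOn [Fintype V] (D : Orient G) {s : Finset V} {v : V}
    (hs : ∀ u, G.Adj u v → u ∈ s) : D.inDeg v = D.inDegOn s v := by
  unfold inDeg inDegOn
  congr 1
  ext u
  simpa using fun h => hs u (D.adj_of_dir u v h)

lemma sum_inDegOn_le_inDeg [Fintype V] [DecidableEq V] {ι : Type*} (D : Orient G) (I : Finset ι)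
    (s : ι → Finset V) {v : V} (hs : (I : Set ι).Pairwise fun i j => s i ∩ s j ⊆ {v}) :
    ∑ i ∈ I, D.inDegOn (s i) v ≤ D.inDeg v := by
  unfold inDegOn
  rw [← card_biUnion]
  · exact card_le_card fun u hu => by
      obtain ⟨i, -, hu⟩ := mem_biUnion.1 hu
      simpa using (mem_filter.1 hu).2
  · intro i hi j hj hij
    refine disjoint_left.2 fun u hui huj => ?_
    simp only [mem_filter] at hui huj
    exact D.ne_of_dir hui.2 (mem_singleton.1 (hs hi hj hij (mem_inter.2 ⟨hui.1, huj.1⟩)))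

lemma inDegOn_add_outDegOn {s : Finset V} (hs : G.IsClique (s : Set V)) (D : Orient G) {v : V}
    (hv : v ∈ s) : D.inDegOn s v + #{u ∈ s | D.dir v u = true} = #s - 1 := by
  classical
  rw [inDegOn, ← card_union_of_disjoint, ← card_erase_of_mem hv]
  · congr 1
    ext u
    simp only [mem_union, mem_filter, mem_erase]
    constructor
    · rintro (⟨hu, h⟩ | ⟨hu, h⟩)
      exacts [⟨D.ne_of_dir h, hu⟩, ⟨(D.ne_of_dir h).symm, hu⟩]
    · rintro ⟨huv, hu⟩
      by_cases h : D.dir u v = true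
      · exact Or.inl ⟨hu, h⟩
      · exact Or.inr ⟨hu, D.dir_of_not_dir (hs hu hv huv) h⟩
  · exact disjoint_filter.2 fun u _ h => D.not_dir_of_dir h

lemma sum_inDegOn_of_isClique {s : Finset V} (hs : G.IsClique (s : Set V)) (D : Orient G) :
    ∑ v ∈ s, D.inDegOn s v = ∑ i ∈ range #s, i := by
  have hcount : ∑ v ∈ s, D.inDegOn s v = ∑ v ∈ s, #{u ∈ s | D.dir v u = true} := by
    simp only [inDegOn, card_filter]
    exact sum_comm
  have htotal : ∑ v ∈ s, D.inDegOn s v * 2 = #s * (#s - 1) := by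
    rw [← sum_mul, mul_two]
    nth_rw 2 [hcount]
    rw [← sum_add_distrib, sum_congr rfl fun v hv => inDegOn_add_outDegOn hs D hv,
      sum_const, smul_eq_mul]
  have := sum_range_id_mul_two #s
  rw [← sum_mul] at htotal
  omega

namespace Proper

variable [Fintype V] {D : Orient G}

lemma injOn_inDeg (hD : D.Proper) {s : Set V} (hs : G.IsClique s) : Set.InjOn D.inDeg s :=
  fun u hu v hv h => by_contra fun huv => hD u v (hs hu hv huv) h

/-- The in-degrees on `s` are then exactly `0, …, #s - 1`, which add up to the number of arcs
inside `s`. -/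
lemma inDegOn_eq_inDeg (hD : D.Proper) {s : Finset V} (hs : G.IsClique (s : Set V))
    (hlt : ∀ v ∈ s, D.inDeg v < #s) : ∀ v ∈ s, D.inDegOn s v = D.inDeg v := by
  classical
  have himage : s.image D.inDeg = range #s := by
    refine eq_of_subset_of_card_le (fun t ht => ?_) ?_
    · obtain ⟨v, hv, rfl⟩ := mem_image.1 ht
      exact mem_range.2 (hlt v hv)
    · rw [card_image_of_injOn (hD.injOn_inDeg hs), card_range]
  have hsum : ∑ v ∈ s, D.inDegOn s v = ∑ v ∈ s, D.inDeg v := by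
    rw [sum_inDegOn_of_isClique hs, ← himage, sum_image (hD.injOn_inDeg hs)]
  exact (sum_eq_sum_iff_of_le fun v _ => D.inDegOn_le_inDeg s v).1 hsum

/-- The in-degrees on `s \ {x}` are distinct values below `#s` including `0`, so they miss a
positive value and sum to less than the number of arcs inside `s`. -/
lemma inDegOn_pos (hD : D.Proper) {s : Finset V} (hs : G.IsClique (s : Set V)) {x y : V}
    (hx : x ∈ s) (hy : y ∈ s) (hyx : y ≠ x) (hy0 : D.inDeg y = 0)
    (hlt : ∀ v ∈ s, v ≠ x → D.inDeg v < #s) : 0 < D.inDegOn s x := by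
  classical
  have hinj : Set.InjOn D.inDeg (s.erase x) :=
    (hD.injOn_inDeg hs).mono (coe_subset.2 (erase_subset x s))
  set t := (s.erase x).image D.inDeg
  have hts : t ⊆ range #s := fun i hi => by
    obtain ⟨v, hv, rfl⟩ := mem_image.1 hi
    exact mem_range.2 (hlt v (mem_of_mem_erase hv) (ne_of_mem_erase hv))
  have hcard : #t < #(range #s) := by
    rw [card_image_of_injOn hinj, card_erase_of_mem hx, card_range]
    have := card_pos.2 ⟨x, hx⟩
    omega
  obtain ⟨z, hz, hzt⟩ := exists_mem_notMem_of_card_lt_card hcard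
  have hz0 : z ≠ 0 := by
    rintro rfl
    exact hzt (mem_image.2 ⟨y, mem_erase.2 ⟨hyx, hy⟩, hy0⟩)
  have hmiss : ∑ i ∈ t, i < ∑ i ∈ range #s, i :=
    sum_lt_sum_of_subset hts hz hzt (Nat.pos_of_ne_zero hz0) fun _ _ _ => Nat.zero_le _
  have hrest : ∑ v ∈ s.erase x, D.inDegOn s v ≤ ∑ i ∈ t, i := by
    rw [sum_image hinj]
    exact sum_le_sum fun v _ => D.inDegOn_le_inDeg s v
  rw [← sum_inDegOn_of_isClique hs D, ← add_sum_erase s _ hx] at hmiss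
  omega

lemma inDeg_eq_zero_of_cliques [DecidableEq V] (hD : D.Proper) {ι : Type*} (I : Finset ι)
    (hI : 2 ≤ #I) (s : ι → Finset V) {x : V} (hs : ∀ i ∈ I, G.IsClique (s i : Set V))
    (hx : ∀ i ∈ I, x ∈ s i) (hinter : (I : Set ι).Pairwise fun i j => s i ∩ s j ⊆ {x})
    (hlt : ∀ i ∈ I, ∀ v ∈ s i, D.inDeg v < #(s i)) : D.inDeg x = 0 := by
  have h := D.sum_inDegOn_le_inDeg I s hinter
  rw [sum_congr rfl fun i hi => hD.inDegOn_eq_inDeg (hs i hi) (hlt i hi) x (hx i hi), sum_const,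
    smul_eq_mul] at h
  nlinarith

end Proper

def reverse [DecidableEq V] (D : Orient G) {u v : V} (huv : D.dir u v = true) : Orient G where
  dir x y := if x = v ∧ y = u then true else if x = u ∧ y = v then false else D.dir x y
  adj_of_dir x y h := by
    split_ifs at h with h₁
    · obtain ⟨rfl, rfl⟩ := h₁
      exact (D.adj_of_dir _ _ huv).symm
    · exact D.adj_of_dir x y h
  dir_iff x y hxy := by
    have hne := D.ne_of_dir huv
    by_cases h₁ : x = v ∧ y = u
    · obtain ⟨rfl, rfl⟩ := h₁
      simp [hne]
    by_cases h₂ : x = u ∧ y = v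
    · obtain ⟨rfl, rfl⟩ := h₂
      simp [hne, hne.symm]
    have h₁' : ¬ (y = u ∧ x = v) := fun h => h₁ ⟨h.2, h.1⟩
    have h₂' : ¬ (y = v ∧ x = u) := fun h => h₂ ⟨h.2, h.1⟩
    simp only [h₁, h₂, h₁', h₂', if_false]
    exact D.dir_iff x y hxy

section reverse

variable [Fintype V] [DecidableEq V] (D : Orient G) {u v : V} (huv : D.dir u v = true)

lemma inDeg_reverse_tail : (D.reverse huv).inDeg u = D.inDeg u + 1 := by
  have hne := D.ne_of_dir huv
  rw [inDeg, inDeg, ← card_insert_of_notMem (by simpa using D.not_dir_of_dir huv)]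
  congr 1
  ext x
  by_cases hx : x = v <;> simp [reverse, hx, hne]

lemma inDeg_reverse_head : (D.reverse huv).inDeg v + 1 = D.inDeg v := by
  have hne := D.ne_of_dir huv
  rw [inDeg, inDeg,
    ← card_erase_add_one (s := {x | D.dir x v = true}) (a := u) (by simpa using huv)]
  congr 2
  ext x
  by_cases hx : x = u <;> simp [reverse, hx, hne.symm]

lemma inDeg_reverse_of_ne {w : V} (hwu : w ≠ u) (hwv : w ≠ v) :
    (D.reverse huv).inDeg w = D.inDeg w := by
  unfold inDeg
  congr 1
  ext x
  simp [reverse, hwu, hwv]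

/-- Reversing `u → v` adds `2 (d⁻(u) - d⁻(v) + 1)` to `∑ d⁻(w)²`. -/
lemma sum_inDeg_sq_reverse :
    ∑ w, (D.reverse huv).inDeg w ^ 2 + 2 * D.inDeg v =
      ∑ w, D.inDeg w ^ 2 + 2 * D.inDeg u + 2 := by
  have hne := D.ne_of_dir huv
  have hdiff : ∑ w, (((D.reverse huv).inDeg w : ℤ) ^ 2 - (D.inDeg w : ℤ) ^ 2) =
      (((D.reverse huv).inDeg u : ℤ) ^ 2 - (D.inDeg u : ℤ) ^ 2) +
        (((D.reverse huv).inDeg v : ℤ) ^ 2 - (D.inDeg v : ℤ) ^ 2) :=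
    sum_eq_add_of_mem u v (mem_univ u) (mem_univ v) hne fun w _ hw => by
      rw [D.inDeg_reverse_of_ne huv hw.1 hw.2, sub_self]
  have htail := D.inDeg_reverse_tail huv
  have hhead := D.inDeg_reverse_head huv
  rw [sum_sub_distrib, htail, ← hhead] at hdiff
  rw [← hhead]
  zify
  push_cast at hdiff ⊢
  linear_combination hdiff

end reverse

/-- An orientation maximising `∑ d⁻(v)²` is proper: reversing an arc between two vertices of
equal in-degree would increase the sum by `2`. -/
lemma exists_proper [Fintype V] : ∃ D : Orient G, D.Proper := by
  classical
  have : Finite (Orient G) := Finite.of_injective Orient.dir fun D E h => by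
    cases D; cases E; cases h; rfl
  let _ : LinearOrder V := WellOrderingRel.isWellOrder.linearOrder
  have : Nonempty (Orient G) := ⟨{
    dir := fun x y => decide (G.Adj x y ∧ x < y)
    adj_of_dir := fun x y h => (of_decide_eq_true h).1
    dir_iff := fun x y hxy => by
      simp only [decide_eq_true_eq, hxy, hxy.symm, true_and, not_lt]
      exact ⟨le_of_lt, fun h => lt_of_le_of_ne h hxy.ne⟩ }⟩
  obtain ⟨D, hD⟩ := Finite.exists_max fun D : Orient G => ∑ w, D.inDeg w ^ 2
  refine ⟨D, fun u v huv heq => ?_⟩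
  obtain ⟨a, b, hab, habeq⟩ : ∃ a b, D.dir a b = true ∧ D.inDeg a = D.inDeg b := by
    by_cases h : D.dir u v = true
    · exact ⟨u, v, h, heq⟩
    · exact ⟨v, u, D.dir_of_not_dir huv h, heq.symm⟩
  have := D.sum_inDeg_sq_reverse hab
  have := hD (D.reverse hab)
  omega

end Orient

lemma le_properOrientNum {V : Type*} [Fintype V] {G : SimpleGraph V} {n : ℕ}
    (h : ∀ D : Orient G, D.Proper → ∃ v, n ≤ D.inDeg v) : n ≤ properOrientNum G := by
  obtain ⟨D₀, hD₀⟩ := Orient.exists_proper (G := G)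
  refine le_csInf ⟨Fintype.card V, D₀, hD₀, fun v => ?_⟩ ?_
  · exact (card_filter_le _ _).trans_eq card_univ
  · rintro k ⟨D, hD, hk⟩
    obtain ⟨v, hv⟩ := h D hD
    exact hv.trans (hk v)

namespace SimpleGraph

variable {V : Type*} {G : SimpleGraph V}

lemma Connected.natCard_connectedComponent (hG : G.Connected) :
    Nat.card G.ConnectedComponent = 1 := by
  have := hG.preconnected.subsingleton_connectedComponent
  have : Nonempty G.ConnectedComponent := ⟨G.connectedComponentMk hG.nonempty.some⟩
  exact Nat.card_unique

lemma Reachable.iff_of_forall_adj {P : V → Prop} (hP : ∀ x y, G.Adj x y → (P x ↔ P y))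
    {x y : V} (h : G.Reachable x y) : P x ↔ P y := by
  obtain ⟨W⟩ := h
  induction W with
  | nil => rfl
  | cons hxy _ ih => exact (hP _ _ hxy).trans ih

lemma not_isCutVertex_of_preconnected (hG : G.Connected) {v : V}
    (h : (G.induce {u | u ≠ v}).Preconnected) : ¬ IsCutVertex G v := by
  have := h.subsingleton_connectedComponent
  rw [IsCutVertex, hG.natCard_connectedComponent, not_lt]
  exact Finite.card_le_one_iff_subsingleton.2 this

lemma Walk.exists_adj_reachable_induce {a b : V} (W : G.Walk a b) (hab : a ≠ b) :
    ∃ u, ∃ hu : u ≠ b, G.Adj u b ∧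
      (G.induce {x | x ≠ b}).Reachable ⟨a, hab⟩ ⟨u, hu⟩ := by
  induction W with
  | nil => exact absurd rfl hab
  | @cons a c b hac W ih =>
    by_cases hcb : c = b
    · subst hcb
      exact ⟨a, hab, hac, .rfl⟩
    · obtain ⟨u, hu, hub, hcu⟩ := ih hcb
      refine ⟨u, hu, hub, Adj.reachable ?_ |>.trans hcu⟩
      simpa using hac

/-- A walk through `v` can be short-cut between the two neighbours of `v` on it. -/
lemma not_isCutVertex_of_isClique_neighborSet (hG : G.Connected) {v : V}
    (hv : G.IsClique (G.neighborSet v)) : ¬ IsCutVertex G v := by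
  refine not_isCutVertex_of_preconnected hG fun ⟨a, ha⟩ ⟨b, hb⟩ => ?_
  obtain ⟨W⟩ := hG.preconnected a v
  obtain ⟨W'⟩ := hG.preconnected b v
  obtain ⟨u, hu, huv, hau⟩ := W.exists_adj_reachable_induce ha
  obtain ⟨w, hw, hwv, hbw⟩ := W'.exists_adj_reachable_induce hb
  refine hau.trans (Reachable.trans ?_ hbw.symm)
  by_cases huw : u = w
  · subst huw
    rfl
  · exact Adj.reachable (by simpa using hv huv.symm hwv.symm huw)

lemma IsClique.connected_induce {s : Set V} (hs : G.IsClique s) (hne : s.Nonempty) :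
    (G.induce s).Connected := by
  have := hne.to_subtype
  rw [induce_eq_top.2 hs]
  exact connected_top

lemma IsClique.not_isCutVertex_induce {s : Set V} (hs : G.IsClique s) (hne : s.Nonempty)
    (v : s) : ¬ IsCutVertex (G.induce s) v :=
  not_isCutVertex_of_isClique_neighborSet (hs.connected_induce hne) fun x _ y _ hxy => by
    simpa using hs x.2 y.2 (Subtype.coe_injective.ne hxy)

lemma subset_insert_of_separates [Finite V] {S : Set V} (hS : (G.induce S).Connected)
    (hS' : ∀ v : S, ¬ IsCutVertex (G.induce S) v) {w : V} {P : V → Prop}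
    (hP : ∀ x y, G.Adj x y → x ≠ w → y ≠ w → (P x ↔ P y)) {a : V} (ha : a ∈ S)
    (haw : a ≠ w) (hPa : P a) : S ⊆ insert w {x | P x} := by
  intro b hb
  by_contra hb'
  have hbw : b ≠ w := fun h => hb' (Or.inl h)
  have hPb : ¬ P b := fun h => hb' (Or.inr h)
  by_cases hw : w ∈ S
  · apply hS' ⟨w, hw⟩
    rw [IsCutVertex, hS.natCard_connectedComponent]
    set K := (G.induce S).induce {u | u ≠ ⟨w, hw⟩}
    have hK : ∀ x y, K.Adj x y → (P x.1.1 ↔ P y.1.1) := fun x y hxy =>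
      hP _ _ hxy (fun h => x.2 (Subtype.ext h)) (fun h => y.2 (Subtype.ext h))
    have hab : K.connectedComponentMk ⟨⟨a, ha⟩, by simpa [Subtype.ext_iff]⟩ ≠
        K.connectedComponentMk ⟨⟨b, hb⟩, by simpa [Subtype.ext_iff]⟩ := fun h =>
      hPb (((ConnectedComponent.exact h).iff_of_forall_adj hK).1 hPa)
    exact Finite.one_lt_card_iff_nontrivial.2 ⟨_, _, hab⟩
  · have hG : ∀ x y, (G.induce S).Adj x y → (P x.1 ↔ P y.1) := fun x y hxy =>
      hP _ _ hxy (fun h => hw (h ▸ x.2)) (fun h => hw (h ▸ y.2))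
    exact hPb (((hS.preconnected ⟨a, ha⟩ ⟨b, hb⟩).iff_of_forall_adj hG).1 hPa)

end SimpleGraph

/-! The graph for `k = m + 2`, as the union of the cliques `Part.verts`: the base clique holds the
two centres, each centre `b` lies in the chain cliques `Part.chain b j` (`j < k + 1`) and in two
pendant cliques, and the hub of each chain clique lies in two pendant cliques of its own. -/
namespace BlockGraphConstruction

inductive Vert (m : ℕ) : Type
  | center : Bool → Vert m
  | base : Fin m → Vert m
  | hub : Bool → Fin (m + 3) → Vert m
  | chain : Bool → Fin (m + 3) → Fin m → Vert m
  | centerLeaf : Bool → Fin 2 → Fin (m + 1) → Vert m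
  | hubLeaf : Bool → Fin (m + 3) → Fin 2 → Fin (m + 1) → Vert m
  deriving DecidableEq, Fintype

inductive Part (m : ℕ) : Type
  | base : Part m
  | chain : Bool → Fin (m + 3) → Part m
  | centerLeaf : Bool → Fin 2 → Part m
  | hubLeaf : Bool → Fin (m + 3) → Fin 2 → Part m

variable {m : ℕ}

def Part.mem : Part m → Vert m → Bool
  | .base, .center _ => true
  | .base, .base _ => true
  | .chain b _, .center b' => b' == b
  | .chain b j, .hub b' j' => b' == b && j' == j
  | .chain b j, .chain b' j' _ => b' == b && j' == j
  | .centerLeaf b _, .center b' => b' == b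
  | .centerLeaf b l, .centerLeaf b' l' _ => b' == b && l' == l
  | .hubLeaf b j _, .hub b' j' => b' == b && j' == j
  | .hubLeaf b j l, .hubLeaf b' j' l' _ => b' == b && j' == j && l' == l
  | _, _ => false

def Part.verts (i : Part m) : Finset (Vert m) := {v | i.mem v}

@[simp] lemma Part.mem_verts {i : Part m} {v : Vert m} : v ∈ i.verts ↔ i.mem v := by
  simp [Part.verts]

/-- The cut-vertices of `graph m`. -/
def Vert.IsJoint : Vert m → Prop
  | .center _ => True
  | .hub _ _ => True
  | _ => False

variable (m) in
def graph : SimpleGraph (Vert m) where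
  Adj x y := x ≠ y ∧ ∃ i : Part m, i.mem x ∧ i.mem y
  symm := ⟨fun _ _ ⟨h, i, hx, hy⟩ => ⟨h.symm, i, hy, hx⟩⟩
  loopless := ⟨fun _ h => h.1 rfl⟩

lemma adj_of_mem {i : Part m} {x y : Vert m} (hx : i.mem x) (hy : i.mem y) (hxy : x ≠ y) :
    (graph m).Adj x y :=
  ⟨hxy, i, hx, hy⟩

lemma isClique_verts (i : Part m) : (graph m).IsClique (i.verts : Set (Vert m)) :=
  fun _ hx _ hy hxy => adj_of_mem (by simpa using hx) (by simpa using hy) hxy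

lemma card_verts (i : Part m) : #i.verts = m + 2 := by
  cases i with
  | base =>
    rw [show Part.base.verts = insert (.center false) (insert (.center true) (univ.image .base)) by
      ext v; cases v <;> simp [Part.mem]]
    rw [card_insert_of_notMem (by simp), card_insert_of_notMem (by simp),
      card_image_of_injective _ fun _ _ h => by injection h]
    simp
  | chain b j =>
    rw [show (Part.chain b j).verts = insert (.center b) (insert (.hub b j)
        (univ.image (.chain b j))) by
      ext v; cases v <;> simp [Part.mem]; tauto]
    rw [card_insert_of_notMem (by simp), card_insert_of_notMem (by simp),
      card_image_of_injective _ fun _ _ h => by injection h]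
    simp
  | centerLeaf b l =>
    rw [show (Part.centerLeaf b l).verts = insert (.center b) (univ.image (.centerLeaf b l)) by
      ext v; cases v <;> simp [Part.mem]; tauto]
    rw [card_insert_of_notMem (by simp), card_image_of_injective _ fun _ _ h => by injection h]
    simp
  | hubLeaf b j l =>
    rw [show (Part.hubLeaf b j l).verts = insert (.hub b j) (univ.image (.hubLeaf b j l)) by
      ext v; cases v <;> simp [Part.mem]; tauto]
    rw [card_insert_of_notMem (by simp), card_image_of_injective _ fun _ _ h => by injection h]
    simp

lemma exists_part_mem (v : Vert m) : ∃ i : Part m, i.mem v := by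
  cases v with
  | center b => exact ⟨.base, rfl⟩
  | base q => exact ⟨.base, rfl⟩
  | hub b j => exact ⟨.chain b j, by simp [Part.mem]⟩
  | chain b j q => exact ⟨.chain b j, by simp [Part.mem]⟩
  | centerLeaf b l q => exact ⟨.centerLeaf b l, by simp [Part.mem]⟩
  | hubLeaf b j l q => exact ⟨.hubLeaf b j l, by simp [Part.mem]⟩

lemma eq_of_mem_of_not_isJoint {v : Vert m} (hv : ¬ v.IsJoint) {i i' : Part m} (hi : i.mem v)
    (hi' : i'.mem v) : i = i' := by
  cases v <;> cases i <;> cases i' <;> simp_all [Part.mem, Vert.IsJoint]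

lemma mem_verts_of_adj {u v : Vert m} (hv : ¬ v.IsJoint) {i : Part m} (hi : i.mem v)
    (huv : (graph m).Adj u v) : u ∈ i.verts := by
  obtain ⟨-, i', hu, hv'⟩ := huv
  rwa [eq_of_mem_of_not_isJoint hv hi hv', Part.mem_verts]

lemma connected : (graph m).Connected := by
  have hcenter : ∀ b, (graph m).Reachable (.center b) (.center false) := by
    rintro (_ | _)
    · rfl
    · exact (adj_of_mem (i := .base) rfl rfl (by simp)).reachable
  have hhub : ∀ b j, (graph m).Reachable (.hub b j) (.center false) := fun b j =>
    (adj_of_mem (i := .chain b j) (by simp [Part.mem]) (by simp [Part.mem])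
      (by simp)).reachable.trans (hcenter b)
  have : Nonempty (Vert m) := ⟨.center false⟩
  refine ⟨fun x y => ?_⟩
  suffices h : ∀ v, (graph m).Reachable v (.center false) from (h x).trans (h y).symm
  intro v
  cases v with
  | center b => exact hcenter b
  | hub b j => exact hhub b j
  | base q => exact (adj_of_mem (i := .base) rfl rfl (by simp)).reachable.trans (hcenter false)
  | chain b j q => exact (adj_of_mem (i := .chain b j) (by simp [Part.mem])
      (by simp [Part.mem]) (by simp)).reachable.trans (hcenter b)
  | centerLeaf b l q => exact (adj_of_mem (i := .centerLeaf b l) (by simp [Part.mem])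
      (by simp [Part.mem]) (by simp)).reachable.trans (hcenter b)
  | hubLeaf b j l q => exact (adj_of_mem (i := .hubLeaf b j l) (by simp [Part.mem])
      (by simp [Part.mem]) (by simp)).reachable.trans (hhub b j)

lemma not_isCutVertex_of_not_isJoint {v : Vert m} (hv : ¬ v.IsJoint) :
    ¬ IsCutVertex (graph m) v := by
  obtain ⟨i, hi⟩ := exists_part_mem v
  exact not_isCutVertex_of_isClique_neighborSet connected <|
    (isClique_verts i).subset fun u hu => mem_verts_of_adj hv hi (graph m |>.adj_symm hu)

lemma natCard_cutVertex_le_two (i : Part m) :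
    Nat.card {v : Vert m | v ∈ (i.verts : Set (Vert m)) ∧ IsCutVertex (graph m) v} ≤ 2 := by
  obtain ⟨a, b, hab⟩ : ∃ a b : Vert m, ∀ v, i.mem v → v.IsJoint → v = a ∨ v = b := by
    cases i with
    | base => exact ⟨.center false, .center true, by
        rintro (_ | _ | _) <;> simp [Part.mem, Vert.IsJoint]⟩
    | chain b j => exact ⟨.center b, .hub b j, by
        rintro (_ | _ | _) <;> simp_all [Part.mem, Vert.IsJoint]⟩
    | centerLeaf b l => exact ⟨.center b, .center b, by
        rintro (_ | _ | _) <;> simp_all [Part.mem, Vert.IsJoint]⟩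
    | hubLeaf b j l => exact ⟨.hub b j, .hub b j, by
        rintro (_ | _ | _) <;> simp_all [Part.mem, Vert.IsJoint]⟩
  have hsub : {v : Vert m | v ∈ (i.verts : Set (Vert m)) ∧ IsCutVertex (graph m) v} ⊆
      {a, b} :=
    fun v ⟨hv, hcut⟩ => hab v (by simpa using hv)
      (by_contra fun h => not_isCutVertex_of_not_isJoint h hcut)
  rw [Nat.card_coe_set_eq]
  exact (Set.ncard_le_ncard hsub).trans ((Set.ncard_insert_le a {b}).trans (by simp))

section blocks

variable {S : Set (Vert m)} (hS : ((graph m).induce S).Connected)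
  (hS' : ∀ v : S, ¬ IsCutVertex ((graph m).induce S) v)
include hS hS'

lemma subset_verts_centerLeaf {b : Bool} {l : Fin 2} {q : Fin (m + 1)}
    (hq : .centerLeaf b l q ∈ S) :
    S ⊆ ((Part.centerLeaf b l : Part m).verts : Set (Vert m)) := by
  have hP : ∀ x y, (graph m).Adj x y → x ≠ .center b → y ≠ .center b →
      ((∃ q, x = .centerLeaf b l q) ↔ (∃ q, y = .centerLeaf b l q)) := by
    rintro x y ⟨-, i, hx, hy⟩ hxw hyw
    cases i <;> cases x <;> cases y <;> simp_all [Part.mem]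
  intro v hv
  rcases subset_insert_of_separates hS hS' hP hq (by simp) ⟨q, rfl⟩ hv with
    rfl | ⟨q', rfl⟩ <;> simp [Part.mem]

lemma subset_verts_hubLeaf {b : Bool} {j : Fin (m + 3)} {l : Fin 2} {q : Fin (m + 1)}
    (hq : .hubLeaf b j l q ∈ S) : S ⊆ ((Part.hubLeaf b j l : Part m).verts : Set (Vert m)) := by
  have hP : ∀ x y, (graph m).Adj x y → x ≠ .hub b j → y ≠ .hub b j →
      ((∃ q, x = .hubLeaf b j l q) ↔ (∃ q, y = .hubLeaf b j l q)) := by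
    rintro x y ⟨-, i, hx, hy⟩ hxw hyw
    cases i <;> cases x <;> cases y <;> simp_all [Part.mem]
  intro v hv
  rcases subset_insert_of_separates hS hS' hP hq (by simp) ⟨q, rfl⟩ hv with
    rfl | ⟨q', rfl⟩ <;> simp [Part.mem]

lemma subset_verts_chain {b : Bool} {j : Fin (m + 3)} {v : Vert m} (hv : v ∈ S)
    (hvb : v = .hub b j ∨ ∃ q, v = .chain b j q) (hleaf : ∀ b j l q, .hubLeaf b j l q ∉ S) :
    S ⊆ ((Part.chain b j : Part m).verts : Set (Vert m)) := by
  have hP : ∀ x y, (graph m).Adj x y → x ≠ .center b → y ≠ .center b →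
      ((x = .hub b j ∨ (∃ q, x = .chain b j q) ∨ ∃ l q, x = .hubLeaf b j l q) ↔
        (y = .hub b j ∨ (∃ q, y = .chain b j q) ∨ ∃ l q, y = .hubLeaf b j l q)) := by
    rintro x y ⟨-, i, hx, hy⟩ hxw hyw
    cases i <;> cases x <;> cases y <;> simp_all [Part.mem]
  have hvc : v ≠ .center b := by rcases hvb with rfl | ⟨q, rfl⟩ <;> simp
  intro u hu
  rcases subset_insert_of_separates hS hS' hP hv hvc (Or.imp_right Or.inl hvb) hu with
    rfl | rfl | ⟨q, rfl⟩ | ⟨l, q, rfl⟩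
  · simp [Part.mem]
  · simp [Part.mem]
  · simp [Part.mem]
  · exact absurd hu (hleaf b j l q)

lemma exists_subset_verts : ∃ i : Part m, S ⊆ (i.verts : Set (Vert m)) := by
  by_cases h₁ : ∃ b l q, .centerLeaf b l q ∈ S
  · obtain ⟨b, l, q, hq⟩ := h₁
    exact ⟨_, subset_verts_centerLeaf hS hS' hq⟩
  by_cases h₂ : ∃ b j l q, .hubLeaf b j l q ∈ S
  · obtain ⟨b, j, l, q, hq⟩ := h₂
    exact ⟨_, subset_verts_hubLeaf hS hS' hq⟩
  push Not at h₁ h₂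
  by_cases h₃ : ∃ v ∈ S, ∃ b j, v = .hub b j ∨ ∃ q, v = .chain b j q
  · obtain ⟨v, hv, b, j, hvb⟩ := h₃
    exact ⟨_, subset_verts_chain hS hS' hv hvb h₂⟩
  push Not at h₃
  refine ⟨.base, fun v hv => ?_⟩
  cases v with
  | center b => simp [Part.mem]
  | base q => simp [Part.mem]
  | hub b j => exact absurd rfl ((h₃ _ hv b j).1)
  | chain b j q => exact absurd rfl ((h₃ _ hv b j).2 q)
  | centerLeaf b l q => exact absurd hv (h₁ b l q)
  | hubLeaf b j l q => exact absurd hv (h₂ b j l q)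

end blocks

lemma exists_eq_verts_of_isBlock {B : Set (Vert m)} (hB : IsBlock (graph m) B) :
    ∃ i : Part m, B = i.verts := by
  obtain ⟨hconn, hcut, hmax⟩ := hB
  obtain ⟨i, hi⟩ := exists_subset_verts hconn hcut
  have hne : (i.verts : Set (Vert m)).Nonempty := by
    simp only [coe_nonempty, ← card_pos, card_verts]
    omega
  exact ⟨i, (hmax _ hi ((isClique_verts i).connected_induce hne)
    ((isClique_verts i).not_isCutVertex_induce hne)).symm⟩

lemma inDeg_lt_of_not_isJoint (D : Orient (graph m)) {v : Vert m} (hv : ¬ v.IsJoint)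
    {i : Part m} (hi : i.mem v) : D.inDeg v < m + 2 := by
  rw [D.inDeg_eq_inDegOn fun u hu => mem_verts_of_adj hv hi hu, ← card_verts i]
  exact D.inDegOn_lt_card (by simpa using hi)

section orientation

variable {D : Orient (graph m)}

lemma inDeg_eq_zero_of_pendants (hD : D.Proper) {x : Vert m} (p : Fin 2 → Part m)
    (hx : ∀ l, (p l).mem x) (hp : ∀ v l l', (p l).mem v → (p l').mem v → l ≠ l' → v = x)
    (hplain : ∀ v l, (p l).mem v → v ≠ x → ¬ v.IsJoint) (hlt : D.inDeg x < m + 2) :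
    D.inDeg x = 0 := by
  refine hD.inDeg_eq_zero_of_cliques univ (by simp) (fun l => (p l).verts)
    (fun l _ => isClique_verts _) (fun l _ => by simpa using hx l) ?_ fun l _ v hv => ?_
  · intro l _ l' _ hll' v hv
    simp only [mem_inter, Part.mem_verts] at hv
    exact mem_singleton.2 (hp v l l' hv.1 hv.2 hll')
  · rw [card_verts]
    by_cases hvx : v = x
    · exact hvx ▸ hlt
    · exact inDeg_lt_of_not_isJoint D (hplain v l (by simpa using hv) hvx) (by simpa using hv)

lemma inDeg_center_eq_zero_or (hD : D.Proper) (hle : ∀ v, D.inDeg v ≤ m + 2) (b : Bool) :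
    D.inDeg (.center b) = 0 ∨ D.inDeg (.center b) = m + 2 := by
  refine (hle _).lt_or_eq.imp_left fun hlt => inDeg_eq_zero_of_pendants hD (.centerLeaf b)
    (by simp [Part.mem]) (fun v l l' hl hl' hll' => ?_) (fun v l hl hvx => ?_) hlt
  · cases v <;> simp_all [Part.mem]
  · cases v <;> simp_all [Part.mem, Vert.IsJoint]

lemma inDeg_hub_eq_zero_or (hD : D.Proper) (hle : ∀ v, D.inDeg v ≤ m + 2) (b : Bool)
    (j : Fin (m + 3)) :
    D.inDeg (.hub b j) = 0 ∨ D.inDeg (.hub b j) = m + 2 := by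
  refine (hle _).lt_or_eq.imp_left fun hlt => inDeg_eq_zero_of_pendants hD (.hubLeaf b j)
    (by simp [Part.mem]) (fun v l l' hl hl' hll' => ?_) (fun v l hl hvx => ?_) hlt
  · cases v <;> simp_all [Part.mem]
  · cases v <;> simp_all [Part.mem, Vert.IsJoint]

lemma exists_lt_inDeg (hD : D.Proper) : ∃ v, m + 2 < D.inDeg v := by
  by_contra! hle
  obtain ⟨b, hb⟩ : ∃ b, D.inDeg (.center b) = m + 2 := by
    have hne := hD _ _ (adj_of_mem (i := .base) (x := .center false) (y := .center true)
      rfl rfl (by simp))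
    rcases inDeg_center_eq_zero_or hD hle false with h | h
    · exact ⟨true, (inDeg_center_eq_zero_or hD hle true).resolve_left
        fun h' => hne (h.trans h'.symm)⟩
    · exact ⟨false, h⟩
  have hhub (j : Fin (m + 3)) : D.inDeg (.hub b j) = 0 :=
    (inDeg_hub_eq_zero_or hD hle b j).resolve_right fun h => hD _ _
      (adj_of_mem (i := .chain b j) (x := .center b) (y := .hub b j) (by simp [Part.mem])
        (by simp [Part.mem]) (by simp)) (hb.trans h.symm)
  have hpos (j : Fin (m + 3)) : 0 < D.inDegOn (Part.chain b j).verts (.center b) := by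
    refine hD.inDegOn_pos (isClique_verts _) (y := .hub b j) (by simp [Part.mem])
      (by simp [Part.mem]) (by simp) (hhub j) fun v hv hvb => ?_
    rw [card_verts]
    by_cases hvh : v = .hub b j
    · rw [hvh, hhub j]
      omega
    · refine inDeg_lt_of_not_isJoint D ?_ (by simpa using hv)
      simp only [Part.mem_verts] at hv
      cases v <;> simp_all [Part.mem, Vert.IsJoint]
  have hsum := D.sum_inDegOn_le_inDeg univ (fun j => (Part.chain b j).verts) (v := .center b)
    fun j _ j' _ hjj' v hv => by
      simp only [mem_inter, Part.mem_verts] at hv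
      cases v <;> simp [Part.mem] at hv ⊢ <;> grind
  have : m + 3 ≤ ∑ j, D.inDegOn (Part.chain b j).verts (.center b) :=
    calc m + 3 = ∑ _j : Fin (m + 3), 1 := by simp
      _ ≤ _ := sum_le_sum fun j _ => hpos j
  omega

end orientation

end BlockGraphConstruction

/-- For every `k ≥ 2` there is a connected `k`-uniform block graph, each of whose blocks
contains at most two cut-vertices, with proper orientation number at least `k + 1`. -/
theorem exists_uniform_block_graph_two_cut_ge (k : ℕ) (hk : 2 ≤ k) :
    ∃ (V : Type) (_ : Fintype V) (G : SimpleGraph V),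
      G.Connected ∧
      (∀ B : Set V, IsBlock G B → G.IsClique B ∧ Nat.card B = k) ∧
      (∀ B : Set V, IsBlock G B → Nat.card {v : V | v ∈ B ∧ IsCutVertex G v} ≤ 2) ∧
      k + 1 ≤ properOrientNum G := by
  open BlockGraphConstruction in
  obtain ⟨m, rfl⟩ : ∃ m, k = m + 2 := ⟨k - 2, by omega⟩
  refine ⟨Vert m, inferInstance, graph m, connected, fun B hB => ?_, fun B hB => ?_,
    le_properOrientNum fun D hD => exists_lt_inDeg hD⟩
  · obtain ⟨i, rfl⟩ := exists_eq_verts_of_isBlock hB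
    exact ⟨isClique_verts i, by rw [Nat.card_coe_set_eq, Set.ncard_coe_finset, card_verts]⟩
  · obtain ⟨i, rfl⟩ := exists_eq_verts_of_isBlock hB
    exact natCard_cutVertex_le_two i
end

section
/- Let G be a graph and c a positive integer. If G has no two adjacent vertices both of degree at least c + 1, then χ⃗(G) ≤ c. -/
open SimpleGraph

open Finset in
lemma rank_lemma {V : Type*} [DecidableEq V] (G : SimpleGraph V) [DecidableRel G.Adj]
    (b : V → ℕ) (T : Finset V) :
    ∃ ρ : V → ℕ, Set.InjOn ρ ↑T ∧ ∀ u ∈ T, ∀ v ∈ T, G.Adj u v → ρ u < ρ v →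
      b v + (T.filter (fun w => G.Adj w v ∧ ρ v < ρ w)).card <
      b u + (T.filter (fun w => G.Adj w u ∧ ρ u < ρ w)).card := by
  induction T using Finset.strongInduction with
  | _ T ih =>
    rcases T.eq_empty_or_nonempty with rfl | hne
    · exact ⟨fun _ => 0, by simp, by simp⟩
    · obtain ⟨u0, hu0T, hmax⟩ :=
        T.exists_max_image (fun x => b x + (T.filter (fun w => G.Adj w x)).card) hne
      set T' := T.erase u0 with hT'
      obtain ⟨ρ', hinj', hprop'⟩ := ih T' (Finset.erase_ssubset hu0T)
      set ρ : V → ℕ := fun x => if x = u0 then 0 else ρ' x + 1 with hρ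
      have hρu0 : ρ u0 = 0 := by simp [hρ]
      have hρne : ∀ x, x ≠ u0 → ρ x = ρ' x + 1 := by intro x hx; simp [hρ, hx]
      have key : ∀ z, z ≠ u0 →
          T.filter (fun w => G.Adj w z ∧ ρ z < ρ w)
            = T'.filter (fun w => G.Adj w z ∧ ρ' z < ρ' w) := by
        intro z hz
        ext w
        simp only [mem_filter, hT', mem_erase]
        constructor
        · rintro ⟨hwT, hadj, hlt⟩
          have hwne : w ≠ u0 := by
            rintro rfl; rw [hρu0] at hlt; omega
          rw [hρne z hz, hρne w hwne] at hlt
          exact ⟨⟨hwne, hwT⟩, hadj, by omega⟩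
        · rintro ⟨⟨hwne, hwT⟩, hadj, hlt⟩
          rw [hρne z hz, hρne w hwne]
          exact ⟨hwT, hadj, by omega⟩
      refine ⟨ρ, ?_, ?_⟩
      · intro x hx y hy hxy
        by_cases hxu : x = u0 <;> by_cases hyu : y = u0
        · rw [hxu, hyu]
        · rw [hxu, hρu0, hρne y hyu] at hxy; omega
        · rw [hyu, hρu0, hρne x hxu] at hxy; omega
        · rw [hρne x hxu, hρne y hyu] at hxy
          exact hinj' (by simp [hT', hxu, hx]) (by simp [hT', hyu, hy]) (by omega)
      · intro u hu v hv hadj hlt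
        have hvne : v ≠ u0 := by
          rintro rfl; rw [hρu0] at hlt; omega
        by_cases huu : u = u0
        · subst huu
          have hR : T.filter (fun w => G.Adj w u ∧ ρ u < ρ w)
              = T.filter (fun w => G.Adj w u) := by
            ext w
            simp only [mem_filter, hρu0]
            constructor
            · rintro ⟨hwT, hadj', _⟩; exact ⟨hwT, hadj'⟩
            · rintro ⟨hwT, hadj'⟩
              have hwne : w ≠ u := fun hw => by
                subst hw; exact G.irrefl hadj'
              refine ⟨hwT, hadj', ?_⟩; rw [hρne w hwne]; omega
          rw [hR, key v hvne]
          have hlt2 : (T'.filter (fun w => G.Adj w v ∧ ρ' v < ρ' w)).card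
              < (T.filter (fun w => G.Adj w v)).card := by
            apply Finset.card_lt_card
            constructor
            · intro w hw
              simp only [mem_filter, hT', mem_erase] at hw ⊢
              exact ⟨hw.1.2, hw.2.1⟩
            · intro hsub
              have : u ∈ T.filter (fun w => G.Adj w v) := by
                simp only [mem_filter]; exact ⟨hu0T, hadj⟩
              have := hsub this
              simp [hT'] at this
          calc b v + (T'.filter (fun w => G.Adj w v ∧ ρ' v < ρ' w)).card
              < b v + (T.filter (fun w => G.Adj w v)).card := by omega
            _ ≤ b u + (T.filter (fun w => G.Adj w u)).card := hmax v hv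
        · have hlt' : ρ' u < ρ' v := by
            rw [hρne u huu, hρne v hvne] at hlt; omega
          rw [key v hvne, key u huu]
          exact hprop' u (by simp [hT', huu, hu]) v (by simp [hT', hvne, hv]) hadj hlt'

/-- If `G` has no two adjacent vertices both of degree at least `c + 1` (`c ≥ 1`),
then `χ⃗(G) ≤ c`. -/
theorem properOrientNum_le_of_no_adjacent_high_degree {V : Type*} [Fintype V]
    (G : SimpleGraph V) [DecidableRel G.Adj] (c : ℕ) (hc : 1 ≤ c)
    (h : ∀ u v, G.Adj u v → ¬ (c + 1 ≤ G.degree u ∧ c + 1 ≤ G.degree v)) :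
    properOrientNum G ≤ c := by

  classical
  set S : Finset V := Finset.univ.filter (fun v => G.degree v ≤ c) with hS
  obtain ⟨ρ, hinj, hprop⟩ := rank_lemma G
    (fun x => (Finset.univ.filter (fun w => G.Adj w x ∧ ¬ G.degree w ≤ c)).card) S
  have hmemS : ∀ v, v ∈ S ↔ G.degree v ≤ c := by
    intro v; simp [hS]
  set P : V → V → Prop := fun u v =>
    G.Adj u v ∧ G.degree v ≤ c ∧ (¬ G.degree u ≤ c ∨ ρ v < ρ u) with hP
  set D : Orient G :=
    { dir := fun u v => decide (P u v)
      adj_of_dir := by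
        intro u v hd
        rw [decide_eq_true_eq] at hd
        exact hd.1
      dir_iff := by
        intro u v hadj
        simp only [decide_eq_true_eq, hP]
        by_cases hu : G.degree u ≤ c <;> by_cases hv : G.degree v ≤ c
        · have hne : ρ u ≠ ρ v :=
            fun he => G.ne_of_adj hadj (hinj (by simp [hmemS u, hu])
              (by simp [hmemS v, hv]) he)
          constructor
          · rintro ⟨_, _, h1⟩ ⟨_, _, h2⟩
            rcases h1 with h1 | h1
            · exact h1 hu
            · rcases h2 with h2 | h2
              · exact h2 hv
              · omega
          · intro hn
            refine ⟨hadj, hv, Or.inr ?_⟩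
            rcases Nat.lt_or_ge (ρ v) (ρ u) with hlt | hge
            · exact hlt
            · exfalso
              exact hn ⟨hadj.symm, hu, Or.inr (by omega)⟩
        · constructor
          · rintro ⟨_, hv', _⟩
            exact absurd hv' hv
          · intro hn
            exact absurd ⟨hadj.symm, hu, Or.inl hv⟩ hn
        · constructor
          · rintro _ ⟨_, hu', _⟩
            exact hu hu'
          · intro _
            exact ⟨hadj, hv, Or.inl hu⟩
        · exact absurd ⟨by omega, by omega⟩ (h u v hadj) } with hD
  have hdir : ∀ u v, (D.dir u v = true) ↔ P u v := by
    intro u v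
    simp only [hD, decide_eq_true_eq]
  -- indegree of a big vertex is 0
  have hbig0 : ∀ v, ¬ G.degree v ≤ c → D.inDeg v = 0 := by
    intro v hv
    unfold Orient.inDeg
    rw [Finset.card_eq_zero, Finset.filter_eq_empty_iff]
    intro u _
    rw [hdir]
    rintro ⟨_, hv', _⟩
    exact hv hv'
  -- indegree of a small vertex decomposes
  have hsmall : ∀ v, G.degree v ≤ c →
      D.inDeg v = (Finset.univ.filter (fun w => G.Adj w v ∧ ¬ G.degree w ≤ c)).card
        + (S.filter (fun w => G.Adj w v ∧ ρ v < ρ w)).card := by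
    intro v hv
    unfold Orient.inDeg
    have hset : Finset.univ.filter (fun u => D.dir u v = true)
        = Finset.univ.filter (fun w => G.Adj w v ∧ ¬ G.degree w ≤ c)
          ∪ S.filter (fun w => G.Adj w v ∧ ρ v < ρ w) := by
      ext w
      simp only [Finset.mem_union, Finset.mem_filter, Finset.mem_univ, true_and, hdir,
        hP, hS]
      constructor
      · rintro ⟨hadj, _, hor⟩
        rcases hor with hb | hr
        · exact Or.inl ⟨hadj, hb⟩
        · by_cases hw : G.degree w ≤ c
          · exact Or.inr ⟨hw, hadj, hr⟩
          · exact Or.inl ⟨hadj, hw⟩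
      · rintro (⟨hadj, hb⟩ | ⟨hw, hadj, hr⟩)
        · exact ⟨hadj, hv, Or.inl hb⟩
        · exact ⟨hadj, hv, Or.inr hr⟩
    have hdisj : Disjoint
        (Finset.univ.filter (fun w => G.Adj w v ∧ ¬ G.degree w ≤ c))
        (S.filter (fun w => G.Adj w v ∧ ρ v < ρ w)) := by
      rw [Finset.disjoint_left]
      intro a ha hb
      simp only [Finset.mem_filter, Finset.mem_univ, true_and, hS] at ha hb
      exact ha.2 hb.1
    rw [hset, Finset.card_union_of_disjoint hdisj]
  -- indegrees are at most c
  have hbound : ∀ v, D.inDeg v ≤ c := by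
    intro v
    by_cases hv : G.degree v ≤ c
    · have hsub : Finset.univ.filter (fun u => D.dir u v = true)
          ⊆ G.neighborFinset v := by
        intro u hu
        simp only [Finset.mem_filter] at hu
        rw [mem_neighborFinset]
        exact (D.adj_of_dir u v hu.2).symm
      calc D.inDeg v ≤ (G.neighborFinset v).card := Finset.card_le_card hsub
        _ = G.degree v := rfl
        _ ≤ c := hv
    · rw [hbig0 v hv]; omega
  -- the orientation is proper
  have hproper : D.Proper := by
    intro u v hadj
    by_cases hu : G.degree u ≤ c <;> by_cases hv : G.degree v ≤ c
    · have hne : ρ u ≠ ρ v :=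
        fun he => G.ne_of_adj hadj (hinj (by simp [hmemS u, hu])
          (by simp [hmemS v, hv]) he)
      rw [hsmall u hu, hsmall v hv]
      rcases Nat.lt_or_ge (ρ u) (ρ v) with hlt | hge
      · exact Nat.ne_of_gt (hprop u ((hmemS u).2 hu) v ((hmemS v).2 hv) hadj hlt)
      · have hlt : ρ v < ρ u := by omega
        exact Nat.ne_of_lt (hprop v ((hmemS v).2 hv) u ((hmemS u).2 hu) hadj.symm hlt)
    · -- v big, u small : inDeg v = 0, inDeg u ≥ 1
      rw [hbig0 v hv]
      have : 0 < D.inDeg u := by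
        have hvmem : v ∈ Finset.univ.filter (fun w => D.dir w u = true) := by
          simp only [Finset.mem_filter, Finset.mem_univ, true_and, hdir]
          exact ⟨hadj.symm, hu, Or.inl hv⟩
        unfold Orient.inDeg
        exact Finset.card_pos.2 ⟨v, hvmem⟩
      omega
    · rw [hbig0 u hu]
      have : 0 < D.inDeg v := by
        have humem : u ∈ Finset.univ.filter (fun w => D.dir w v = true) := by
          simp only [Finset.mem_filter, Finset.mem_univ, true_and, hdir]
          exact ⟨hadj, hv, Or.inl hu⟩
        unfold Orient.inDeg
        exact Finset.card_pos.2 ⟨u, humem⟩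
      omega
    · exact absurd ⟨by omega, by omega⟩ (h u v hadj)
  exact Nat.sInf_le ⟨D, hproper, hbound⟩
end

section
/- If T is a tree having no two adjacent vertices both of degree at least three, then χ⃗(T) ≤ 2. -/
open SimpleGraph

/-!
Give the vertices of degree at least three the lowest rank, the leaves the middle one and the
vertices of degree two the highest, break ties by a proper 2-colouring, and orient every edge
towards its endpoint of higher rank. The high-degree vertices form an independent set, so all
their edges point outwards and their indegree is 0; every other vertex has degree at most 2.
Along an arc `u → v` the indegree strictly increases: if `u` has high degree or is a leaf, its
only edges point away from it, and if `u` has degree two then so has `v`, which is then of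
maximal rank and has indegree 2 while `u` has indegree at most 1.
-/

open Finset

namespace Orient

variable {V : Type*} {G : SimpleGraph V}

section

variable [Fintype V]

theorem inDeg_pos_of_dir (D : Orient G) {u v : V} (h : D.dir u v = true) : 0 < D.inDeg v :=
  card_pos.2 ⟨u, by simpa using h⟩

variable [DecidableRel G.Adj]

theorem filter_dir_subset_neighborFinset (D : Orient G) (v : V) :
    univ.filter (fun u => D.dir u v = true) ⊆ G.neighborFinset v := fun u hu => by
  simpa using (D.adj_of_dir u v (mem_filter.1 hu).2).symm

theorem inDeg_le_degree (D : Orient G) (v : V) : D.inDeg v ≤ G.degree v := by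
  rw [← card_neighborFinset_eq_degree]
  exact card_le_card (D.filter_dir_subset_neighborFinset v)

theorem inDeg_lt_degree_of_dir (D : Orient G) {v w : V} (h : D.dir v w = true) :
    D.inDeg v < G.degree v := by
  have hvw := D.adj_of_dir v w h
  rw [← card_neighborFinset_eq_degree]
  refine card_lt_card ((ssubset_iff_of_subset (D.filter_dir_subset_neighborFinset v)).2 ⟨w, ?_⟩)
  simpa [hvw] using (D.dir_iff v w hvw).1 h

end

def ofKey [DecidableRel G.Adj] {α : Type*} [LinearOrder α] (f : V → α)
    (hf : ∀ u v, G.Adj u v → f u ≠ f v) : Orient G where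
  dir u v := decide (G.Adj u v ∧ f u < f v)
  adj_of_dir u v h := (of_decide_eq_true h).1
  dir_iff u v huv := by
    simp only [decide_eq_true_eq, huv, huv.symm, true_and, not_lt]
    exact ⟨le_of_lt, (lt_of_le_of_ne · (hf u v huv))⟩

section OfKey

variable [DecidableRel G.Adj] {α : Type*} [LinearOrder α] {f : V → α}
  {hf : ∀ u v, G.Adj u v → f u ≠ f v}

theorem ofKey_dir {u v : V} : (ofKey f hf).dir u v = true ↔ G.Adj u v ∧ f u < f v := by
  simp [ofKey]

variable [Fintype V]

theorem inDeg_ofKey_eq_zero {v : V} (h : ∀ u, G.Adj u v → f v < f u) :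
    (ofKey f hf).inDeg v = 0 := by
  refine card_eq_zero.2 (filter_eq_empty_iff.2 fun u _ huv => ?_)
  obtain ⟨hadj, hlt⟩ := ofKey_dir.1 huv
  exact (h u hadj).not_gt hlt

theorem inDeg_ofKey_eq_degree {v : V} (h : ∀ u, G.Adj u v → f u < f v) :
    (ofKey f hf).inDeg v = G.degree v := by
  rw [← card_neighborFinset_eq_degree, inDeg]
  congr 1
  ext u
  simp only [mem_filter, mem_univ, true_and, ofKey_dir, mem_neighborFinset]
  exact ⟨fun h' => h'.1.symm, fun h' => ⟨h'.symm, h u h'.symm⟩⟩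

end OfKey

end Orient

theorem properOrientNum_le {V : Type*} [Fintype V] {G : SimpleGraph V} {k : ℕ} (D : Orient G)
    (hD : D.Proper) (hk : ∀ v, D.inDeg v ≤ k) : properOrientNum G ≤ k :=
  Nat.sInf_le ⟨D, hD, hk⟩

section DegreeKey

variable {V : Type*} [Fintype V] {G : SimpleGraph V} [DecidableRel G.Adj]

def degreeKey (C : G.Coloring (Fin 2)) (v : V) : ℕ :=
  2 * (if 3 ≤ G.degree v then 0 else G.degree v) + C v

theorem degreeKey_le_five (C : G.Coloring (Fin 2)) (v : V) : degreeKey C v ≤ 5 := by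
  have := (C v).isLt
  unfold degreeKey
  split_ifs <;> omega

theorem degreeKey_ne_of_adj (C : G.Coloring (Fin 2)) {u v : V} (h : G.Adj u v) :
    degreeKey C u ≠ degreeKey C v := fun heq => C.valid h <| by
  have := (C u).isLt
  have := (C v).isLt
  unfold degreeKey at heq
  exact Fin.ext (by split_ifs at heq <;> omega)

def degreeOrient (C : G.Coloring (Fin 2)) : Orient G :=
  Orient.ofKey (degreeKey C) fun _ _ => degreeKey_ne_of_adj C

theorem inDeg_degreeOrient_eq_zero
    (hbig : ∀ u v, G.Adj u v → ¬ (3 ≤ G.degree u ∧ 3 ≤ G.degree v))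
    (C : G.Coloring (Fin 2)) {v : V} (hv : 3 ≤ G.degree v) :
    (degreeOrient C).inDeg v = 0 := by
  refine Orient.inDeg_ofKey_eq_zero fun u huv => ?_
  have hu : 0 < G.degree u := G.degree_pos_iff_exists_adj u |>.2 ⟨v, huv⟩
  have hu3 : ¬ 3 ≤ G.degree u := fun hu3 => hbig u v huv ⟨hu3, hv⟩
  have := (C v).isLt
  simp only [degreeKey, if_pos hv, if_neg hu3]
  omega

theorem inDeg_degreeOrient_le_two
    (hbig : ∀ u v, G.Adj u v → ¬ (3 ≤ G.degree u ∧ 3 ≤ G.degree v))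
    (C : G.Coloring (Fin 2)) (v : V) : (degreeOrient C).inDeg v ≤ 2 := by
  by_cases hv : 3 ≤ G.degree v
  · simp [inDeg_degreeOrient_eq_zero hbig C hv]
  · exact ((degreeOrient C).inDeg_le_degree v).trans (by omega)

theorem inDeg_degreeOrient_lt_of_dir
    (hbig : ∀ u v, G.Adj u v → ¬ (3 ≤ G.degree u ∧ 3 ≤ G.degree v))
    (C : G.Coloring (Fin 2)) {u v : V} (h : (degreeOrient C).dir u v = true) :
    (degreeOrient C).inDeg u < (degreeOrient C).inDeg v := by
  have hv := (degreeOrient C).inDeg_pos_of_dir h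
  have hu := (degreeOrient C).inDeg_lt_degree_of_dir h
  by_cases hu3 : 3 ≤ G.degree u
  · rwa [inDeg_degreeOrient_eq_zero hbig C hu3]
  by_cases hu2 : G.degree u = 2
  · have hlt := (Orient.ofKey_dir.1 h).2
    have hv5 : degreeKey C v = 5 := by
      have := degreeKey_le_five C v
      rw [degreeKey, if_neg hu3, hu2] at hlt
      omega
    have hv2 : G.degree v = 2 := by
      have := (C v).isLt
      simp only [degreeKey] at hv5
      split_ifs at hv5 <;> omega
    have hin : (degreeOrient C).inDeg v = G.degree v :=
      Orient.inDeg_ofKey_eq_degree fun w hwv => by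
        have := degreeKey_le_five C w
        have := degreeKey_ne_of_adj C hwv
        omega
    omega
  · omega

theorem degreeOrient_proper
    (hbig : ∀ u v, G.Adj u v → ¬ (3 ≤ G.degree u ∧ 3 ≤ G.degree v))
    (C : G.Coloring (Fin 2)) : (degreeOrient C).Proper := by
  intro u v huv
  rcases (degreeKey_ne_of_adj C huv).lt_or_gt with hlt | hlt
  · exact (inDeg_degreeOrient_lt_of_dir hbig C (Orient.ofKey_dir.2 ⟨huv, hlt⟩)).ne
  · exact (inDeg_degreeOrient_lt_of_dir hbig C (Orient.ofKey_dir.2 ⟨huv.symm, hlt⟩)).ne'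

theorem properOrientNum_le_two_of_colorable_two
    (hbig : ∀ u v, G.Adj u v → ¬ (3 ≤ G.degree u ∧ 3 ≤ G.degree v))
    (hG : G.Colorable 2) : properOrientNum G ≤ 2 :=
  let ⟨C⟩ := hG
  properOrientNum_le (degreeOrient C) (degreeOrient_proper hbig C)
    (inDeg_degreeOrient_le_two hbig C)

end DegreeKey

/-- If `T` is a tree with no two adjacent vertices both of degree at least three,
then `χ⃗(T) ≤ 2`. -/
theorem properOrientNum_tree_le_two {V : Type*} [Fintype V]
    (T : SimpleGraph V) [DecidableRel T.Adj] (hT : T.IsTree)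
    (h : ∀ u v, T.Adj u v → ¬ (3 ≤ T.degree u ∧ 3 ≤ T.degree v)) :
    properOrientNum T ≤ 2 :=
  properOrientNum_le_two_of_colorable_two h hT.colorable_two
end

section
/- If T is a tree having no two adjacent vertices both of degree at least four, then χ⃗(T) ≤ 3. -/
open SimpleGraph

/-!
Root the tree at `r`. Every other vertex `v` gets a target `τ v ∈ {1, 2, 3}` and a set `F v` of
`τ v - 1` children such that the remaining children have targets different from `τ v`. Orient
top-down: if the edge from its parent points into `v`, the edges from `F v` point into `v` and the
other child edges point away, so `v` has indegree `τ v` and the children in `F v` are sources;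
otherwise all child edges point away and `v` is a source. Adjacent vertices then get indegrees `0`
and a target, or two different targets.

A vertex of degree at least four takes `τ = 3` and any two children as `F`: its other children have
degree at most three by hypothesis, and targets at most two. A vertex of degree at most three below
one of degree at least four takes `τ = 2` if it has a leaf child (which has target `1` and stays
outside `F`) and `τ = 1` otherwise. Every other vertex takes all its children as `F`, so `τ` is its
degree.
-/

open Finset

lemma Finset.exists_mem_sdiff_singleton_subset {α : Type*} [DecidableEq α] {s : Finset α} {a : α}
    (ha : a ∈ s) (hs : #s ≤ 2) : ∃ b ∈ s, s \ {b} ⊆ {a} := by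
  by_cases h : ∃ b ∈ s, b ≠ a
  · obtain ⟨b, hb, hba⟩ := h
    refine ⟨b, hb, fun c hc => mem_singleton.mpr ?_⟩
    obtain ⟨hcs, hcb⟩ := by simpa using hc
    by_contra hca
    exact hs.not_gt (two_lt_card.mpr ⟨a, ha, b, hb, c, hcs, Ne.symm hba, Ne.symm hca, Ne.symm hcb⟩)
  · push Not at h
    exact ⟨a, ha, fun c hc => mem_singleton.mpr (h c (mem_sdiff.mp hc).1)⟩

namespace SimpleGraph

variable {V : Type*} [Fintype V] {G : SimpleGraph V} [DecidableRel G.Adj] {r u v c : V}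

variable (G r) in
noncomputable def children (v : V) : Finset V := {c | G.Adj v c ∧ G.dist r c = G.dist r v + 1}

variable (G r) in
noncomputable def parents (v : V) : Finset V := {u | G.Adj u v ∧ G.dist r v = G.dist r u + 1}

@[simp]
lemma mem_children : c ∈ G.children r v ↔ G.Adj v c ∧ G.dist r c = G.dist r v + 1 := by
  simp [children]

@[simp]
lemma mem_parents : u ∈ G.parents r v ↔ v ∈ G.children r u := by
  simp [parents]

lemma notMem_children_of_mem_children (h : c ∈ G.children r v) : v ∉ G.children r c := by
  simp only [mem_children] at *
  omega

lemma root_notMem_children : r ∉ G.children r v := by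
  simp

lemma disjoint_children_parents : Disjoint (G.children r v) (G.parents r v) :=
  Finset.disjoint_left.mpr fun _ hc hp => notMem_children_of_mem_children hc (mem_parents.mp hp)

lemma IsTree.mem_children_or_mem_children (hG : G.IsTree) (h : G.Adj u v) :
    v ∈ G.children r u ∨ u ∈ G.children r v := by
  simpa [h, h.symm, or_comm] using hG.dist_eq_dist_add_one_of_adj r h

lemma IsTree.degree_eq_card_children_add_card_parents (hG : G.IsTree) (v : V) :
    G.degree v = #(G.children r v) + #(G.parents r v) := by
  classical
  have : G.neighborFinset v = G.children r v ∪ G.parents r v := by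
    ext u
    simp only [mem_neighborFinset, mem_union, mem_parents]
    refine ⟨hG.mem_children_or_mem_children, ?_⟩
    rintro (h | h)
    exacts [(mem_children.mp h).1, (mem_children.mp h).1.symm]
  rw [← card_neighborFinset_eq_degree, this, card_union_of_disjoint disjoint_children_parents]

lemma Connected.parents_nonempty (hG : G.Connected) (hv : v ≠ r) : (G.parents r v).Nonempty := by
  obtain ⟨W, hW⟩ := hG.exists_walk_length_eq_dist v r
  cases W with
  | nil => exact absurd rfl hv
  | @cons _ u _ h q =>
    refine ⟨u, mem_parents.mpr (mem_children.mpr ⟨h.symm, ?_⟩)⟩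
    have h₁ : G.dist u r ≤ q.length := dist_le q
    have h₂ : G.dist v r ≤ G.dist v u + G.dist u r := hG.dist_triangle
    rw [dist_eq_one_iff_adj.mpr h] at h₂
    simp only [Walk.length_cons] at hW
    rw [dist_comm, dist_comm (u := r)]
    omega

lemma IsTree.eq_of_mem_parents (hG : G.IsTree) {u' : V} (hu : u ∈ G.parents r v)
    (hu' : u' ∈ G.parents r v) : u = u' := by
  classical
  obtain ⟨P, hP, -⟩ := hG.connected.exists_path_of_dist r v
  suffices ∀ w ∈ G.parents r v, w = P.penultimate from (this u hu).trans (this u' hu').symm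
  intro w hw
  obtain ⟨hwv, hd⟩ := mem_children.mp (mem_parents.mp hw)
  obtain ⟨Q, hQ, hQl⟩ := hG.connected.exists_path_of_dist r w
  have hvQ : v ∉ Q.support := fun hv => by
    have := (dist_le (Q.takeUntil v hv)).trans (Q.length_takeUntil_le_length hv)
    omega
  exact hG.isAcyclic.eq_penultimate_of_adj_end hP hwv.symm
    (hG.isAcyclic.mem_support_of_ne_mem_support_of_adj_of_isPath hP hQ hwv.symm hvQ)

lemma IsTree.parents_eq_singleton (hG : G.IsTree) (hc : c ∈ G.children r v) :
    G.parents r c = {v} :=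
  eq_singleton_iff_unique_mem.mpr
    ⟨mem_parents.mpr hc, fun _ hu => hG.eq_of_mem_parents hu (mem_parents.mpr hc)⟩

lemma IsTree.card_parents (hG : G.IsTree) (hv : v ≠ r) : #(G.parents r v) = 1 := by
  obtain ⟨u, hu⟩ := hG.connected.parents_nonempty hv
  rw [hG.parents_eq_singleton (mem_parents.mp hu), card_singleton]

lemma IsTree.exists_forall_mem_children_iff (hG : G.IsTree) (g : V → V → Prop → Prop) :
    ∃ x : V → Prop, ¬ x r ∧ ∀ v, ∀ c ∈ G.children r v, (x c ↔ g v c (x v)) := by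
  let x : V → Prop := (InvImage.wf (G.dist r) wellFounded_lt).fix fun v rec =>
    v ≠ r ∧ ∀ u (hu : u ∈ G.parents r v),
      g u v (rec u (by simp only [InvImage, mem_parents, mem_children] at hu ⊢; omega))
  have hx : ∀ v, x v ↔ v ≠ r ∧ ∀ u ∈ G.parents r v, g u v (x u) := fun v => by
    rw [show x v = _ from WellFounded.fix_eq _ _ v]
  refine ⟨x, fun h => ((hx r).mp h).1 rfl, fun v c hc => ?_⟩
  rw [hx, hG.parents_eq_singleton hc]
  simp [ne_of_mem_of_not_mem hc root_notMem_children]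

/-- `x c` says that the edge between `c` and its parent points into `c`. -/
noncomputable def IsTree.orientBy [DecidableEq V] (hG : G.IsTree) (r : V) (x : V → Prop)
    [DecidablePred x] : Orient G where
  dir a b := decide (b ∈ G.children r a ∧ x b ∨ a ∈ G.children r b ∧ ¬ x a)
  adj_of_dir a b h := by
    rcases of_decide_eq_true h with ⟨h, -⟩ | ⟨h, -⟩
    exacts [(mem_children.mp h).1, (mem_children.mp h).1.symm]
  dir_iff a b h := by
    rcases hG.mem_children_or_mem_children (r := r) h with h | h <;>
      simp [h, notMem_children_of_mem_children h]

lemma IsTree.inDeg_orientBy [DecidableEq V] (hG : G.IsTree) {x : V → Prop} [DecidablePred x]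
    (hx : ¬ x r) (v : V) :
    (hG.orientBy r x).inDeg v = (if x v then 1 else 0) + #{c ∈ G.children r v | ¬ x c} := by
  have : ({u | (hG.orientBy r x).dir u v} : Finset V) =
      (if x v then G.parents r v else ∅) ∪ {c ∈ G.children r v | ¬ x c} := by
    ext u
    by_cases hxv : x v <;> simp [IsTree.orientBy, hxv]
  rw [Orient.inDeg, this, card_union_of_disjoint]
  · split_ifs with hxv
    · rw [hG.card_parents fun hv : v = r => hx (hv ▸ hxv)]
    · rfl
  · split_ifs
    · exact disjoint_children_parents.symm.mono_right (filter_subset _ _)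
    · exact disjoint_empty_left _

variable (G r) in
def IsSplitAt [DecidableEq V] (τ : V → ℕ) (F : Finset V) (v : V) : Prop :=
  F ⊆ G.children r v ∧ #F + 1 = τ v ∧ ∀ c ∈ G.children r v \ F, τ c ≠ τ v

lemma IsTree.properOrientNum_le [DecidableEq V] (hG : G.IsTree) (r : V) {k : ℕ} (τ : V → ℕ)
    (hτ : ∀ v ≠ r, τ v ≤ k) (hsplit : ∀ v ≠ r, ∃ F, G.IsSplitAt r τ F v) :
    properOrientNum G ≤ k := by
  classical
  choose! F hF using hsplit
  obtain ⟨x, hxr, hx⟩ := hG.exists_forall_mem_children_iff (r := r) fun v c b => b → c ∉ F v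
  have hne : ∀ v, x v → v ≠ r := fun v h hv => hxr (hv ▸ h)
  have hinDeg : ∀ v, (hG.orientBy r x).inDeg v = if x v then τ v else 0 := by
    intro v
    have : {c ∈ G.children r v | ¬ x c} = if x v then F v else ∅ := by
      ext c
      by_cases hxv : x v
      · have hsub := (hF v (hne v hxv)).1
        by_cases hc : c ∈ G.children r v
        · simp [hc, hx v c hc, hxv]
        · simpa [hc, hxv] using mt (@hsub c) hc
      · simp only [mem_filter, hxv, if_false, notMem_empty, iff_false, not_and, not_not]
        exact fun hc => (hx v c hc).mpr (absurd · hxv)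
    rw [hG.inDeg_orientBy hxr, this]
    split_ifs with hxv
    · rw [← (hF v (hne v hxv)).2.1, add_comm]
    · rfl
  have hchild : ∀ v, ∀ c ∈ G.children r v,
      (hG.orientBy r x).inDeg v ≠ (hG.orientBy r x).inDeg c := by
    intro v c hc
    have hcr : c ≠ r := ne_of_mem_of_not_mem hc root_notMem_children
    rw [hinDeg, hinDeg, hx v c hc]
    by_cases hxv : x v
    · obtain ⟨-, hcard, hdiff⟩ := hF v (hne v hxv)
      by_cases hcF : c ∈ F v
      · rw [if_pos hxv, if_neg fun h => h hxv hcF]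
        omega
      · rw [if_pos hxv, if_pos fun _ => hcF]
        exact (hdiff c (mem_sdiff.mpr ⟨hc, hcF⟩)).symm
    · obtain ⟨-, hcard, -⟩ := hF c hcr
      rw [if_neg hxv, if_pos (absurd · hxv)]
      omega
  refine Nat.sInf_le ⟨hG.orientBy r x, fun a b hab => ?_, fun v => ?_⟩
  · rcases hG.mem_children_or_mem_children (r := r) hab with h | h
    exacts [hchild a b h, (hchild b a h).symm]
  · rw [hinDeg]
    split_ifs with hxv
    exacts [hτ v (hne v hxv), Nat.zero_le _]

variable (G r) in
noncomputable def indegTarget (v : V) : ℕ :=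
  if 4 ≤ G.degree v then 3
  else if ∃ u ∈ G.parents r v, 4 ≤ G.degree u then
    if ∃ c ∈ G.children r v, G.degree c = 1 then 2 else 1
  else G.degree v

lemma indegTarget_le_three : G.indegTarget r v ≤ 3 := by
  unfold indegTarget
  split_ifs <;> omega

lemma IsTree.indegTarget_le_two_of_mem_children (hG : G.IsTree) (hc : c ∈ G.children r v)
    (hv : 4 ≤ G.degree v) (hc4 : G.degree c < 4) : G.indegTarget r c ≤ 2 := by
  rw [indegTarget, if_neg hc4.not_ge, if_pos ⟨v, by simp [hG.parents_eq_singleton hc], hv⟩]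
  split_ifs <;> omega

lemma IsTree.indegTarget_eq_degree_of_mem_children (hG : G.IsTree) (hc : c ∈ G.children r v)
    (hv : G.degree v < 4) (hc4 : G.degree c < 4) : G.indegTarget r c = G.degree c := by
  simp [indegTarget, hG.parents_eq_singleton hc, hv.not_ge, hc4.not_ge]

lemma IsTree.card_children_add_one (hG : G.IsTree) (hv : v ≠ r) :
    #(G.children r v) + 1 = G.degree v := by
  rw [hG.degree_eq_card_children_add_card_parents (r := r), hG.card_parents hv]

variable [DecidableEq V]

lemma IsTree.exists_isSplitAt_of_four_le_degree (hG : G.IsTree)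
    (hdeg : ∀ u v, G.Adj u v → ¬ (4 ≤ G.degree u ∧ 4 ≤ G.degree v)) (hv : v ≠ r)
    (h4 : 4 ≤ G.degree v) : ∃ F, G.IsSplitAt r (G.indegTarget r) F v := by
  have hτ : G.indegTarget r v = 3 := if_pos h4
  obtain ⟨F, hFC, hF⟩ := exists_subset_card_eq (s := G.children r v) (n := 2)
    (by have := hG.card_children_add_one hv; omega)
  refine ⟨F, hFC, by rw [hF, hτ], fun c hc => ?_⟩
  have hcC := (mem_sdiff.mp hc).1
  have hc4 : G.degree c < 4 := not_le.mp fun h => hdeg v c (mem_children.mp hcC).1 ⟨h4, h⟩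
  have := hG.indegTarget_le_two_of_mem_children hcC h4 hc4
  omega

lemma IsTree.exists_isSplitAt_of_parent_four_le_degree (hG : G.IsTree) (hv : v ≠ r)
    (h4 : G.degree v < 4) (hp : ∃ u ∈ G.parents r v, 4 ≤ G.degree u) :
    ∃ F, G.IsSplitAt r (G.indegTarget r) F v := by
  have hτ : G.indegTarget r v =
      if ∃ c ∈ G.children r v, G.degree c = 1 then 2 else 1 := by
    rw [indegTarget, if_neg h4.not_ge, if_pos hp]
  by_cases hleaf : ∃ c ∈ G.children r v, G.degree c = 1
  · obtain ⟨c₀, hc₀, hdeg₀⟩ := hleaf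
    obtain ⟨c₁, hc₁, hsub⟩ := exists_mem_sdiff_singleton_subset hc₀
      (by have := hG.card_children_add_one hv; omega)
    refine ⟨{c₁}, singleton_subset_iff.mpr hc₁, by rw [hτ, if_pos ⟨c₀, hc₀, hdeg₀⟩]; rfl,
      fun c hc => ?_⟩
    rw [mem_singleton.mp (hsub hc), hG.indegTarget_eq_degree_of_mem_children hc₀ h4 (by omega),
      hdeg₀, hτ, if_pos ⟨c₀, hc₀, hdeg₀⟩]
    omega
  · refine ⟨∅, empty_subset _, by rw [hτ, if_neg hleaf]; rfl, fun c hc => ?_⟩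
    have hcC := (mem_sdiff.mp hc).1
    rw [hτ, if_neg hleaf]
    by_cases hc4 : 4 ≤ G.degree c
    · rw [indegTarget, if_pos hc4]
      omega
    · rw [hG.indegTarget_eq_degree_of_mem_children hcC h4 (not_le.mp hc4)]
      exact fun h => hleaf ⟨c, hcC, h⟩

lemma IsTree.exists_isSplitAt_of_parent_degree_lt_four (hG : G.IsTree) (hv : v ≠ r)
    (h4 : G.degree v < 4) (hp : ¬ ∃ u ∈ G.parents r v, 4 ≤ G.degree u) :
    ∃ F, G.IsSplitAt r (G.indegTarget r) F v := by
  refine ⟨G.children r v, subset_rfl, ?_, by simp⟩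
  rw [indegTarget, if_neg h4.not_ge, if_neg hp, hG.card_children_add_one hv]

lemma IsTree.exists_isSplitAt (hG : G.IsTree)
    (hdeg : ∀ u v, G.Adj u v → ¬ (4 ≤ G.degree u ∧ 4 ≤ G.degree v)) (hv : v ≠ r) :
    ∃ F, G.IsSplitAt r (G.indegTarget r) F v := by
  by_cases h4 : 4 ≤ G.degree v
  · exact hG.exists_isSplitAt_of_four_le_degree hdeg hv h4
  by_cases hp : ∃ u ∈ G.parents r v, 4 ≤ G.degree u
  · exact hG.exists_isSplitAt_of_parent_four_le_degree hv (not_le.mp h4) hp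
  · exact hG.exists_isSplitAt_of_parent_degree_lt_four hv (not_le.mp h4) hp

end SimpleGraph

/-- If `T` is a tree with no two adjacent vertices both of degree at least four,
then `χ⃗(T) ≤ 3`. -/
theorem properOrientNum_tree_le_three {V : Type*} [Fintype V]
    (T : SimpleGraph V) [DecidableRel T.Adj] (hT : T.IsTree)
    (h : ∀ u v, T.Adj u v → ¬ (4 ≤ T.degree u ∧ 4 ≤ T.degree v)) :
    properOrientNum T ≤ 3 := by
  classical
  obtain ⟨r⟩ := hT.connected.nonempty
  exact hT.properOrientNum_le r (T.indegTarget r) (fun _ _ => indegTarget_le_three)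
    fun _ hv => hT.exists_isSplitAt h hv
end
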